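/- arXiv:2112.10268 — 3 statements merged into one kernel-verified Lean document; each statement's English description precedes it below -/
import Mathlib

section
/- Let q be a prime power, n a positive integer, and a, b elements of F_q. Let k be a divisor of q^n − 1 and let p_1, …, p_s (s ≥ 0) be the distinct primes that divide q^n − 1 but do not divide k. Write N = N_{q^n − 1}(a,b). Then N ≥ Σ_{i=1}^{s} N_{k·p_i}(a,b) − (s − 1)·N_k(a,b). -/
/-!
Every `ξ` counted by `N_{q^n - 1}` is counted by `N_k`, and conversely an element counted by
`N_k` and by every `N_{k pᵢ}` is already counted by `N_{q^n - 1}`: a prime `ℓ` with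
`ξ + ξ⁻¹ = β ^ ℓ` and `ℓ ∣ q^n - 1` either divides `k` or is one of the `pᵢ`. The inequality is
then the union bound for the complements of the sets counted by `N_{k pᵢ}` inside the set
counted by `N_k`.
-/

/-- A nonzero element `ξ` is `e`-free if the only divisor `d` of `e` for which
`ξ = β ^ d` is solvable is `d = 1`. -/
def IsFree {E : Type*} [Monoid E] (e : ℕ) (ξ : E) : Prop :=
  ∀ d : ℕ, d ∣ e → (∃ β : E, β ^ d = ξ) → d = 1

/-- `Ncount F E a b e` is the number of nonzero `ξ ∈ E` with `Tr ξ = a`,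
`Tr ξ⁻¹ = b` and `ξ + ξ⁻¹` being `e`-free. -/
noncomputable def Ncount (F E : Type*) [Field F] [Field E] [Algebra F E]
    (a b : F) (e : ℕ) : ℕ :=
  Nat.card {ξ : E // ξ ≠ 0 ∧ Algebra.trace F E ξ = a ∧ Algebra.trace F E ξ⁻¹ = b ∧
    IsFree e (ξ + ξ⁻¹)}

theorem Set.sub_ncard_le_ncard_of_subset_biInter {α ι : Type*} [Finite α] {A B : Set α}
    {S : ι → Set α} {s : Finset ι} (hS : ∀ i ∈ s, S i ⊆ B) (hA : B ∩ ⋂ i ∈ s, S i ⊆ A) :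
    ∑ i ∈ s, ((S i).ncard : ℤ) - (s.card - 1) * B.ncard ≤ A.ncard := by
  set T := B ∩ ⋂ i ∈ s, S i
  have hcompl : B \ T = ⋃ i ∈ s, B \ S i := by
    ext x
    simp only [T, mem_sdiff, mem_inter_iff, mem_iInter, mem_iUnion, exists_prop]
    grind
  have hpieces : ∀ i ∈ s, ((B \ S i).ncard : ℤ) = B.ncard - (S i).ncard := fun i hi => by
    rw [← ncard_sdiff_add_ncard_of_subset (hS i hi)]
    push_cast
    ring
  have hunion : ((B \ T).ncard : ℤ) ≤ s.card * B.ncard - ∑ i ∈ s, ((S i).ncard : ℤ) := by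
    rw [← nsmul_eq_mul, ← Finset.sum_const, ← Finset.sum_sub_distrib,
      ← Finset.sum_congr rfl hpieces]
    exact_mod_cast hcompl ▸ s.set_ncard_biUnion_le _
  have hB : (B.ncard : ℤ) = (B \ T).ncard + T.ncard := by
    exact_mod_cast (ncard_sdiff_add_ncard_of_subset inter_subset_left).symm
  have hTA : (T.ncard : ℤ) ≤ A.ncard := by exact_mod_cast ncard_le_ncard hA
  linarith

theorem IsFree.of_dvd {M : Type*} [Monoid M] {e e' : ℕ} {ξ : M} (hξ : IsFree e ξ)
    (h : e' ∣ e) : IsFree e' ξ :=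
  fun d hd hpow => hξ d (hd.trans h) hpow

theorem isFree_of_isFree_mul_prime {M : Type*} [Monoid M] {m k : ℕ} {ξ : M}
    (hk : IsFree k ξ) (hp : ∀ p, p.Prime → p ∣ m → ¬ p ∣ k → IsFree (k * p) ξ) :
    IsFree m ξ := by
  intro d hd ⟨β, hβ⟩
  by_contra hd1
  obtain ⟨ℓ, hℓ, c, rfl⟩ := Nat.exists_prime_and_dvd hd1
  have hpow : ∃ γ : M, γ ^ ℓ = ξ := ⟨β ^ c, by rw [← pow_mul, mul_comm, hβ]⟩
  by_cases hℓk : ℓ ∣ k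
  · exact hℓ.one_lt.ne' (hk ℓ hℓk hpow)
  · exact hℓ.one_lt.ne'
      (hp ℓ hℓ ((dvd_mul_right ℓ c).trans hd) hℓk ℓ (dvd_mul_left ℓ k) hpow)

section

variable (F E : Type*) [Field F] [Field E] [Algebra F E] (a b : F)

def traceFreeSet (e : ℕ) : Set E :=
  {ξ | ξ ≠ 0 ∧ Algebra.trace F E ξ = a ∧ Algebra.trace F E ξ⁻¹ = b ∧ IsFree e (ξ + ξ⁻¹)}

theorem ncount_eq_ncard (e : ℕ) : Ncount F E a b e = (traceFreeSet F E a b e).ncard :=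
  Nat.card_coe_set_eq _

variable {F E a b}

theorem traceFreeSet_subset_of_dvd {e e' : ℕ} (h : e' ∣ e) :
    traceFreeSet F E a b e ⊆ traceFreeSet F E a b e' :=
  fun _ ⟨hξ, ha, hb, hfree⟩ => ⟨hξ, ha, hb, hfree.of_dvd h⟩

theorem inter_biInter_traceFreeSet_subset {m k : ℕ} (hm : m ≠ 0) :
    traceFreeSet F E a b k ∩
        ⋂ p ∈ m.primeFactors.filter (fun p => ¬ p ∣ k), traceFreeSet F E a b (k * p) ⊆
      traceFreeSet F E a b m := by
  rintro ξ ⟨⟨hξ, ha, hb, hfree⟩, hprimes⟩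
  refine ⟨hξ, ha, hb, isFree_of_isFree_mul_prime hfree fun p hp hpm hpk => ?_⟩
  have hmem : p ∈ m.primeFactors.filter (fun p => ¬ p ∣ k) :=
    Finset.mem_filter.mpr ⟨Nat.mem_primeFactors.mpr ⟨hp, hpm, hm⟩, hpk⟩
  exact (Set.mem_iInter₂.mp hprimes p hmem).2.2.2

end

theorem stmt5_general (q n : ℕ)
    (F E : Type*) [Field F] [Field E] [Fintype E] [Algebra F E]
    (hE : Fintype.card E = q ^ n)
    (a b : F) (k : ℕ)
    (ps : Finset ℕ) (hps : ps = (q ^ n - 1).primeFactors.filter fun p => ¬ p ∣ k) :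
    (Ncount F E a b (q ^ n - 1) : ℝ) ≥
      (∑ p ∈ ps, (Ncount F E a b (k * p) : ℝ)) -
        ((ps.card : ℝ) - 1) * (Ncount F E a b k : ℝ) := by
  have hm : q ^ n - 1 ≠ 0 := by
    have := Fintype.one_lt_card (α := E)
    omega
  subst hps
  have hsieve := Set.sub_ncard_le_ncard_of_subset_biInter
    (fun p _ => traceFreeSet_subset_of_dvd (dvd_mul_right k p))
    (inter_biInter_traceFreeSet_subset (F := F) (E := E) (a := a) (b := b) hm)
  simp only [ncount_eq_ncard]
  exact_mod_cast hsieve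

/-- The prime sieve inequality: if `p_1, …, p_s` are the distinct primes dividing
`q^n - 1` but not the divisor `k`, then
`N ≥ ∑ᵢ N_{k pᵢ} - (s - 1) N_k`. -/
theorem stmt5 (q n : ℕ) (hq : IsPrimePow q) (hn : 0 < n)
    (F E : Type*) [Field F] [Fintype F] [Field E] [Fintype E] [Algebra F E]
    (hF : Fintype.card F = q) (hE : Fintype.card E = q ^ n)
    (a b : F) (k : ℕ) (hk : k ∣ q ^ n - 1)
    (ps : Finset ℕ) (hps : ps = (q ^ n - 1).primeFactors.filter fun p => ¬ p ∣ k) :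
    (Ncount F E a b (q ^ n - 1) : ℝ) ≥
      (∑ p ∈ ps, (Ncount F E a b (k * p) : ℝ)) -
        ((ps.card : ℝ) - 1) * (Ncount F E a b k : ℝ) :=
  stmt5_general q n F E hE a b k ps hps
end

section
/- For every integer n ≥ 3, ω(n) ≤ 1.385·(log n)/(log log n), where log denotes the natural logarithm. -/
set_option maxRecDepth 40000
set_option maxHeartbeats 2000000
set_option linter.unusedVariables false

open Finset

namespace Robin

def primes130 : List ℕ := [2, 3, 5, 7, 11, 13, 17, 19, 23, 29, 31, 37, 41, 43, 47, 53, 59, 61, 67, 71, 73, 79, 83, 89, 97, 101, 103, 107, 109, 113, 127, 131, 137, 139, 149, 151, 157, 163, 167, 173, 179, 181, 191, 193, 197, 199, 211, 223, 227, 229, 233, 239, 241, 251, 257, 263, 269, 271, 277, 281, 283, 293, 307, 311, 313, 317, 331, 337, 347, 349, 353, 359, 367, 373, 379, 383, 389, 397, 401, 409, 419, 421, 431, 433, 439, 443, 449, 457, 461, 463, 467, 479, 487, 491, 499, 503, 509, 521, 523, 541, 547, 557, 563, 569, 571, 577, 587, 593, 599, 601, 607, 613, 617, 619, 631, 641, 643,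 647, 653, 659, 661, 673, 677, 683, 691, 701, 709, 719, 727, 733]

def σ (i : ℕ) : ℕ := if i ≤ 130 then primes130.getD (i-1) 0 else 2*i - 1

def Q (k : ℕ) : ℕ := ((List.range k).map fun i => σ (i+1)).prod

lemma Q_succ (k : ℕ) : Q (k+1) = Q k * σ (k+1) := by
  unfold Q
  rw [List.range_succ, List.map_append, List.prod_append]
  simp

lemma two_le_sigma (i : ℕ) (hi : 1 ≤ i) : 2 ≤ σ i := by
  rcases le_or_gt i 130 with h | h
  · have : ∀ j ∈ Finset.Icc 1 130, 2 ≤ σ j := by decide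
    exact this i (Finset.mem_Icc.mpr ⟨hi, h⟩)
  · unfold σ
    rw [if_neg (by omega)]
    omega

lemma Q_pos (k : ℕ) : 0 < Q k := by
  induction k with
  | zero => simp [Q]
  | succ k ih =>
    rw [Q_succ]
    exact Nat.mul_pos ih (lt_of_lt_of_le (by norm_num) (two_le_sigma (k+1) (by omega)))

/-- Completeness: every prime below 734 is in the list. -/
lemma prime_mem_primes130 (p : ℕ) (hp : p.Prime) (hlt : p < 734) : p ∈ primes130 := by
  have key : ∀ m ∈ List.range 734, m ∈ primes130 ∨ m < 2 ∨
      ∃ d ∈ [2,3,5,7,11,13,17,19,23,29], d ∣ m ∧ d < m := by decide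
  rcases key p (List.mem_range.mpr hlt) with h | h | ⟨d, hd, hdvd, hdlt⟩
  · exact h
  · exact absurd hp.two_le (by omega)
  · exfalso
    have h2 : 2 ≤ d := by
      have : ∀ x ∈ [2,3,5,7,11,13,17,19,23,29], 2 ≤ x := by decide
      exact this d hd
    rcases (Nat.Prime.eq_one_or_self_of_dvd hp d hdvd) with h1 | h1 <;> omega

/-- Counting lemma: a finset of primes all below `σ k` has fewer than `k` elements. -/
lemma CL (k : ℕ) (hk : 1 ≤ k) (S : Finset ℕ) (hp : ∀ p ∈ S, p.Prime)
    (hlt : ∀ p ∈ S, p < σ k) : S.card < k := by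
  rcases le_or_gt k 130 with h130 | h130
  · -- S ⊆ first (k-1) primes
    have hsub : S ⊆ (primes130.take (k-1)).toFinset := by
      intro p hpS
      have hp1 : p.Prime := hp p hpS
      have hplt : p < σ k := hlt p hpS
      have hσ : σ k ≤ 734 := by
        have : ∀ j ∈ Finset.Icc 1 130, σ j ≤ 734 := by decide
        exact this k (Finset.mem_Icc.mpr ⟨hk, h130⟩)
      have hmem : p ∈ primes130 := prime_mem_primes130 p hp1 (by omega)
      have key : ∀ j ∈ Finset.Icc 1 130, ∀ q ∈ primes130, q < σ j → q ∈ primes130.take (j-1) := by decide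
      simpa using key k (Finset.mem_Icc.mpr ⟨hk, h130⟩) p hmem hplt
    calc S.card ≤ (primes130.take (k-1)).toFinset.card := Finset.card_le_card hsub
      _ ≤ (primes130.take (k-1)).length := (primes130.take (k-1)).toFinset_card_le
      _ ≤ k-1 := List.length_take_le _ _
      _ < k := by omega
  · -- odd injection
    have hσ : σ k = 2*k - 1 := by unfold σ; rw [if_neg (by omega)]
    have : S.card ≤ (Finset.range (k-1)).card := by
      apply Finset.card_le_card_of_injOn (fun p => (p-1)/2)
      · intro p hpS
        have := hlt p hpS
        rw [hσ] at this
        simp only [Finset.mem_coe, Finset.mem_range]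
        omega
      · intro p hpS q hqS heq
        have hp2 := (hp p hpS).eq_two_or_odd'
        have hq2 := (hp q hqS).eq_two_or_odd'
        have hpp := (hp p hpS).two_le
        have hqq := (hp q hqS).two_le
        simp only at heq
        rcases hp2 with rfl | ⟨a, rfl⟩ <;> rcases hq2 with rfl | ⟨b, rfl⟩ <;> omega
    simpa using lt_of_le_of_lt this (by simp; omega)

/-- Master lemma: sum of logs of a finset of k primes is at least log (Q k). -/
lemma master : ∀ (k : ℕ) (S : Finset ℕ), S.card = k → (∀ p ∈ S, p.Prime) →
    Real.log (Q k : ℝ) ≤ ∑ p ∈ S, Real.log (p : ℝ) := by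
  intro k
  induction k with
  | zero =>
    intro S hcard hp
    simp [Q]
    exact Finset.sum_nonneg fun p hpS =>
      Real.log_nonneg (by exact_mod_cast (hp p hpS).one_lt.le)
  | succ k ih =>
    intro S hcard hp
    have hne : S.Nonempty := Finset.card_pos.mp (by omega)
    set m := S.max' hne with hm
    have hmS : m ∈ S := S.max'_mem hne
    have hσm : σ (k+1) ≤ m := by
      by_contra hcon
      push_neg at hcon
      have : S.card < k + 1 := CL (k+1) (by omega) S hp
        (fun p hpS => lt_of_le_of_lt (S.le_max' p hpS) hcon)
      omega
    have herase : (S.erase m).card = k := by rw [Finset.card_erase_of_mem hmS, hcard]; omega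
    have hih := ih (S.erase m) herase (fun p hpS => hp p (Finset.mem_of_mem_erase hpS))
    have hsum : ∑ p ∈ S, Real.log (p:ℝ) = Real.log (m:ℝ) + ∑ p ∈ S.erase m, Real.log (p:ℝ) :=
      (Finset.add_sum_erase S _ hmS).symm
    have hQ : Real.log (Q (k+1) : ℝ) = Real.log (Q k : ℝ) + Real.log (σ (k+1) : ℝ) := by
      rw [Q_succ]
      push_cast
      have hσpos : (0:ℝ) < (σ (k+1):ℝ) := by
        exact_mod_cast lt_of_lt_of_le (by norm_num) (two_le_sigma (k+1) (by omega))
      rw [Real.log_mul (by exact_mod_cast (Q_pos k).ne') hσpos.ne']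
    have hlogm : Real.log (σ (k+1) : ℝ) ≤ Real.log (m : ℝ) := by
      apply Real.log_le_log (by exact_mod_cast lt_of_lt_of_le (by norm_num) (two_le_sigma (k+1) (by omega)))
      exact_mod_cast hσm
    rw [hQ, hsum]
    linarith



lemma real_pow_aux (p q s b : ℕ) (hq : 0 < q) (h : p ^ s ≤ 2 ^ b * q ^ s) :
    ((p : ℝ) / q) ^ s ≤ 2 ^ b := by
  have hq' : (0 : ℝ) < q := by exact_mod_cast hq
  rw [div_pow, div_le_iff₀ (by positivity)]
  exact_mod_cast h

lemma log_ge_of_pow (Q a t : ℕ) (c : ℝ) (hQ : 2 ≤ Q) (ht : 0 < t)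
    (h : 2 ^ a ≤ Q ^ t) (hc : c * t ≤ (a : ℝ) * 0.6931471803) :
    c ≤ Real.log (Q : ℝ) := by
  have h2 : (a : ℝ) * Real.log 2 ≤ t * Real.log (Q : ℝ) := by
    rw [← Real.log_pow, ← Real.log_pow]
    apply Real.log_le_log (by positivity)
    exact_mod_cast h
  have hlog2 : (0.6931471803 : ℝ) ≤ Real.log 2 := Real.log_two_gt_d9.le
  have ht' : (0 : ℝ) < t := by exact_mod_cast ht
  nlinarith [mul_le_mul_of_nonneg_left hlog2 (Nat.cast_nonneg a : (0:ℝ) ≤ a)]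

lemma log_le_of_pow (x : ℝ) (b s : ℕ) (u : ℝ) (hx : 0 < x) (hs : 0 < s)
    (h : x ^ s ≤ 2 ^ b) (hu : (b : ℝ) * 0.6931471808 ≤ u * s) :
    Real.log x ≤ u := by
  have h2 : (s : ℝ) * Real.log x ≤ b * Real.log 2 := by
    rw [← Real.log_pow, ← Real.log_pow]
    exact Real.log_le_log (by positivity) h
  have hlog2 : Real.log 2 ≤ (0.6931471808 : ℝ) := Real.log_two_lt_d9.le
  have hs' : (0 : ℝ) < s := by exact_mod_cast hs
  nlinarith [mul_le_mul_of_nonneg_left hlog2 (Nat.cast_nonneg b : (0:ℝ) ≤ b)]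

lemma concave (k θ L : ℝ) (h0 : 0 < θ) (hθL : θ ≤ L) (hk0 : 0 ≤ k)
    (h1 : k ≤ 1.385 * θ) (h2 : k * Real.log θ ≤ 1.385 * θ) :
    k * Real.log L ≤ 1.385 * L := by
  have hL0 : 0 < L := lt_of_lt_of_le h0 hθL
  have hlog : Real.log L ≤ Real.log θ + (L / θ - 1) := by
    have := Real.log_le_sub_one_of_pos (show 0 < L / θ by positivity)
    have hrw : Real.log (L / θ) = Real.log L - Real.log θ := Real.log_div hL0.ne' h0.ne'
    linarith
  have hstep : k * Real.log L ≤ k * Real.log θ + k * (L / θ - 1) := by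
    nlinarith [mul_le_mul_of_nonneg_left hlog hk0]
  have hfrac : 0 ≤ L / θ - 1 := by
    rw [le_sub_iff_add_le, zero_add, le_div_iff₀ h0]
    linarith
  have : k * (L / θ - 1) ≤ 1.385 * θ * (L / θ - 1) := mul_le_mul_of_nonneg_right h1 hfrac
  have hθLθ : 1.385 * θ * (L / θ - 1) = 1.385 * L - 1.385 * θ := by
    field_simp
  nlinarith


lemma numeric_4 (L : ℝ) (hL : Real.log ((210 : ℕ) : ℝ) ≤ L) :
    (4 : ℝ) * Real.log L ≤ 1.385 * L := by
  have hc : ((5285247/1000000) : ℝ) ≤ Real.log ((210 : ℕ) : ℝ) :=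
    log_ge_of_pow 210 61 8 (5285247/1000000) (by norm_num) (by norm_num) (by norm_num) (by norm_num)
  have hu : Real.log ((5285247/1000000) : ℝ) ≤ ((833943/500000) : ℝ) :=
    log_le_of_pow (5285247/1000000) 77 32 (833943/500000) (by norm_num) (by norm_num) (by norm_num) (by norm_num)
  exact concave 4 (5285247/1000000) L (by norm_num) (le_trans hc hL) (by norm_num) (by norm_num)
    (le_trans (mul_le_mul_of_nonneg_left hu (by norm_num)) (by norm_num))

lemma numeric_5 (L : ℝ) (hL : Real.log ((2310 : ℕ) : ℝ) ≤ L) :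
    (5 : ℝ) * Real.log L ≤ 1.385 * L := by
  have hc : ((3855631/500000) : ℝ) ≤ Real.log ((2310 : ℕ) : ℝ) :=
    log_ge_of_pow 2310 89 8 (3855631/500000) (by norm_num) (by norm_num) (by norm_num) (by norm_num)
  have hu : Real.log ((3855631/500000) : ℝ) ≤ ((2057781/1000000) : ℝ) :=
    log_le_of_pow (3855631/500000) 95 32 (2057781/1000000) (by norm_num) (by norm_num) (by norm_num) (by norm_num)
  exact concave 5 (3855631/500000) L (by norm_num) (le_trans hc hL) (by norm_num) (by norm_num)
    (le_trans (mul_le_mul_of_nonneg_left hu (by norm_num)) (by norm_num))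

lemma numeric_6 (L : ℝ) (hL : Real.log ((30030 : ℕ) : ℝ) ≤ L) :
    (6 : ℝ) * Real.log L ≤ 1.385 * L := by
  have hc : ((127799/12500) : ℝ) ≤ Real.log ((30030 : ℕ) : ℝ) :=
    log_ge_of_pow 30030 118 8 (127799/12500) (by norm_num) (by norm_num) (by norm_num) (by norm_num)
  have hu : Real.log ((127799/12500) : ℝ) ≤ ((584843/250000) : ℝ) :=
    log_le_of_pow (127799/12500) 108 32 (584843/250000) (by norm_num) (by norm_num) (by norm_num) (by norm_num)
  exact concave 6 (127799/12500) L (by norm_num) (le_trans hc hL) (by norm_num) (by norm_num)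
    (le_trans (mul_le_mul_of_nonneg_left hu (by norm_num)) (by norm_num))

lemma numeric_7 (L : ℝ) (hL : Real.log ((510510 : ℕ) : ℝ) ≤ L) :
    (7 : ℝ) * Real.log L ≤ 1.385 * L := by
  have hc : ((13083153/1000000) : ℝ) ≤ Real.log ((510510 : ℕ) : ℝ) :=
    log_ge_of_pow 510510 151 8 (13083153/1000000) (by norm_num) (by norm_num) (by norm_num) (by norm_num)
  have hu : Real.log ((13083153/1000000) : ℝ) ≤ ((1288821/500000) : ℝ) :=
    log_le_of_pow (13083153/1000000) 119 32 (1288821/500000) (by norm_num) (by norm_num) (by norm_num) (by norm_num)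
  exact concave 7 (13083153/1000000) L (by norm_num) (le_trans hc hL) (by norm_num) (by norm_num)
    (le_trans (mul_le_mul_of_nonneg_left hu (by norm_num)) (by norm_num))

lemma numeric_8 (L : ℝ) (hL : Real.log ((9699690 : ℕ) : ℝ) ≤ L) :
    (8 : ℝ) * Real.log L ≤ 1.385 * L := by
  have hc : ((4007257/250000) : ℝ) ≤ Real.log ((9699690 : ℕ) : ℝ) :=
    log_ge_of_pow 9699690 185 8 (4007257/250000) (by norm_num) (by norm_num) (by norm_num) (by norm_num)
  have hu : Real.log ((4007257/250000) : ℝ) ≤ ((138731/50000) : ℝ) :=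
    log_le_of_pow (4007257/250000) 4099 1024 (138731/50000) (by norm_num) (by norm_num) (by exact_mod_cast real_pow_aux 4007257 250000 1024 4099 (by norm_num) (by decide +kernel)) (by norm_num)
  exact concave 8 (4007257/250000) L (by norm_num) (le_trans hc hL) (by norm_num) (by norm_num)
    (le_trans (mul_le_mul_of_nonneg_left hu (by norm_num)) (by norm_num))

lemma numeric_9 (L : ℝ) (hL : Real.log ((223092870 : ℕ) : ℝ) ≤ L) :
    (9 : ℝ) * Real.log L ≤ 1.385 * L := by
  have hc : ((19213173/1000000) : ℝ) ≤ Real.log ((223092870 : ℕ) : ℝ) :=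
    log_ge_of_pow 223092870 887 32 (19213173/1000000) (by norm_num) (by norm_num) (by decide +kernel) (by norm_num)
  have hu : Real.log ((19213173/1000000) : ℝ) ≤ ((295603/100000) : ℝ) :=
    log_le_of_pow (19213173/1000000) 4367 1024 (295603/100000) (by norm_num) (by norm_num) (by exact_mod_cast real_pow_aux 19213173 1000000 1024 4367 (by norm_num) (by decide +kernel)) (by norm_num)
  exact concave 9 (19213173/1000000) L (by norm_num) (le_trans hc hL) (by norm_num) (by norm_num)
    (le_trans (mul_le_mul_of_nonneg_left hu (by norm_num)) (by norm_num))

lemma numeric_10 (L : ℝ) (hL : Real.log ((6469693230 : ℕ) : ℝ) ≤ L) :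
    (10 : ℝ) * Real.log L ≤ 1.385 * L := by
  have hc : ((22527283/1000000) : ℝ) ≤ Real.log ((6469693230 : ℕ) : ℝ) :=
    log_ge_of_pow 6469693230 260 8 (22527283/1000000) (by norm_num) (by norm_num) (by decide +kernel) (by norm_num)
  have hu : Real.log ((22527283/1000000) : ℝ) ≤ ((3119163/1000000) : ℝ) :=
    log_le_of_pow (22527283/1000000) 144 32 (3119163/1000000) (by norm_num) (by norm_num) (by norm_num) (by norm_num)
  exact concave 10 (22527283/1000000) L (by norm_num) (le_trans hc hL) (by norm_num) (by norm_num)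
    (le_trans (mul_le_mul_of_nonneg_left hu (by norm_num)) (by norm_num))

lemma numeric_11 (L : ℝ) (hL : Real.log ((200560490130 : ℕ) : ℝ) ≤ L) :
    (11 : ℝ) * Real.log L ≤ 1.385 * L := by
  have hc : ((25993019/1000000) : ℝ) ≤ Real.log ((200560490130 : ℕ) : ℝ) :=
    log_ge_of_pow 200560490130 300 8 (25993019/1000000) (by norm_num) (by norm_num) (by decide +kernel) (by norm_num)
  have hu : Real.log ((25993019/1000000) : ℝ) ≤ ((3270789/1000000) : ℝ) :=
    log_le_of_pow (25993019/1000000) 151 32 (3270789/1000000) (by norm_num) (by norm_num) (by norm_num) (by norm_num)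
  exact concave 11 (25993019/1000000) L (by norm_num) (le_trans hc hL) (by norm_num) (by norm_num)
    (le_trans (mul_le_mul_of_nonneg_left hu (by norm_num)) (by norm_num))

lemma numeric_12 (L : ℝ) (hL : Real.log ((7420738134810 : ℕ) : ℝ) ≤ L) :
    (12 : ℝ) * Real.log L ≤ 1.385 * L := by
  have hc : ((29632041/1000000) : ℝ) ≤ Real.log ((7420738134810 : ℕ) : ℝ) :=
    log_ge_of_pow 7420738134810 342 8 (29632041/1000000) (by norm_num) (by norm_num) (by decide +kernel) (by norm_num)
  have hu : Real.log ((29632041/1000000) : ℝ) ≤ ((1700377/500000) : ℝ) :=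
    log_le_of_pow (29632041/1000000) 157 32 (1700377/500000) (by norm_num) (by norm_num) (by norm_num) (by norm_num)
  exact concave 12 (29632041/1000000) L (by norm_num) (le_trans hc hL) (by norm_num) (by norm_num)
    (le_trans (mul_le_mul_of_nonneg_left hu (by norm_num)) (by norm_num))

lemma numeric_13 (L : ℝ) (hL : Real.log ((304250263527210 : ℕ) : ℝ) ≤ L) :
    (13 : ℝ) * Real.log L ≤ 1.385 * L := by
  have hc : ((4158883/125000) : ℝ) ≤ Real.log ((304250263527210 : ℕ) : ℝ) :=
    log_ge_of_pow 304250263527210 384 8 (4158883/125000) (by norm_num) (by norm_num) (by decide +kernel) (by norm_num)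
  have hu : Real.log ((4158883/125000) : ℝ) ≤ ((1754529/500000) : ℝ) :=
    log_le_of_pow (4158883/125000) 162 32 (1754529/500000) (by norm_num) (by norm_num) (by norm_num) (by norm_num)
  exact concave 13 (4158883/125000) L (by norm_num) (le_trans hc hL) (by norm_num) (by norm_num)
    (le_trans (mul_le_mul_of_nonneg_left hu (by norm_num)) (by norm_num))

lemma numeric_14 (L : ℝ) (hL : Real.log ((13082761331670030 : ℕ) : ℝ) ≤ L) :
    (14 : ℝ) * Real.log L ≤ 1.385 * L := by
  have hc : ((18541687/500000) : ℝ) ≤ Real.log ((13082761331670030 : ℕ) : ℝ) :=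
    log_ge_of_pow 13082761331670030 428 8 (18541687/500000) (by norm_num) (by norm_num) (by decide +kernel) (by norm_num)
  have hu : Real.log ((18541687/500000) : ℝ) ≤ ((1808681/500000) : ℝ) :=
    log_le_of_pow (18541687/500000) 167 32 (1808681/500000) (by norm_num) (by norm_num) (by norm_num) (by norm_num)
  exact concave 14 (18541687/500000) L (by norm_num) (le_trans hc hL) (by norm_num) (by norm_num)
    (le_trans (mul_le_mul_of_nonneg_left hu (by norm_num)) (by norm_num))

lemma numeric_15 (L : ℝ) (hL : Real.log ((614889782588491410 : ℕ) : ℝ) ≤ L) :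
    (15 : ℝ) * Real.log L ≤ 1.385 * L := by
  have hc : ((40895683/1000000) : ℝ) ≤ Real.log ((614889782588491410 : ℕ) : ℝ) :=
    log_ge_of_pow 614889782588491410 472 8 (40895683/1000000) (by norm_num) (by norm_num) (by decide +kernel) (by norm_num)
  have hu : Real.log ((40895683/1000000) : ℝ) ≤ ((3725667/1000000) : ℝ) :=
    log_le_of_pow (40895683/1000000) 172 32 (3725667/1000000) (by norm_num) (by norm_num) (by norm_num) (by norm_num)
  exact concave 15 (40895683/1000000) L (by norm_num) (le_trans hc hL) (by norm_num) (by norm_num)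
    (le_trans (mul_le_mul_of_nonneg_left hu (by norm_num)) (by norm_num))

lemma numeric_16 (L : ℝ) (hL : Real.log ((32589158477190044730 : ℕ) : ℝ) ≤ L) :
    (16 : ℝ) * Real.log L ≤ 1.385 * L := by
  have hc : ((44881279/1000000) : ℝ) ≤ Real.log ((32589158477190044730 : ℕ) : ℝ) :=
    log_ge_of_pow 32589158477190044730 518 8 (44881279/1000000) (by norm_num) (by norm_num) (by decide +kernel) (by norm_num)
  have hu : Real.log ((44881279/1000000) : ℝ) ≤ ((381231/100000) : ℝ) :=
    log_le_of_pow (44881279/1000000) 176 32 (381231/100000) (by norm_num) (by norm_num) (by norm_num) (by norm_num)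
  exact concave 16 (44881279/1000000) L (by norm_num) (le_trans hc hL) (by norm_num) (by norm_num)
    (le_trans (mul_le_mul_of_nonneg_left hu (by norm_num)) (by norm_num))

lemma numeric_17 (L : ℝ) (hL : Real.log ((1922760350154212639070 : ℕ) : ℝ) ≤ L) :
    (17 : ℝ) * Real.log L ≤ 1.385 * L := by
  have hc : ((48953519/1000000) : ℝ) ≤ Real.log ((1922760350154212639070 : ℕ) : ℝ) :=
    log_ge_of_pow 1922760350154212639070 565 8 (48953519/1000000) (by norm_num) (by norm_num) (by decide +kernel) (by norm_num)
  have hu : Real.log ((48953519/1000000) : ℝ) ≤ ((3898953/1000000) : ℝ) :=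
    log_le_of_pow (48953519/1000000) 180 32 (3898953/1000000) (by norm_num) (by norm_num) (by norm_num) (by norm_num)
  exact concave 17 (48953519/1000000) L (by norm_num) (le_trans hc hL) (by norm_num) (by norm_num)
    (le_trans (mul_le_mul_of_nonneg_left hu (by norm_num)) (by norm_num))

lemma numeric_18 (L : ℝ) (hL : Real.log ((117288381359406970983270 : ℕ) : ℝ) ≤ L) :
    (18 : ℝ) * Real.log L ≤ 1.385 * L := by
  have hc : ((26556201/500000) : ℝ) ≤ Real.log ((117288381359406970983270 : ℕ) : ℝ) :=
    log_ge_of_pow 117288381359406970983270 613 8 (26556201/500000) (by norm_num) (by norm_num) (by decide +kernel) (by norm_num)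
  have hu : Real.log ((26556201/500000) : ℝ) ≤ ((3985597/1000000) : ℝ) :=
    log_le_of_pow (26556201/500000) 184 32 (3985597/1000000) (by norm_num) (by norm_num) (by norm_num) (by norm_num)
  exact concave 18 (26556201/500000) L (by norm_num) (le_trans hc hL) (by norm_num) (by norm_num)
    (le_trans (mul_le_mul_of_nonneg_left hu (by norm_num)) (by norm_num))

lemma numeric_19 (L : ℝ) (hL : Real.log ((7858321551080267055879090 : ℕ) : ℝ) ≤ L) :
    (19 : ℝ) * Real.log L ≤ 1.385 * L := by
  have hc : ((11454257/200000) : ℝ) ≤ Real.log ((7858321551080267055879090 : ℕ) : ℝ) :=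
    log_ge_of_pow 7858321551080267055879090 661 8 (11454257/200000) (by norm_num) (by norm_num) (by decide +kernel) (by norm_num)
  have hu : Real.log ((11454257/200000) : ℝ) ≤ ((4050579/1000000) : ℝ) :=
    log_le_of_pow (11454257/200000) 187 32 (4050579/1000000) (by norm_num) (by norm_num) (by norm_num) (by norm_num)
  exact concave 19 (11454257/200000) L (by norm_num) (le_trans hc hL) (by norm_num) (by norm_num)
    (le_trans (mul_le_mul_of_nonneg_left hu (by norm_num)) (by norm_num))

lemma numeric_20 (L : ℝ) (hL : Real.log ((557940830126698960967415390 : ℕ) : ℝ) ≤ L) :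
    (20 : ℝ) * Real.log L ≤ 1.385 * L := by
  have hc : ((15379203/250000) : ℝ) ≤ Real.log ((557940830126698960967415390 : ℕ) : ℝ) :=
    log_ge_of_pow 557940830126698960967415390 710 8 (15379203/250000) (by norm_num) (by norm_num) (by decide +kernel) (by norm_num)
  have hu : Real.log ((15379203/250000) : ℝ) ≤ ((4137223/1000000) : ℝ) :=
    log_le_of_pow (15379203/250000) 191 32 (4137223/1000000) (by norm_num) (by norm_num) (by norm_num) (by norm_num)
  exact concave 20 (15379203/250000) L (by norm_num) (le_trans hc hL) (by norm_num) (by norm_num)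
    (le_trans (mul_le_mul_of_nonneg_left hu (by norm_num)) (by norm_num))

lemma numeric_21 (L : ℝ) (hL : Real.log ((40729680599249024150621323470 : ℕ) : ℝ) ≤ L) :
    (21 : ℝ) * Real.log L ≤ 1.385 * L := by
  have hc : ((32924491/500000) : ℝ) ≤ Real.log ((40729680599249024150621323470 : ℕ) : ℝ) :=
    log_ge_of_pow 40729680599249024150621323470 760 8 (32924491/500000) (by norm_num) (by norm_num) (by decide +kernel) (by norm_num)
  have hu : Real.log ((32924491/500000) : ℝ) ≤ ((840441/200000) : ℝ) :=
    log_le_of_pow (32924491/500000) 194 32 (840441/200000) (by norm_num) (by norm_num) (by norm_num) (by norm_num)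
  exact concave 21 (32924491/500000) L (by norm_num) (le_trans hc hL) (by norm_num) (by norm_num)
    (le_trans (mul_le_mul_of_nonneg_left hu (by norm_num)) (by norm_num))

lemma numeric_22 (L : ℝ) (hL : Real.log ((3217644767340672907899084554130 : ℕ) : ℝ) ≤ L) :
    (22 : ℝ) * Real.log L ≤ 1.385 * L := by
  have hc : ((2193161/31250) : ℝ) ≤ Real.log ((3217644767340672907899084554130 : ℕ) : ℝ) :=
    log_ge_of_pow 3217644767340672907899084554130 810 8 (2193161/31250) (by norm_num) (by norm_num) (by decide +kernel) (by norm_num)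
  have hu : Real.log ((2193161/31250) : ℝ) ≤ ((1066797/250000) : ℝ) :=
    log_le_of_pow (2193161/31250) 197 32 (1066797/250000) (by norm_num) (by norm_num) (by norm_num) (by norm_num)
  exact concave 22 (2193161/31250) L (by norm_num) (le_trans hc hL) (by norm_num) (by norm_num)
    (le_trans (mul_le_mul_of_nonneg_left hu (by norm_num)) (by norm_num))

lemma numeric_23 (L : ℝ) (hL : Real.log ((267064515689275851355624017992790 : ℕ) : ℝ) ≤ L) :
    (23 : ℝ) * Real.log L ≤ 1.385 * L := by
  have hc : ((14919993/200000) : ℝ) ≤ Real.log ((267064515689275851355624017992790 : ℕ) : ℝ) :=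
    log_ge_of_pow 267064515689275851355624017992790 861 8 (14919993/200000) (by norm_num) (by norm_num) (by decide +kernel) (by norm_num)
  have hu : Real.log ((14919993/200000) : ℝ) ≤ ((433217/100000) : ℝ) :=
    log_le_of_pow (14919993/200000) 200 32 (433217/100000) (by norm_num) (by norm_num) (by norm_num) (by norm_num)
  exact concave 23 (14919993/200000) L (by norm_num) (le_trans hc hL) (by norm_num) (by norm_num)
    (le_trans (mul_le_mul_of_nonneg_left hu (by norm_num)) (by norm_num))

lemma numeric_24 (L : ℝ) (hL : Real.log ((23768741896345550770650537601358310 : ℕ) : ℝ) ≤ L) :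
    (24 : ℝ) * Real.log L ≤ 1.385 * L := by
  have hc : ((79105421/1000000) : ℝ) ≤ Real.log ((23768741896345550770650537601358310 : ℕ) : ℝ) :=
    log_ge_of_pow 23768741896345550770650537601358310 913 8 (79105421/1000000) (by norm_num) (by norm_num) (by decide +kernel) (by norm_num)
  have hu : Real.log ((79105421/1000000) : ℝ) ≤ ((1093873/250000) : ℝ) :=
    log_le_of_pow (79105421/1000000) 202 32 (1093873/250000) (by norm_num) (by norm_num) (by norm_num) (by norm_num)
  exact concave 24 (79105421/1000000) L (by norm_num) (le_trans hc hL) (by norm_num) (by norm_num)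
    (le_trans (mul_le_mul_of_nonneg_left hu (by norm_num)) (by norm_num))

lemma numeric_25 (L : ℝ) (hL : Real.log ((2305567963945518424753102147331756070 : ℕ) : ℝ) ≤ L) :
    (25 : ℝ) * Real.log L ≤ 1.385 * L := by
  have hc : ((41848761/500000) : ℝ) ≤ Real.log ((2305567963945518424753102147331756070 : ℕ) : ℝ) :=
    log_ge_of_pow 2305567963945518424753102147331756070 966 8 (41848761/500000) (by norm_num) (by norm_num) (by decide +kernel) (by norm_num)
  have hu : Real.log ((41848761/500000) : ℝ) ≤ ((177619/40000) : ℝ) :=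
    log_le_of_pow (41848761/500000) 205 32 (177619/40000) (by norm_num) (by norm_num) (by norm_num) (by norm_num)
  exact concave 25 (41848761/500000) L (by norm_num) (le_trans hc hL) (by norm_num) (by norm_num)
    (le_trans (mul_le_mul_of_nonneg_left hu (by norm_num)) (by norm_num))

lemma numeric_26 (L : ℝ) (hL : Real.log ((232862364358497360900063316880507363070 : ℕ) : ℝ) ≤ L) :
    (26 : ℝ) * Real.log L ≤ 1.385 * L := by
  have hc : ((44144811/500000) : ℝ) ≤ Real.log ((232862364358497360900063316880507363070 : ℕ) : ℝ) :=
    log_ge_of_pow 232862364358497360900063316880507363070 1019 8 (44144811/500000) (by norm_num) (by norm_num) (by decide +kernel) (by norm_num)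
  have hu : Real.log ((44144811/500000) : ℝ) ≤ ((1120949/250000) : ℝ) :=
    log_le_of_pow (44144811/500000) 207 32 (1120949/250000) (by norm_num) (by norm_num) (by norm_num) (by norm_num)
  exact concave 26 (44144811/500000) L (by norm_num) (le_trans hc hL) (by norm_num) (by norm_num)
    (le_trans (mul_le_mul_of_nonneg_left hu (by norm_num)) (by norm_num))

lemma numeric_27 (L : ℝ) (hL : Real.log ((23984823528925228172706521638692258396210 : ℕ) : ℝ) ≤ L) :
    (27 : ℝ) * Real.log L ≤ 1.385 * L := by
  have hc : ((18593673/200000) : ℝ) ≤ Real.log ((23984823528925228172706521638692258396210 : ℕ) : ℝ) :=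
    log_ge_of_pow 23984823528925228172706521638692258396210 1073 8 (18593673/200000) (by norm_num) (by norm_num) (by decide +kernel) (by norm_num)
  have hu : Real.log ((18593673/200000) : ℝ) ≤ ((4548779/1000000) : ℝ) :=
    log_le_of_pow (18593673/200000) 210 32 (4548779/1000000) (by norm_num) (by norm_num) (by norm_num) (by norm_num)
  exact concave 27 (18593673/200000) L (by norm_num) (le_trans hc hL) (by norm_num) (by norm_num)
    (le_trans (mul_le_mul_of_nonneg_left hu (by norm_num)) (by norm_num))

lemma numeric_28 (L : ℝ) (hL : Real.log ((2566376117594999414479597815340071648394470 : ℕ) : ℝ) ≤ L) :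
    (28 : ℝ) * Real.log L ≤ 1.385 * L := by
  have hc : ((97647109/1000000) : ℝ) ≤ Real.log ((2566376117594999414479597815340071648394470 : ℕ) : ℝ) :=
    log_ge_of_pow 2566376117594999414479597815340071648394470 1127 8 (97647109/1000000) (by norm_num) (by norm_num) (by decide +kernel) (by norm_num)
  have hu : Real.log ((97647109/1000000) : ℝ) ≤ ((4592101/1000000) : ℝ) :=
    log_le_of_pow (97647109/1000000) 212 32 (4592101/1000000) (by norm_num) (by norm_num) (by norm_num) (by norm_num)
  exact concave 28 (97647109/1000000) L (by norm_num) (le_trans hc hL) (by norm_num) (by norm_num)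
    (le_trans (mul_le_mul_of_nonneg_left hu (by norm_num)) (by norm_num))

lemma numeric_29 (L : ℝ) (hL : Real.log ((279734996817854936178276161872067809674997230 : ℕ) : ℝ) ≤ L) :
    (29 : ℝ) * Real.log L ≤ 1.385 * L := by
  have hc : ((25581463/250000) : ℝ) ≤ Real.log ((279734996817854936178276161872067809674997230 : ℕ) : ℝ) :=
    log_ge_of_pow 279734996817854936178276161872067809674997230 1181 8 (25581463/250000) (by norm_num) (by norm_num) (by decide +kernel) (by norm_num)
  have hu : Real.log ((25581463/250000) : ℝ) ≤ ((2317711/500000) : ℝ) :=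
    log_le_of_pow (25581463/250000) 214 32 (2317711/500000) (by norm_num) (by norm_num) (by norm_num) (by norm_num)
  exact concave 29 (25581463/250000) L (by norm_num) (le_trans hc hL) (by norm_num) (by norm_num)
    (le_trans (mul_le_mul_of_nonneg_left hu (by norm_num)) (by norm_num))

lemma numeric_30 (L : ℝ) (hL : Real.log ((31610054640417607788145206291543662493274686990 : ℕ) : ℝ) ≤ L) :
    (30 : ℝ) * Real.log L ≤ 1.385 * L := by
  have hc : ((21400919/200000) : ℝ) ≤ Real.log ((31610054640417607788145206291543662493274686990 : ℕ) : ℝ) :=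
    log_ge_of_pow 31610054640417607788145206291543662493274686990 1235 8 (21400919/200000) (by norm_num) (by norm_num) (by decide +kernel) (by norm_num)
  have hu : Real.log ((21400919/200000) : ℝ) ≤ ((584843/125000) : ℝ) :=
    log_le_of_pow (21400919/200000) 216 32 (584843/125000) (by norm_num) (by norm_num) (by norm_num) (by norm_num)
  exact concave 30 (21400919/200000) L (by norm_num) (le_trans hc hL) (by norm_num) (by norm_num)
    (le_trans (mul_le_mul_of_nonneg_left hu (by norm_num)) (by norm_num))

lemma numeric_31 (L : ℝ) (hL : Real.log ((4014476939333036189094441199026045136645885247730 : ℕ) : ℝ) ≤ L) :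
    (31 : ℝ) * Real.log L ≤ 1.385 * L := by
  have hc : ((55928313/500000) : ℝ) ≤ Real.log ((4014476939333036189094441199026045136645885247730 : ℕ) : ℝ) :=
    log_ge_of_pow 4014476939333036189094441199026045136645885247730 1291 8 (55928313/500000) (by norm_num) (by norm_num) (by decide +kernel) (by norm_num)
  have hu : Real.log ((55928313/500000) : ℝ) ≤ ((2361033/500000) : ℝ) :=
    log_le_of_pow (55928313/500000) 218 32 (2361033/500000) (by norm_num) (by norm_num) (by norm_num) (by norm_num)
  exact concave 31 (55928313/500000) L (by norm_num) (le_trans hc hL) (by norm_num) (by norm_num)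
    (le_trans (mul_le_mul_of_nonneg_left hu (by norm_num)) (by norm_num))

lemma numeric_32 (L : ℝ) (hL : Real.log ((525896479052627740771371797072411912900610967452630 : ℕ) : ℝ) ≤ L) :
    (32 : ℝ) * Real.log L ≤ 1.385 * L := by
  have hc : ((7294291/62500) : ℝ) ≤ Real.log ((525896479052627740771371797072411912900610967452630 : ℕ) : ℝ) :=
    log_ge_of_pow 525896479052627740771371797072411912900610967452630 1347 8 (7294291/62500) (by norm_num) (by norm_num) (by decide +kernel) (by norm_num)
  have hu : Real.log ((7294291/62500) : ℝ) ≤ ((4765387/1000000) : ℝ) :=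
    log_le_of_pow (7294291/62500) 220 32 (4765387/1000000) (by norm_num) (by norm_num) (by norm_num) (by norm_num)
  exact concave 32 (7294291/62500) L (by norm_num) (le_trans hc hL) (by norm_num) (by norm_num)
    (le_trans (mul_le_mul_of_nonneg_left hu (by norm_num)) (by norm_num))

lemma numeric_33 (L : ℝ) (hL : Real.log ((72047817630210000485677936198920432067383702541010310 : ℕ) : ℝ) ≤ L) :
    (33 : ℝ) * Real.log L ≤ 1.385 * L := by
  have hc : ((12164733/100000) : ℝ) ≤ Real.log ((72047817630210000485677936198920432067383702541010310 : ℕ) : ℝ) :=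
    log_ge_of_pow 72047817630210000485677936198920432067383702541010310 1404 8 (12164733/100000) (by norm_num) (by norm_num) (by decide +kernel) (by norm_num)
  have hu : Real.log ((12164733/100000) : ℝ) ≤ ((4808709/1000000) : ℝ) :=
    log_le_of_pow (12164733/100000) 222 32 (4808709/1000000) (by norm_num) (by norm_num) (by norm_num) (by norm_num)
  exact concave 33 (12164733/100000) L (by norm_num) (le_trans hc hL) (by norm_num) (by norm_num)
    (le_trans (mul_le_mul_of_nonneg_left hu (by norm_num)) (by norm_num))

lemma numeric_34 (L : ℝ) (hL : Real.log ((10014646650599190067509233131649940057366334653200433090 : ℕ) : ℝ) ≤ L) :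
    (34 : ℝ) * Real.log L ≤ 1.385 * L := by
  have hc : ((126586003/1000000) : ℝ) ≤ Real.log ((10014646650599190067509233131649940057366334653200433090 : ℕ) : ℝ) :=
    log_ge_of_pow 10014646650599190067509233131649940057366334653200433090 1461 8 (126586003/1000000) (by norm_num) (by norm_num) (by decide +kernel) (by norm_num)
  have hu : Real.log ((126586003/1000000) : ℝ) ≤ ((4852031/1000000) : ℝ) :=
    log_le_of_pow (126586003/1000000) 224 32 (4852031/1000000) (by norm_num) (by norm_num) (by norm_num) (by norm_num)
  exact concave 34 (126586003/1000000) L (by norm_num) (le_trans hc hL) (by norm_num) (by norm_num)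
    (le_trans (mul_le_mul_of_nonneg_left hu (by norm_num)) (by norm_num))

lemma numeric_35 (L : ℝ) (hL : Real.log ((1492182350939279320058875736615841068547583863326864530410 : ℕ) : ℝ) ≤ L) :
    (35 : ℝ) * Real.log L ≤ 1.385 * L := by
  have hc : ((3290283/25000) : ℝ) ≤ Real.log ((1492182350939279320058875736615841068547583863326864530410 : ℕ) : ℝ) :=
    log_ge_of_pow 1492182350939279320058875736615841068547583863326864530410 1519 8 (3290283/25000) (by norm_num) (by norm_num) (by decide +kernel) (by norm_num)
  have hu : Real.log ((3290283/25000) : ℝ) ≤ ((611919/125000) : ℝ) :=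
    log_le_of_pow (3290283/25000) 226 32 (611919/125000) (by norm_num) (by norm_num) (by norm_num) (by norm_num)
  exact concave 35 (3290283/25000) L (by norm_num) (le_trans hc hL) (by norm_num) (by norm_num)
    (le_trans (mul_le_mul_of_nonneg_left hu (by norm_num)) (by norm_num))

lemma numeric_36 (L : ℝ) (hL : Real.log ((225319534991831177328890236228992001350685163362356544091910 : ℕ) : ℝ) ≤ L) :
    (36 : ℝ) * Real.log L ≤ 1.385 * L := by
  have hc : ((136636637/1000000) : ℝ) ≤ Real.log ((225319534991831177328890236228992001350685163362356544091910 : ℕ) : ℝ) :=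
    log_ge_of_pow 225319534991831177328890236228992001350685163362356544091910 1577 8 (136636637/1000000) (by norm_num) (by norm_num) (by decide +kernel) (by norm_num)
  have hu : Real.log ((136636637/1000000) : ℝ) ≤ ((2469337/500000) : ℝ) :=
    log_le_of_pow (136636637/1000000) 228 32 (2469337/500000) (by norm_num) (by norm_num) (by norm_num) (by norm_num)
  exact concave 36 (136636637/1000000) L (by norm_num) (le_trans hc hL) (by norm_num) (by norm_num)
    (le_trans (mul_le_mul_of_nonneg_left hu (by norm_num)) (by norm_num))

lemma numeric_37 (L : ℝ) (hL : Real.log ((35375166993717494840635767087951744212057570647889977422429870 : ℕ) : ℝ) ≤ L) :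
    (37 : ℝ) * Real.log L ≤ 1.385 * L := by
  have hc : ((70830977/500000) : ℝ) ≤ Real.log ((35375166993717494840635767087951744212057570647889977422429870 : ℕ) : ℝ) :=
    log_ge_of_pow 35375166993717494840635767087951744212057570647889977422429870 1635 8 (70830977/500000) (by norm_num) (by norm_num) (by decide +kernel) (by norm_num)
  have hu : Real.log ((70830977/500000) : ℝ) ≤ ((992067/200000) : ℝ) :=
    log_le_of_pow (70830977/500000) 229 32 (992067/200000) (by norm_num) (by norm_num) (by norm_num) (by norm_num)
  exact concave 37 (70830977/500000) L (by norm_num) (le_trans hc hL) (by norm_num) (by norm_num)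
    (le_trans (mul_le_mul_of_nonneg_left hu (by norm_num)) (by norm_num))

lemma numeric_38 (L : ℝ) (hL : Real.log ((5766152219975951659023630035336134306565384015606066319856068810 : ℕ) : ℝ) ≤ L) :
    (38 : ℝ) * Real.log L ≤ 1.385 * L := by
  have hc : ((29354783/200000) : ℝ) ≤ Real.log ((5766152219975951659023630035336134306565384015606066319856068810 : ℕ) : ℝ) :=
    log_ge_of_pow 5766152219975951659023630035336134306565384015606066319856068810 1694 8 (29354783/200000) (by norm_num) (by norm_num) (by decide +kernel) (by norm_num)
  have hu : Real.log ((29354783/200000) : ℝ) ≤ ((5003657/1000000) : ℝ) :=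
    log_le_of_pow (29354783/200000) 231 32 (5003657/1000000) (by norm_num) (by norm_num) (by norm_num) (by norm_num)
  exact concave 38 (29354783/200000) L (by norm_num) (le_trans hc hL) (by norm_num) (by norm_num)
    (le_trans (mul_le_mul_of_nonneg_left hu (by norm_num)) (by norm_num))

lemma numeric_39 (L : ℝ) (hL : Real.log ((962947420735983927056946215901134429196419130606213075415963491270 : ℕ) : ℝ) ≤ L) :
    (39 : ℝ) * Real.log L ≤ 1.385 * L := by
  have hc : ((1215087/8000) : ℝ) ≤ Real.log ((962947420735983927056946215901134429196419130606213075415963491270 : ℕ) : ℝ) :=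
    log_ge_of_pow 962947420735983927056946215901134429196419130606213075415963491270 1753 8 (1215087/8000) (by norm_num) (by norm_num) (by decide +kernel) (by norm_num)
  have hu : Real.log ((1215087/8000) : ℝ) ≤ ((2512659/500000) : ℝ) :=
    log_le_of_pow (1215087/8000) 232 32 (2512659/500000) (by norm_num) (by norm_num) (by norm_num) (by norm_num)
  exact concave 39 (1215087/8000) L (by norm_num) (le_trans hc hL) (by norm_num) (by norm_num)
    (le_trans (mul_le_mul_of_nonneg_left hu (by norm_num)) (by norm_num))

lemma numeric_40 (L : ℝ) (hL : Real.log ((166589903787325219380851695350896256250980509594874862046961683989710 : ℕ) : ℝ) ≤ L) :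
    (40 : ℝ) * Real.log L ≤ 1.385 * L := by
  have hc : ((157084479/1000000) : ℝ) ≤ Real.log ((166589903787325219380851695350896256250980509594874862046961683989710 : ℕ) : ℝ) :=
    log_ge_of_pow 166589903787325219380851695350896256250980509594874862046961683989710 1813 8 (157084479/1000000) (by norm_num) (by norm_num) (by decide +kernel) (by norm_num)
  have hu : Real.log ((157084479/1000000) : ℝ) ≤ ((5068639/1000000) : ℝ) :=
    log_le_of_pow (157084479/1000000) 234 32 (5068639/1000000) (by norm_num) (by norm_num) (by norm_num) (by norm_num)
  exact concave 40 (157084479/1000000) L (by norm_num) (le_trans hc hL) (by norm_num) (by norm_num)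
    (le_trans (mul_le_mul_of_nonneg_left hu (by norm_num)) (by norm_num))

lemma numeric_41 (L : ℝ) (hL : Real.log ((29819592777931214269172453467810429868925511217482600306406141434158090 : ℕ) : ℝ) ≤ L) :
    (41 : ℝ) * Real.log L ≤ 1.385 * L := by
  have hc : ((4054911/25000) : ℝ) ≤ Real.log ((29819592777931214269172453467810429868925511217482600306406141434158090 : ℕ) : ℝ) :=
    log_ge_of_pow 29819592777931214269172453467810429868925511217482600306406141434158090 1872 8 (4054911/25000) (by norm_num) (by norm_num) (by decide +kernel) (by norm_num)
  have hu : Real.log ((4054911/25000) : ℝ) ≤ ((50903/10000) : ℝ) :=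
    log_le_of_pow (4054911/25000) 235 32 (50903/10000) (by norm_num) (by norm_num) (by norm_num) (by norm_num)
  exact concave 41 (4054911/25000) L (by norm_num) (le_trans hc hL) (by norm_num) (by norm_num)
    (le_trans (mul_le_mul_of_nonneg_left hu (by norm_num)) (by norm_num))

lemma numeric_42 (L : ℝ) (hL : Real.log ((5397346292805549782720214077673687806275517530364350655459511599582614290 : ℕ) : ℝ) ≤ L) :
    (42 : ℝ) * Real.log L ≤ 1.385 * L := by
  have hc : ((41848761/250000) : ℝ) ≤ Real.log ((5397346292805549782720214077673687806275517530364350655459511599582614290 : ℕ) : ℝ) :=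
    log_ge_of_pow 5397346292805549782720214077673687806275517530364350655459511599582614290 1932 8 (41848761/250000) (by norm_num) (by norm_num) (by decide +kernel) (by norm_num)
  have hu : Real.log ((41848761/250000) : ℝ) ≤ ((2566811/500000) : ℝ) :=
    log_le_of_pow (41848761/250000) 237 32 (2566811/500000) (by norm_num) (by norm_num) (by norm_num) (by norm_num)
  exact concave 42 (41848761/250000) L (by norm_num) (le_trans hc hL) (by norm_num) (by norm_num)
    (le_trans (mul_le_mul_of_nonneg_left hu (by norm_num)) (by norm_num))

lemma numeric_43 (L : ℝ) (hL : Real.log ((1030893141925860008499560888835674370998623848299590975192766715520279329390 : ℕ) : ℝ) ≤ L) :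
    (43 : ℝ) * Real.log L ≤ 1.385 * L := by
  have hc : ((172680291/1000000) : ℝ) ≤ Real.log ((1030893141925860008499560888835674370998623848299590975192766715520279329390 : ℕ) : ℝ) :=
    log_ge_of_pow 1030893141925860008499560888835674370998623848299590975192766715520279329390 1993 8 (172680291/1000000) (by norm_num) (by norm_num) (by decide +kernel) (by norm_num)
  have hu : Real.log ((172680291/1000000) : ℝ) ≤ ((5155283/1000000) : ℝ) :=
    log_le_of_pow (172680291/1000000) 238 32 (5155283/1000000) (by norm_num) (by norm_num) (by norm_num) (by norm_num)
  exact concave 43 (172680291/1000000) L (by norm_num) (le_trans hc hL) (by norm_num) (by norm_num)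
    (le_trans (mul_le_mul_of_nonneg_left hu (by norm_num)) (by norm_num))

lemma numeric_44 (L : ℝ) (hL : Real.log ((198962376391690981640415251545285153602734402721821058212203976095413910572270 : ℕ) : ℝ) ≤ L) :
    (44 : ℝ) * Real.log L ≤ 1.385 * L := by
  have hc : ((88982769/500000) : ℝ) ≤ Real.log ((198962376391690981640415251545285153602734402721821058212203976095413910572270 : ℕ) : ℝ) :=
    log_ge_of_pow 198962376391690981640415251545285153602734402721821058212203976095413910572270 2054 8 (88982769/500000) (by norm_num) (by norm_num) (by decide +kernel) (by norm_num)
  have hu : Real.log ((88982769/500000) : ℝ) ≤ ((1299651/250000) : ℝ) :=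
    log_le_of_pow (88982769/500000) 240 32 (1299651/250000) (by norm_num) (by norm_num) (by norm_num) (by norm_num)
  exact concave 44 (88982769/500000) L (by norm_num) (le_trans hc hL) (by norm_num) (by norm_num)
    (le_trans (mul_le_mul_of_nonneg_left hu (by norm_num)) (by norm_num))

lemma numeric_45 (L : ℝ) (hL : Real.log ((39195588149163123383161804554421175259738677336198748467804183290796540382737190 : ℕ) : ℝ) ≤ L) :
    (45 : ℝ) * Real.log L ≤ 1.385 * L := by
  have hc : ((36650157/200000) : ℝ) ≤ Real.log ((39195588149163123383161804554421175259738677336198748467804183290796540382737190 : ℕ) : ℝ) :=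
    log_ge_of_pow 39195588149163123383161804554421175259738677336198748467804183290796540382737190 2115 8 (36650157/200000) (by norm_num) (by norm_num) (by decide +kernel) (by norm_num)
  have hu : Real.log ((36650157/200000) : ℝ) ≤ ((1044053/200000) : ℝ) :=
    log_le_of_pow (36650157/200000) 241 32 (1044053/200000) (by norm_num) (by norm_num) (by norm_num) (by norm_num)
  exact concave 45 (36650157/200000) L (by norm_num) (le_trans hc hL) (by norm_num) (by norm_num)
    (le_trans (mul_le_mul_of_nonneg_left hu (by norm_num)) (by norm_num))

lemma numeric_46 (L : ℝ) (hL : Real.log ((7799922041683461553249199106329813876687996789903550945093032474868511536164700810 : ℕ) : ℝ) ≤ L) :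
    (46 : ℝ) * Real.log L ≤ 1.385 * L := by
  have hc : ((188536033/1000000) : ℝ) ≤ Real.log ((7799922041683461553249199106329813876687996789903550945093032474868511536164700810 : ℕ) : ℝ) :=
    log_ge_of_pow 7799922041683461553249199106329813876687996789903550945093032474868511536164700810 2176 8 (188536033/1000000) (by norm_num) (by norm_num) (by decide +kernel) (by norm_num)
  have hu : Real.log ((188536033/1000000) : ℝ) ≤ ((2620963/500000) : ℝ) :=
    log_le_of_pow (188536033/1000000) 242 32 (2620963/500000) (by norm_num) (by norm_num) (by norm_num) (by norm_num)
  exact concave 46 (188536033/1000000) L (by norm_num) (le_trans hc hL) (by norm_num) (by norm_num)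
    (le_trans (mul_le_mul_of_nonneg_left hu (by norm_num)) (by norm_num))

lemma numeric_47 (L : ℝ) (hL : Real.log ((1645783550795210387735581011435590727981167322669649249414629852197255934130751870910 : ℕ) : ℝ) ≤ L) :
    (47 : ℝ) * Real.log L ≤ 1.385 * L := by
  have hc : ((193907923/1000000) : ℝ) ≤ Real.log ((1645783550795210387735581011435590727981167322669649249414629852197255934130751870910 : ℕ) : ℝ) :=
    log_ge_of_pow 1645783550795210387735581011435590727981167322669649249414629852197255934130751870910 2238 8 (193907923/1000000) (by norm_num) (by norm_num) (by decide +kernel) (by norm_num)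
  have hu : Real.log ((193907923/1000000) : ℝ) ≤ ((82582/15625) : ℝ) :=
    log_le_of_pow (193907923/1000000) 244 32 (82582/15625) (by norm_num) (by norm_num) (by norm_num) (by norm_num)
  exact concave 47 (193907923/1000000) L (by norm_num) (le_trans hc hL) (by norm_num) (by norm_num)
    (le_trans (mul_le_mul_of_nonneg_left hu (by norm_num)) (by norm_num))

lemma numeric_48 (L : ℝ) (hL : Real.log ((367009731827331916465034565550136732339800312955331782619462457039988073311157667212930 : ℕ) : ℝ) ≤ L) :
    (48 : ℝ) * Real.log L ≤ 1.385 * L := by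
  have hc : ((99639907/500000) : ℝ) ≤ Real.log ((367009731827331916465034565550136732339800312955331782619462457039988073311157667212930 : ℕ) : ℝ) :=
    log_ge_of_pow 367009731827331916465034565550136732339800312955331782619462457039988073311157667212930 2300 8 (99639907/500000) (by norm_num) (by norm_num) (by decide +kernel) (by norm_num)
  have hu : Real.log ((99639907/500000) : ℝ) ≤ ((5306909/1000000) : ℝ) :=
    log_le_of_pow (99639907/500000) 245 32 (5306909/1000000) (by norm_num) (by norm_num) (by norm_num) (by norm_num)
  exact concave 48 (99639907/500000) L (by norm_num) (le_trans hc hL) (by norm_num) (by norm_num)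
    (le_trans (mul_le_mul_of_nonneg_left hu (by norm_num)) (by norm_num))

lemma numeric_49 (L : ℝ) (hL : Real.log ((83311209124804345037562846379881038241134671040860314654617977748077292641632790457335110 : ℕ) : ℝ) ≤ L) :
    (49 : ℝ) * Real.log L ≤ 1.385 * L := by
  have hc : ((51184587/250000) : ℝ) ≤ Real.log ((83311209124804345037562846379881038241134671040860314654617977748077292641632790457335110 : ℕ) : ℝ) :=
    log_ge_of_pow 83311209124804345037562846379881038241134671040860314654617977748077292641632790457335110 2363 8 (51184587/250000) (by norm_num) (by norm_num) (by decide +kernel) (by norm_num)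
  have hu : Real.log ((51184587/250000) : ℝ) ≤ ((5328569/1000000) : ℝ) :=
    log_le_of_pow (51184587/250000) 246 32 (5328569/1000000) (by norm_num) (by norm_num) (by norm_num) (by norm_num)
  exact concave 49 (51184587/250000) L (by norm_num) (le_trans hc hL) (by norm_num) (by norm_num)
    (le_trans (mul_le_mul_of_nonneg_left hu (by norm_num)) (by norm_num))

lemma numeric_50 (L : ℝ) (hL : Real.log ((19078266889580195013601891820992757757219839668357012055907516904309700014933909014729740190 : ℕ) : ℝ) ≤ L) :
    (50 : ℝ) * Real.log L ≤ 1.385 * L := by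
  have hc : ((210110239/1000000) : ℝ) ≤ Real.log ((19078266889580195013601891820992757757219839668357012055907516904309700014933909014729740190 : ℕ) : ℝ) :=
    log_ge_of_pow 19078266889580195013601891820992757757219839668357012055907516904309700014933909014729740190 2425 8 (210110239/1000000) (by norm_num) (by norm_num) (by decide +kernel) (by norm_num)
  have hu : Real.log ((210110239/1000000) : ℝ) ≤ ((535023/100000) : ℝ) :=
    log_le_of_pow (210110239/1000000) 247 32 (535023/100000) (by norm_num) (by norm_num) (by norm_num) (by norm_num)
  exact concave 50 (210110239/1000000) L (by norm_num) (le_trans hc hL) (by norm_num) (by norm_num)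
    (le_trans (mul_le_mul_of_nonneg_left hu (by norm_num)) (by norm_num))

lemma numeric_51 (L : ℝ) (hL : Real.log ((4445236185272185438169240794291312557432222642727183809026451438704160103479600800432029464270 : ℕ) : ℝ) ≤ L) :
    (51 : ℝ) * Real.log L ≤ 1.385 * L := by
  have hc : ((215568773/1000000) : ℝ) ≤ Real.log ((4445236185272185438169240794291312557432222642727183809026451438704160103479600800432029464270 : ℕ) : ℝ) :=
    log_ge_of_pow 4445236185272185438169240794291312557432222642727183809026451438704160103479600800432029464270 2488 8 (215568773/1000000) (by norm_num) (by norm_num) (by decide +kernel) (by norm_num)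
  have hu : Real.log ((215568773/1000000) : ℝ) ≤ ((337097/62500) : ℝ) :=
    log_le_of_pow (215568773/1000000) 249 32 (337097/62500) (by norm_num) (by norm_num) (by norm_num) (by norm_num)
  exact concave 51 (215568773/1000000) L (by norm_num) (le_trans hc hL) (by norm_num) (by norm_num)
    (le_trans (mul_le_mul_of_nonneg_left hu (by norm_num)) (by norm_num))

lemma numeric_52 (L : ℝ) (hL : Real.log ((1062411448280052319722448549835623701226301211611796930357321893850294264731624591303255041960530 : ℕ) : ℝ) ≤ L) :
    (52 : ℝ) * Real.log L ≤ 1.385 * L := by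
  have hc : ((221027307/1000000) : ℝ) ≤ Real.log ((1062411448280052319722448549835623701226301211611796930357321893850294264731624591303255041960530 : ℕ) : ℝ) :=
    log_ge_of_pow 1062411448280052319722448549835623701226301211611796930357321893850294264731624591303255041960530 2551 8 (221027307/1000000) (by norm_num) (by norm_num) (by decide +kernel) (by norm_num)
  have hu : Real.log ((221027307/1000000) : ℝ) ≤ ((5415213/1000000) : ℝ) :=
    log_le_of_pow (221027307/1000000) 250 32 (5415213/1000000) (by norm_num) (by norm_num) (by norm_num) (by norm_num)
  exact concave 52 (221027307/1000000) L (by norm_num) (le_trans hc hL) (by norm_num) (by norm_num)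
    (le_trans (mul_le_mul_of_nonneg_left hu (by norm_num)) (by norm_num))

lemma numeric_53 (L : ℝ) (hL : Real.log ((256041159035492609053110100510385311995538591998443060216114576417920917800321526504084465112487730 : ℕ) : ℝ) ≤ L) :
    (53 : ℝ) * Real.log L ≤ 1.385 * L := by
  have hc : ((56643121/250000) : ℝ) ≤ Real.log ((256041159035492609053110100510385311995538591998443060216114576417920917800321526504084465112487730 : ℕ) : ℝ) :=
    log_ge_of_pow 256041159035492609053110100510385311995538591998443060216114576417920917800321526504084465112487730 2615 8 (56643121/250000) (by norm_num) (by norm_num) (by decide +kernel) (by norm_num)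
  have hu : Real.log ((56643121/250000) : ℝ) ≤ ((2718437/500000) : ℝ) :=
    log_le_of_pow (56643121/250000) 251 32 (2718437/500000) (by norm_num) (by norm_num) (by norm_num) (by norm_num)
  exact concave 53 (56643121/250000) L (by norm_num) (le_trans hc hL) (by norm_num) (by norm_num)
    (le_trans (mul_le_mul_of_nonneg_left hu (by norm_num)) (by norm_num))

lemma numeric_54 (L : ℝ) (hL : Real.log ((64266330917908644872330635228106713310880186591609208114244758680898150367880703152525200743234420230 : ℕ) : ℝ) ≤ L) :
    (54 : ℝ) * Real.log L ≤ 1.385 * L := by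
  have hc : ((116058831/500000) : ℝ) ≤ Real.log ((64266330917908644872330635228106713310880186591609208114244758680898150367880703152525200743234420230 : ℕ) : ℝ) :=
    log_ge_of_pow 64266330917908644872330635228106713310880186591609208114244758680898150367880703152525200743234420230 2679 8 (116058831/500000) (by norm_num) (by norm_num) (by decide +kernel) (by norm_num)
  have hu : Real.log ((116058831/500000) : ℝ) ≤ ((1091707/200000) : ℝ) :=
    log_le_of_pow (116058831/500000) 252 32 (1091707/200000) (by norm_num) (by norm_num) (by norm_num) (by norm_num)
  exact concave 54 (116058831/500000) L (by norm_num) (le_trans hc hL) (by norm_num) (by norm_num)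
    (le_trans (mul_le_mul_of_nonneg_left hu (by norm_num)) (by norm_num))

lemma numeric_55 (L : ℝ) (hL : Real.log ((16516447045902521732188973253623425320896207954043566485360902980990824644545340710198976591011245999110 : ℕ) : ℝ) ≤ L) :
    (55 : ℝ) * Real.log L ≤ 1.385 * L := by
  have hc : ((237662839/1000000) : ℝ) ≤ Real.log ((16516447045902521732188973253623425320896207954043566485360902980990824644545340710198976591011245999110 : ℕ) : ℝ) :=
    log_ge_of_pow 16516447045902521732188973253623425320896207954043566485360902980990824644545340710198976591011245999110 2743 8 (237662839/1000000) (by norm_num) (by norm_num) (by decide +kernel) (by norm_num)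
  have hu : Real.log ((237662839/1000000) : ℝ) ≤ ((1096039/200000) : ℝ) :=
    log_le_of_pow (237662839/1000000) 253 32 (1096039/200000) (by norm_num) (by norm_num) (by norm_num) (by norm_num)
  exact concave 55 (237662839/1000000) L (by norm_num) (le_trans hc hL) (by norm_num) (by norm_num)
    (le_trans (mul_le_mul_of_nonneg_left hu (by norm_num)) (by norm_num))

lemma numeric_56 (L : ℝ) (hL : Real.log ((4343825573072363215565699965702960859395702691913457985649917484000586881515424606782330843435957697765930 : ℕ) : ℝ) ≤ L) :
    (56 : ℝ) * Real.log L ≤ 1.385 * L := by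
  have hc : ((15200501/62500) : ℝ) ≤ Real.log ((4343825573072363215565699965702960859395702691913457985649917484000586881515424606782330843435957697765930 : ℕ) : ℝ) :=
    log_ge_of_pow 4343825573072363215565699965702960859395702691913457985649917484000586881515424606782330843435957697765930 2807 8 (15200501/62500) (by norm_num) (by norm_num) (by decide +kernel) (by norm_num)
  have hu : Real.log ((15200501/62500) : ℝ) ≤ ((171933/31250) : ℝ) :=
    log_le_of_pow (15200501/62500) 254 32 (171933/31250) (by norm_num) (by norm_num) (by norm_num) (by norm_num)
  exact concave 56 (15200501/62500) L (by norm_num) (le_trans hc hL) (by norm_num) (by norm_num)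
    (le_trans (mul_le_mul_of_nonneg_left hu (by norm_num)) (by norm_num))

lemma numeric_57 (L : ℝ) (hL : Real.log ((1168489079156465704987173290774096471177444024124720198139827803196157871127649219224446996884272620699035170 : ℕ) : ℝ) ≤ L) :
    (57 : ℝ) * Real.log L ≤ 1.385 * L := by
  have hc : ((124376597/500000) : ℝ) ≤ Real.log ((1168489079156465704987173290774096471177444024124720198139827803196157871127649219224446996884272620699035170 : ℕ) : ℝ) :=
    log_ge_of_pow 1168489079156465704987173290774096471177444024124720198139827803196157871127649219224446996884272620699035170 2871 8 (124376597/500000) (by norm_num) (by norm_num) (by decide +kernel) (by norm_num)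
  have hu : Real.log ((124376597/500000) : ℝ) ≤ ((5523517/1000000) : ℝ) :=
    log_le_of_pow (124376597/500000) 255 32 (5523517/1000000) (by norm_num) (by norm_num) (by norm_num) (by norm_num)
  exact concave 57 (124376597/500000) L (by norm_num) (le_trans hc hL) (by norm_num) (by norm_num)
    (le_trans (mul_le_mul_of_nonneg_left hu (by norm_num)) (by norm_num))

lemma numeric_58 (L : ℝ) (hL : Real.log ((316660540451402206051523961799780143689087330537799173695893334666158783075592938409825136155637880209438531070 : ℕ) : ℝ) ≤ L) :
    (58 : ℝ) * Real.log L ≤ 1.385 * L := by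
  have hc : ((50877003/200000) : ℝ) ≤ Real.log ((316660540451402206051523961799780143689087330537799173695893334666158783075592938409825136155637880209438531070 : ℕ) : ℝ) :=
    log_ge_of_pow 316660540451402206051523961799780143689087330537799173695893334666158783075592938409825136155637880209438531070 2936 8 (50877003/200000) (by norm_num) (by norm_num) (by decide +kernel) (by norm_num)
  have hu : Real.log ((50877003/200000) : ℝ) ≤ ((2772589/500000) : ℝ) :=
    log_le_of_pow (50877003/200000) 256 32 (2772589/500000) (by norm_num) (by norm_num) (by norm_num) (by norm_num)
  exact concave 58 (50877003/200000) L (by norm_num) (le_trans hc hL) (by norm_num) (by norm_num)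
    (le_trans (mul_le_mul_of_nonneg_left hu (by norm_num)) (by norm_num))

lemma numeric_59 (L : ℝ) (hL : Real.log ((87714969705038411076272137418539099801877190558970371113762453702525982911939243939521562715111692818014473106390 : ℕ) : ℝ) ≤ L) :
    (59 : ℝ) * Real.log L ≤ 1.385 * L := by
  have hc : ((65004209/250000) : ℝ) ≤ Real.log ((87714969705038411076272137418539099801877190558970371113762453702525982911939243939521562715111692818014473106390 : ℕ) : ℝ) :=
    log_ge_of_pow 87714969705038411076272137418539099801877190558970371113762453702525982911939243939521562715111692818014473106390 3001 8 (65004209/250000) (by norm_num) (by norm_num) (by decide +kernel) (by norm_num)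
  have hu : Real.log ((65004209/250000) : ℝ) ≤ ((5566839/1000000) : ℝ) :=
    log_le_of_pow (65004209/250000) 257 32 (5566839/1000000) (by norm_num) (by norm_num) (by exact_mod_cast real_pow_aux 65004209 250000 32 257 (by norm_num) (by decide +kernel)) (by norm_num)
  exact concave 59 (65004209/250000) L (by norm_num) (le_trans hc hL) (by norm_num) (by norm_num)
    (le_trans (mul_le_mul_of_nonneg_left hu (by norm_num)) (by norm_num))

lemma numeric_60 (L : ℝ) (hL : Real.log ((24647906487115793512432470614609487044327490547070674282967249490409801198254927547005559122946385681862066942895590 : ℕ) : ℝ) ≤ L) :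
    (60 : ℝ) * Real.log L ≤ 1.385 * L := by
  have hc : ((16603041/62500) : ℝ) ≤ Real.log ((24647906487115793512432470614609487044327490547070674282967249490409801198254927547005559122946385681862066942895590 : ℕ) : ℝ) :=
    log_ge_of_pow 24647906487115793512432470614609487044327490547070674282967249490409801198254927547005559122946385681862066942895590 3066 8 (16603041/62500) (by norm_num) (by norm_num) (by decide +kernel) (by norm_num)
  have hu : Real.log ((16603041/62500) : ℝ) ≤ ((11177/2000) : ℝ) :=
    log_le_of_pow (16603041/62500) 258 32 (11177/2000) (by norm_num) (by norm_num) (by exact_mod_cast real_pow_aux 16603041 62500 32 258 (by norm_num) (by decide +kernel)) (by norm_num)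
  exact concave 60 (16603041/62500) L (by norm_num) (le_trans hc hL) (by norm_num) (by norm_num)
    (le_trans (mul_le_mul_of_nonneg_left hu (by norm_num)) (by norm_num))

lemma numeric_61 (L : ℝ) (hL : Real.log ((6975357535853769564018389183934484833544679824821000822079731605785973739106144495802573231793827147966964944839451970 : ℕ) : ℝ) ≤ L) :
    (61 : ℝ) * Real.log L ≤ 1.385 * L := by
  have hc : ((271280477/1000000) : ℝ) ≤ Real.log ((6975357535853769564018389183934484833544679824821000822079731605785973739106144495802573231793827147966964944839451970 : ℕ) : ℝ) :=
    log_ge_of_pow 6975357535853769564018389183934484833544679824821000822079731605785973739106144495802573231793827147966964944839451970 3131 8 (271280477/1000000) (by norm_num) (by norm_num) (by decide +kernel) (by norm_num)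
  have hu : Real.log ((271280477/1000000) : ℝ) ≤ ((70127/12500) : ℝ) :=
    log_le_of_pow (271280477/1000000) 259 32 (70127/12500) (by norm_num) (by norm_num) (by exact_mod_cast real_pow_aux 271280477 1000000 32 259 (by norm_num) (by decide +kernel)) (by norm_num)
  exact concave 61 (271280477/1000000) L (by norm_num) (le_trans hc hL) (by norm_num) (by norm_num)
    (le_trans (mul_le_mul_of_nonneg_left hu (by norm_num)) (by norm_num))

lemma numeric_62 (L : ℝ) (hL : Real.log ((2043779758005154482257388030892804056228591188672553240869361360495290305558100337270153956915591354354320728837959427210 : ℕ) : ℝ) ≤ L) :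
    (62 : ℝ) * Real.log L ≤ 1.385 * L := by
  have hc : ((276998941/1000000) : ℝ) ≤ Real.log ((2043779758005154482257388030892804056228591188672553240869361360495290305558100337270153956915591354354320728837959427210 : ℕ) : ℝ) :=
    log_ge_of_pow 2043779758005154482257388030892804056228591188672553240869361360495290305558100337270153956915591354354320728837959427210 3197 8 (276998941/1000000) (by norm_num) (by norm_num) (by decide +kernel) (by norm_num)
  have hu : Real.log ((276998941/1000000) : ℝ) ≤ ((5631821/1000000) : ℝ) :=
    log_le_of_pow (276998941/1000000) 260 32 (5631821/1000000) (by norm_num) (by norm_num) (by exact_mod_cast real_pow_aux 276998941 1000000 32 260 (by norm_num) (by decide +kernel)) (by norm_num)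
  exact concave 62 (276998941/1000000) L (by norm_num) (le_trans hc hL) (by norm_num) (by norm_num)
    (le_trans (mul_le_mul_of_nonneg_left hu (by norm_num)) (by norm_num))

lemma numeric_63 (L : ℝ) (hL : Real.log ((627440385707582426053018125484090845262177494922473844946893937672054123806336803541937264773086545786776463753253544153470 : ℕ) : ℝ) ≤ L) :
    (63 : ℝ) * Real.log L ≤ 1.385 * L := by
  have hc : ((141358703/500000) : ℝ) ≤ Real.log ((627440385707582426053018125484090845262177494922473844946893937672054123806336803541937264773086545786776463753253544153470 : ℕ) : ℝ) :=
    log_ge_of_pow 627440385707582426053018125484090845262177494922473844946893937672054123806336803541937264773086545786776463753253544153470 3263 8 (141358703/500000) (by norm_num) (by norm_num) (by decide +kernel) (by norm_num)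
  have hu : Real.log ((141358703/500000) : ℝ) ≤ ((2826741/500000) : ℝ) :=
    log_le_of_pow (141358703/500000) 261 32 (2826741/500000) (by norm_num) (by norm_num) (by exact_mod_cast real_pow_aux 141358703 500000 32 261 (by norm_num) (by decide +kernel)) (by norm_num)
  exact concave 63 (141358703/500000) L (by norm_num) (le_trans hc hL) (by norm_num) (by norm_num)
    (le_trans (mul_le_mul_of_nonneg_left hu (by norm_num)) (by norm_num))

lemma numeric_64 (L : ℝ) (hL : Real.log ((195133959955058134502488637025552252876537200920889365778484014616008832503770745901542489344429915739687480227261852231729170 : ℕ) : ℝ) ≤ L) :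
    (64 : ℝ) * Real.log L ≤ 1.385 * L := by
  have hc : ((28843587/100000) : ℝ) ≤ Real.log ((195133959955058134502488637025552252876537200920889365778484014616008832503770745901542489344429915739687480227261852231729170 : ℕ) : ℝ) :=
    log_ge_of_pow 195133959955058134502488637025552252876537200920889365778484014616008832503770745901542489344429915739687480227261852231729170 3329 8 (28843587/100000) (by norm_num) (by norm_num) (by decide +kernel) (by norm_num)
  have hu : Real.log ((28843587/100000) : ℝ) ≤ ((5675143/1000000) : ℝ) :=
    log_le_of_pow (28843587/100000) 262 32 (5675143/1000000) (by norm_num) (by norm_num) (by exact_mod_cast real_pow_aux 28843587 100000 32 262 (by norm_num) (by decide +kernel)) (by norm_num)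
  exact concave 64 (28843587/100000) L (by norm_num) (le_trans hc hL) (by norm_num) (by norm_num)
    (le_trans (mul_le_mul_of_nonneg_left hu (by norm_num)) (by norm_num))

lemma numeric_65 (L : ℝ) (hL : Real.log ((61076929465933196099278943388997855150356143888238371488665496574810764573680243467182799164806563626522181311132959748531230210 : ℕ) : ℝ) ≤ L) :
    (65 : ℝ) * Real.log L ≤ 1.385 * L := by
  have hc : ((147077167/500000) : ℝ) ≤ Real.log ((61076929465933196099278943388997855150356143888238371488665496574810764573680243467182799164806563626522181311132959748531230210 : ℕ) : ℝ) :=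
    log_ge_of_pow 61076929465933196099278943388997855150356143888238371488665496574810764573680243467182799164806563626522181311132959748531230210 3395 8 (147077167/500000) (by norm_num) (by norm_num) (by decide +kernel) (by norm_num)
  have hu : Real.log ((147077167/500000) : ℝ) ≤ ((1424201/250000) : ℝ) :=
    log_le_of_pow (147077167/500000) 263 32 (1424201/250000) (by norm_num) (by norm_num) (by exact_mod_cast real_pow_aux 147077167 500000 32 263 (by norm_num) (by decide +kernel)) (by norm_num)
  exact concave 65 (147077167/500000) L (by norm_num) (le_trans hc hL) (by norm_num) (by norm_num)
    (le_trans (mul_le_mul_of_nonneg_left hu (by norm_num)) (by norm_num))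

lemma numeric_66 (L : ℝ) (hL : Real.log ((19361386640700823163471425054312320082662897612571563761906962414215012369856637179096947335243680669607531475629148240284399976570 : ℕ) : ℝ) ≤ L) :
    (66 : ℝ) * Real.log L ≤ 1.385 * L := by
  have hc : ((149979721/500000) : ℝ) ≤ Real.log ((19361386640700823163471425054312320082662897612571563761906962414215012369856637179096947335243680669607531475629148240284399976570 : ℕ) : ℝ) :=
    log_ge_of_pow 19361386640700823163471425054312320082662897612571563761906962414215012369856637179096947335243680669607531475629148240284399976570 3462 8 (149979721/500000) (by norm_num) (by norm_num) (by decide +kernel) (by norm_num)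
  have hu : Real.log ((149979721/500000) : ℝ) ≤ ((1143693/200000) : ℝ) :=
    log_le_of_pow (149979721/500000) 264 32 (1143693/200000) (by norm_num) (by norm_num) (by exact_mod_cast real_pow_aux 149979721 500000 32 264 (by norm_num) (by decide +kernel)) (by norm_num)
  exact concave 66 (149979721/500000) L (by norm_num) (le_trans hc hL) (by norm_num) (by norm_num)
    (le_trans (mul_le_mul_of_nonneg_left hu (by norm_num)) (by norm_num))

lemma numeric_67 (L : ℝ) (hL : Real.log ((6408618978071972467109041692977377947361419109761187605191204559105169094422546906281089567965658301640092918433248067534136392244670 : ℕ) : ℝ) ≤ L) :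
    (67 : ℝ) * Real.log L ≤ 1.385 * L := by
  have hc : ((305764549/1000000) : ℝ) ≤ Real.log ((6408618978071972467109041692977377947361419109761187605191204559105169094422546906281089567965658301640092918433248067534136392244670 : ℕ) : ℝ) :=
    log_ge_of_pow 6408618978071972467109041692977377947361419109761187605191204559105169094422546906281089567965658301640092918433248067534136392244670 3529 8 (305764549/1000000) (by norm_num) (by norm_num) (by decide +kernel) (by norm_num)
  have hu : Real.log ((305764549/1000000) : ℝ) ≤ ((2870063/500000) : ℝ) :=
    log_le_of_pow (305764549/1000000) 265 32 (2870063/500000) (by norm_num) (by norm_num) (by exact_mod_cast real_pow_aux 305764549 1000000 32 265 (by norm_num) (by decide +kernel)) (by norm_num)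
  exact concave 67 (305764549/1000000) L (by norm_num) (le_trans hc hL) (by norm_num) (by norm_num)
    (le_trans (mul_le_mul_of_nonneg_left hu (by norm_num)) (by norm_num))

lemma numeric_68 (L : ℝ) (hL : Real.log ((2159704595610254721415747050533376368260798239989520222949435936418441984820398307416727184404426847652711313512004598759003964186453790 : ℕ) : ℝ) ≤ L) :
    (68 : ℝ) * Real.log L ≤ 1.385 * L := by
  have hc : ((311569657/1000000) : ℝ) ≤ Real.log ((2159704595610254721415747050533376368260798239989520222949435936418441984820398307416727184404426847652711313512004598759003964186453790 : ℕ) : ℝ) :=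
    log_ge_of_pow 2159704595610254721415747050533376368260798239989520222949435936418441984820398307416727184404426847652711313512004598759003964186453790 3596 8 (311569657/1000000) (by norm_num) (by norm_num) (by decide +kernel) (by norm_num)
  have hu : Real.log ((311569657/1000000) : ℝ) ≤ ((2880893/500000) : ℝ) :=
    log_le_of_pow (311569657/1000000) 266 32 (2880893/500000) (by norm_num) (by norm_num) (by exact_mod_cast real_pow_aux 311569657 1000000 32 266 (by norm_num) (by decide +kernel)) (by norm_num)
  exact concave 68 (311569657/1000000) L (by norm_num) (le_trans hc hL) (by norm_num) (by norm_num)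
    (le_trans (mul_le_mul_of_nonneg_left hu (by norm_num)) (by norm_num))

lemma numeric_69 (L : ℝ) (hL : Real.log ((749417494676758388331264226535081599786496989276363517363454269937199368732678212673604332988336116135490825788665595769374375572699465130 : ℕ) : ℝ) ≤ L) :
    (69 : ℝ) * Real.log L ≤ 1.385 * L := by
  have hc : ((9920669/31250) : ℝ) ≤ Real.log ((749417494676758388331264226535081599786496989276363517363454269937199368732678212673604332988336116135490825788665595769374375572699465130 : ℕ) : ℝ) :=
    log_ge_of_pow 749417494676758388331264226535081599786496989276363517363454269937199368732678212673604332988336116135490825788665595769374375572699465130 3664 8 (9920669/31250) (by norm_num) (by norm_num) (by decide +kernel) (by norm_num)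
  have hu : Real.log ((9920669/31250) : ℝ) ≤ ((2880893/500000) : ℝ) :=
    log_le_of_pow (9920669/31250) 266 32 (2880893/500000) (by norm_num) (by norm_num) (by exact_mod_cast real_pow_aux 9920669 31250 32 266 (by norm_num) (by decide +kernel)) (by norm_num)
  exact concave 69 (9920669/31250) L (by norm_num) (le_trans hc hL) (by norm_num) (by norm_num)
    (le_trans (mul_le_mul_of_nonneg_left hu (by norm_num)) (by norm_num))

lemma numeric_70 (L : ℝ) (hL : Real.log ((261546705642188677527611215060743478325487449257450867559845540208082579687704696223087912212929304531286298200244292923511657074872113330370 : ℕ) : ℝ) ≤ L) :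
    (70 : ℝ) * Real.log L ≤ 1.385 * L := by
  have hc : ((80816629/250000) : ℝ) ≤ Real.log ((261546705642188677527611215060743478325487449257450867559845540208082579687704696223087912212929304531286298200244292923511657074872113330370 : ℕ) : ℝ) :=
    log_ge_of_pow 261546705642188677527611215060743478325487449257450867559845540208082579687704696223087912212929304531286298200244292923511657074872113330370 3731 8 (80816629/250000) (by norm_num) (by norm_num) (by decide +kernel) (by norm_num)
  have hu : Real.log ((80816629/250000) : ℝ) ≤ ((5783447/1000000) : ℝ) :=
    log_le_of_pow (80816629/250000) 267 32 (5783447/1000000) (by norm_num) (by norm_num) (by exact_mod_cast real_pow_aux 80816629 250000 32 267 (by norm_num) (by decide +kernel)) (by norm_num)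
  exact concave 70 (80816629/250000) L (by norm_num) (le_trans hc hL) (by norm_num) (by norm_num)
    (le_trans (mul_le_mul_of_nonneg_left hu (by norm_num)) (by norm_num))

lemma numeric_71 (L : ℝ) (hL : Real.log ((92325987091692603167246758916442447848897069587880156248625475693453150629759757766750033011164044499544063264686235401999614947429856005620610 : ℕ) : ℝ) ≤ L) :
    (71 : ℝ) * Real.log L ≤ 1.385 * L := by
  have hc : ((329158267/1000000) : ℝ) ≤ Real.log ((92325987091692603167246758916442447848897069587880156248625475693453150629759757766750033011164044499544063264686235401999614947429856005620610 : ℕ) : ℝ) :=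
    log_ge_of_pow 92325987091692603167246758916442447848897069587880156248625475693453150629759757766750033011164044499544063264686235401999614947429856005620610 3799 8 (329158267/1000000) (by norm_num) (by norm_num) (by decide +kernel) (by norm_num)
  have hu : Real.log ((329158267/1000000) : ℝ) ≤ ((1451277/250000) : ℝ) :=
    log_le_of_pow (329158267/1000000) 268 32 (1451277/250000) (by norm_num) (by norm_num) (by exact_mod_cast real_pow_aux 329158267 1000000 32 268 (by norm_num) (by decide +kernel)) (by norm_num)
  exact concave 71 (329158267/1000000) L (by norm_num) (le_trans hc hL) (by norm_num) (by norm_num)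
    (le_trans (mul_le_mul_of_nonneg_left hu (by norm_num)) (by norm_num))

lemma numeric_72 (L : ℝ) (hL : Real.log ((33145029365917644537041586451002838777754047982048976093256545773949681076083753038263261851007891975336318712022358509317861766127318306017798990 : ℕ) : ℝ) ≤ L) :
    (72 : ℝ) * Real.log L ≤ 1.385 * L := by
  have hc : ((167525009/500000) : ℝ) ≤ Real.log ((33145029365917644537041586451002838777754047982048976093256545773949681076083753038263261851007891975336318712022358509317861766127318306017798990 : ℕ) : ℝ) :=
    log_ge_of_pow 33145029365917644537041586451002838777754047982048976093256545773949681076083753038263261851007891975336318712022358509317861766127318306017798990 3867 8 (167525009/500000) (by norm_num) (by norm_num) (by decide +kernel) (by norm_num)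
  have hu : Real.log ((167525009/500000) : ℝ) ≤ ((5826769/1000000) : ℝ) :=
    log_le_of_pow (167525009/500000) 269 32 (5826769/1000000) (by norm_num) (by norm_num) (by exact_mod_cast real_pow_aux 167525009 500000 32 269 (by norm_num) (by decide +kernel)) (by norm_num)
  exact concave 72 (167525009/500000) L (by norm_num) (le_trans hc hL) (by norm_num) (by norm_num)
    (le_trans (mul_le_mul_of_nonneg_left hu (by norm_num)) (by norm_num))

lemma numeric_73 (L : ℝ) (hL : Real.log ((12164225777291775545094262227518041831435735609411974226225152299039532954922737365042617099319896354948428967312205572919655268168725818308532229330 : ℕ) : ℝ) ≤ L) :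
    (73 : ℝ) * Real.log L ≤ 1.385 * L := by
  have hc : ((340941769/1000000) : ℝ) ≤ Real.log ((12164225777291775545094262227518041831435735609411974226225152299039532954922737365042617099319896354948428967312205572919655268168725818308532229330 : ℕ) : ℝ) :=
    log_ge_of_pow 12164225777291775545094262227518041831435735609411974226225152299039532954922737365042617099319896354948428967312205572919655268168725818308532229330 3935 8 (340941769/1000000) (by norm_num) (by norm_num) (by decide +kernel) (by norm_num)
  have hu : Real.log ((340941769/1000000) : ℝ) ≤ ((584843/100000) : ℝ) :=
    log_le_of_pow (340941769/1000000) 270 32 (584843/100000) (by norm_num) (by norm_num) (by exact_mod_cast real_pow_aux 340941769 1000000 32 270 (by norm_num) (by decide +kernel)) (by norm_num)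
  exact concave 73 (340941769/1000000) L (by norm_num) (le_trans hc hL) (by norm_num) (by norm_num)
    (le_trans (mul_le_mul_of_nonneg_left hu (by norm_num)) (by norm_num))

lemma numeric_74 (L : ℝ) (hL : Real.log ((4537256214929832278320159810864229603125529382310666386381981807541745792186181037160896178046321340395764004807452678699031415026934730229082521540090 : ℕ) : ℝ) ≤ L) :
    (74 : ℝ) * Real.log L ≤ 1.385 * L := by
  have hc : ((4335419/12500) : ℝ) ≤ Real.log ((4537256214929832278320159810864229603125529382310666386381981807541745792186181037160896178046321340395764004807452678699031415026934730229082521540090 : ℕ) : ℝ) :=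
    log_ge_of_pow 4537256214929832278320159810864229603125529382310666386381981807541745792186181037160896178046321340395764004807452678699031415026934730229082521540090 4003 8 (4335419/12500) (by norm_num) (by norm_num) (by decide +kernel) (by norm_num)
  have hu : Real.log ((4335419/12500) : ℝ) ≤ ((5870091/1000000) : ℝ) :=
    log_le_of_pow (4335419/12500) 271 32 (5870091/1000000) (by norm_num) (by norm_num) (by exact_mod_cast real_pow_aux 4335419 12500 32 271 (by norm_num) (by decide +kernel)) (by norm_num)
  exact concave 74 (4335419/12500) L (by norm_num) (le_trans hc hL) (by norm_num) (by norm_num)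
    (le_trans (mul_le_mul_of_nonneg_left hu (by norm_num)) (by norm_num))

lemma numeric_75 (L : ℝ) (hL : Real.log ((1719620105458406433483340568317543019584575635895742560438771105058321655238562613083979651479555788009994557822024565226932906295208262756822275663694110 : ℕ) : ℝ) ≤ L) :
    (75 : ℝ) * Real.log L ≤ 1.385 * L := by
  have hc : ((176405957/500000) : ℝ) ≤ Real.log ((1719620105458406433483340568317543019584575635895742560438771105058321655238562613083979651479555788009994557822024565226932906295208262756822275663694110 : ℕ) : ℝ) :=
    log_ge_of_pow 1719620105458406433483340568317543019584575635895742560438771105058321655238562613083979651479555788009994557822024565226932906295208262756822275663694110 4072 8 (176405957/500000) (by norm_num) (by norm_num) (by decide +kernel) (by norm_num)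
  have hu : Real.log ((176405957/500000) : ℝ) ≤ ((5870091/1000000) : ℝ) :=
    log_le_of_pow (176405957/500000) 271 32 (5870091/1000000) (by norm_num) (by norm_num) (by exact_mod_cast real_pow_aux 176405957 500000 32 271 (by norm_num) (by decide +kernel)) (by norm_num)
  exact concave 75 (176405957/500000) L (by norm_num) (le_trans hc hL) (by norm_num) (by norm_num)
    (le_trans (mul_le_mul_of_nonneg_left hu (by norm_num)) (by norm_num))

lemma numeric_76 (L : ℝ) (hL : Real.log ((658614500390569664024119437665618976500892468548069400648049333237337193956369480811164206516669866807827915645835408481915303111064764635862931579194844130 : ℕ) : ℝ) ≤ L) :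
    (76 : ℝ) * Real.log L ≤ 1.385 * L := by
  have hc : ((71740733/200000) : ℝ) ≤ Real.log ((658614500390569664024119437665618976500892468548069400648049333237337193956369480811164206516669866807827915645835408481915303111064764635862931579194844130 : ℕ) : ℝ) :=
    log_ge_of_pow 658614500390569664024119437665618976500892468548069400648049333237337193956369480811164206516669866807827915645835408481915303111064764635862931579194844130 4140 8 (71740733/200000) (by norm_num) (by norm_num) (by decide +kernel) (by norm_num)
  have hu : Real.log ((71740733/200000) : ℝ) ≤ ((736469/125000) : ℝ) :=
    log_le_of_pow (71740733/200000) 272 32 (736469/125000) (by norm_num) (by norm_num) (by exact_mod_cast real_pow_aux 71740733 200000 32 272 (by norm_num) (by decide +kernel)) (by norm_num)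
  exact concave 76 (71740733/200000) L (by norm_num) (le_trans hc hL) (by norm_num) (by norm_num)
    (le_trans (mul_le_mul_of_nonneg_left hu (by norm_num)) (by norm_num))

lemma numeric_77 (L : ℝ) (hL : Real.log ((256201040651931599305382461251925781858847170265198996852091190629324168449027728035542876334984578188245059186229973899465052910204193443350680384306794366570 : ℕ) : ℝ) ≤ L) :
    (77 : ℝ) * Real.log L ≤ 1.385 * L := by
  have hc : ((18234103/50000) : ℝ) ≤ Real.log ((256201040651931599305382461251925781858847170265198996852091190629324168449027728035542876334984578188245059186229973899465052910204193443350680384306794366570 : ℕ) : ℝ) :=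
    log_ge_of_pow 256201040651931599305382461251925781858847170265198996852091190629324168449027728035542876334984578188245059186229973899465052910204193443350680384306794366570 4209 8 (18234103/50000) (by norm_num) (by norm_num) (by decide +kernel) (by norm_num)
  have hu : Real.log ((18234103/50000) : ℝ) ≤ ((1478353/250000) : ℝ) :=
    log_le_of_pow (18234103/50000) 273 32 (1478353/250000) (by norm_num) (by norm_num) (by exact_mod_cast real_pow_aux 18234103 50000 32 273 (by norm_num) (by decide +kernel)) (by norm_num)
  exact concave 77 (18234103/50000) L (by norm_num) (le_trans hc hL) (by norm_num) (by norm_num)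
    (le_trans (mul_le_mul_of_nonneg_left hu (by norm_num)) (by norm_num))

lemma numeric_78 (L : ℝ) (hL : Real.log ((101711813138816844924236837117014535397962326595284001750280202679841694874264008030110521904988877540733288496933299638087626005351064797010220112569797363528290 : ℕ) : ℝ) ≤ L) :
    (78 : ℝ) * Real.log L ≤ 1.385 * L := by
  have hc : ((185330227/500000) : ℝ) ≤ Real.log ((101711813138816844924236837117014535397962326595284001750280202679841694874264008030110521904988877540733288496933299638087626005351064797010220112569797363528290 : ℕ) : ℝ) :=
    log_ge_of_pow 101711813138816844924236837117014535397962326595284001750280202679841694874264008030110521904988877540733288496933299638087626005351064797010220112569797363528290 4278 8 (185330227/500000) (by norm_num) (by norm_num) (by decide +kernel) (by norm_num)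
  have hu : Real.log ((185330227/500000) : ℝ) ≤ ((5935073/1000000) : ℝ) :=
    log_le_of_pow (185330227/500000) 274 32 (5935073/1000000) (by norm_num) (by norm_num) (by exact_mod_cast real_pow_aux 185330227 500000 32 274 (by norm_num) (by decide +kernel)) (by norm_num)
  exact concave 78 (185330227/500000) L (by norm_num) (le_trans hc hL) (by norm_num) (by norm_num)
    (le_trans (mul_le_mul_of_nonneg_left hu (by norm_num)) (by norm_num))

lemma numeric_79 (L : ℝ) (hL : Real.log ((40786437068665554814618971683922828694582892964708884701862361274616519644579867220074319283900539893834048687270253154873138028145776983601098265140488742774844290 : ℕ) : ℝ) ≤ L) :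
    (79 : ℝ) * Real.log L ≤ 1.385 * L := by
  have hc : ((94181373/250000) : ℝ) ≤ Real.log ((40786437068665554814618971683922828694582892964708884701862361274616519644579867220074319283900539893834048687270253154873138028145776983601098265140488742774844290 : ℕ) : ℝ) :=
    log_ge_of_pow 40786437068665554814618971683922828694582892964708884701862361274616519644579867220074319283900539893834048687270253154873138028145776983601098265140488742774844290 4348 8 (94181373/250000) (by norm_num) (by norm_num) (by decide +kernel) (by norm_num)
  have hu : Real.log ((94181373/250000) : ℝ) ≤ ((5935073/1000000) : ℝ) :=
    log_le_of_pow (94181373/250000) 274 32 (5935073/1000000) (by norm_num) (by norm_num) (by exact_mod_cast real_pow_aux 94181373 250000 32 274 (by norm_num) (by decide +kernel)) (by norm_num)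
  exact concave 79 (94181373/250000) L (by norm_num) (le_trans hc hL) (by norm_num) (by norm_num)
    (le_trans (mul_le_mul_of_nonneg_left hu (by norm_num)) (by norm_num))

lemma numeric_80 (L : ℝ) (hL : Real.log ((16681652761084211919179159418724436936084403222565933843061705761318156534633165693010396587115320816578125913093533540343113453511622786292849190442459895794911314610 : ℕ) : ℝ) ≤ L) :
    (80 : ℝ) * Real.log L ≤ 1.385 * L := by
  have hc : ((191351943/500000) : ℝ) ≤ Real.log ((16681652761084211919179159418724436936084403222565933843061705761318156534633165693010396587115320816578125913093533540343113453511622786292849190442459895794911314610 : ℕ) : ℝ) :=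
    log_ge_of_pow 16681652761084211919179159418724436936084403222565933843061705761318156534633165693010396587115320816578125913093533540343113453511622786292849190442459895794911314610 4417 8 (191351943/500000) (by norm_num) (by norm_num) (by decide +kernel) (by norm_num)
  have hu : Real.log ((191351943/500000) : ℝ) ≤ ((2978367/500000) : ℝ) :=
    log_le_of_pow (191351943/500000) 275 32 (2978367/500000) (by norm_num) (by norm_num) (by exact_mod_cast real_pow_aux 191351943 500000 32 275 (by norm_num) (by decide +kernel)) (by norm_num)
  exact concave 80 (191351943/500000) L (by norm_num) (le_trans hc hL) (by norm_num) (by norm_num)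
    (le_trans (mul_le_mul_of_nonneg_left hu (by norm_num)) (by norm_num))

lemma numeric_81 (L : ℝ) (hL : Real.log ((6989612506894284794136067796445539076219364950255126280242854713992307588011296425371356170001319422146234757586190553403764537021369947456703810795390696338067840821590 : ℕ) : ℝ) ≤ L) :
    (81 : ℝ) * Real.log L ≤ 1.385 * L := by
  have hc : ((97192231/250000) : ℝ) ≤ Real.log ((6989612506894284794136067796445539076219364950255126280242854713992307588011296425371356170001319422146234757586190553403764537021369947456703810795390696338067840821590 : ℕ) : ℝ) :=
    log_ge_of_pow 6989612506894284794136067796445539076219364950255126280242854713992307588011296425371356170001319422146234757586190553403764537021369947456703810795390696338067840821590 4487 8 (97192231/250000) (by norm_num) (by norm_num) (by decide +kernel) (by norm_num)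
  have hu : Real.log ((97192231/250000) : ℝ) ≤ ((1195679/200000) : ℝ) :=
    log_le_of_pow (97192231/250000) 276 32 (1195679/200000) (by norm_num) (by norm_num) (by exact_mod_cast real_pow_aux 97192231 250000 32 276 (by norm_num) (by decide +kernel)) (by norm_num)
  exact concave 81 (97192231/250000) L (by norm_num) (le_trans hc hL) (by norm_num) (by norm_num)
    (le_trans (mul_le_mul_of_nonneg_left hu (by norm_num)) (by norm_num))

lemma numeric_82 (L : ℝ) (hL : Real.log ((2942626865402493898331284542303571951088352644057408163982241834590761494552755795081340947570555476723564832943786222982984870085996747879272304344859483158326560985889390 : ℕ) : ℝ) ≤ L) :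
    (82 : ℝ) * Real.log L ≤ 1.385 * L := by
  have hc : ((394747319/1000000) : ℝ) ≤ Real.log ((2942626865402493898331284542303571951088352644057408163982241834590761494552755795081340947570555476723564832943786222982984870085996747879272304344859483158326560985889390 : ℕ) : ℝ) :=
    log_ge_of_pow 2942626865402493898331284542303571951088352644057408163982241834590761494552755795081340947570555476723564832943786222982984870085996747879272304344859483158326560985889390 4556 8 (394747319/1000000) (by norm_num) (by norm_num) (by decide +kernel) (by norm_num)
  have hu : Real.log ((394747319/1000000) : ℝ) ≤ ((1195679/200000) : ℝ) :=
    log_le_of_pow (394747319/1000000) 276 32 (1195679/200000) (by norm_num) (by norm_num) (by exact_mod_cast real_pow_aux 394747319 1000000 32 276 (by norm_num) (by decide +kernel)) (by norm_num)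
  exact concave 82 (394747319/1000000) L (by norm_num) (le_trans hc hL) (by norm_num) (by norm_num)
    (le_trans (mul_le_mul_of_nonneg_left hu (by norm_num)) (by norm_num))

lemma numeric_83 (L : ℝ) (hL : Real.log ((1268272178988474870180783637732839510919079989588742918676346230708618204152237747680057948402909410467856442998771862105666479007064598335966363172634437241238747784918327090 : ℕ) : ℝ) ≤ L) :
    (83 : ℝ) * Real.log L ≤ 1.385 * L := by
  have hc : ((400812357/1000000) : ℝ) ≤ Real.log ((1268272178988474870180783637732839510919079989588742918676346230708618204152237747680057948402909410467856442998771862105666479007064598335966363172634437241238747784918327090 : ℕ) : ℝ) :=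
    log_ge_of_pow 1268272178988474870180783637732839510919079989588742918676346230708618204152237747680057948402909410467856442998771862105666479007064598335966363172634437241238747784918327090 4626 8 (400812357/1000000) (by norm_num) (by norm_num) (by decide +kernel) (by norm_num)
  have hu : Real.log ((400812357/1000000) : ℝ) ≤ ((750007/125000) : ℝ) :=
    log_le_of_pow (400812357/1000000) 277 32 (750007/125000) (by norm_num) (by norm_num) (by exact_mod_cast real_pow_aux 400812357 1000000 32 277 (by norm_num) (by decide +kernel)) (by norm_num)
  exact concave 83 (400812357/1000000) L (by norm_num) (le_trans hc hL) (by norm_num) (by norm_num)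
    (le_trans (mul_le_mul_of_nonneg_left hu (by norm_num)) (by norm_num))

lemma numeric_84 (L : ℝ) (hL : Real.log ((549161853502009618788279315138319508227961635491925683786857917896831682397918944745465091658459774732581839818468216291753585410058971079473435253750711325456377790869635629970 : ℕ) : ℝ) ≤ L) :
    (84 : ℝ) * Real.log L ≤ 1.385 * L := by
  have hc : ((203438697/500000) : ℝ) ≤ Real.log ((549161853502009618788279315138319508227961635491925683786857917896831682397918944745465091658459774732581839818468216291753585410058971079473435253750711325456377790869635629970 : ℕ) : ℝ) :=
    log_ge_of_pow 549161853502009618788279315138319508227961635491925683786857917896831682397918944745465091658459774732581839818468216291753585410058971079473435253750711325456377790869635629970 4696 8 (203438697/500000) (by norm_num) (by norm_num) (by decide +kernel) (by norm_num)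
  have hu : Real.log ((203438697/500000) : ℝ) ≤ ((6021717/1000000) : ℝ) :=
    log_le_of_pow (203438697/500000) 278 32 (6021717/1000000) (by norm_num) (by norm_num) (by exact_mod_cast real_pow_aux 203438697 500000 32 278 (by norm_num) (by decide +kernel)) (by norm_num)
  exact concave 84 (203438697/500000) L (by norm_num) (le_trans hc hL) (by norm_num) (by norm_num)
    (le_trans (mul_le_mul_of_nonneg_left hu (by norm_num)) (by norm_num))

lemma numeric_85 (L : ℝ) (hL : Real.log ((241082053687382222648054619345722264112075157980955375182430625956709108572686416743259175238063841107603427680307546952079823995015888303888838076396562271875349850191770041556830 : ℕ) : ℝ) ≤ L) :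
    (85 : ℝ) * Real.log L ≤ 1.385 * L := by
  have hc : ((103257269/250000) : ℝ) ≤ Real.log ((241082053687382222648054619345722264112075157980955375182430625956709108572686416743259175238063841107603427680307546952079823995015888303888838076396562271875349850191770041556830 : ℕ) : ℝ) :=
    log_ge_of_pow 241082053687382222648054619345722264112075157980955375182430625956709108572686416743259175238063841107603427680307546952079823995015888303888838076396562271875349850191770041556830 4767 8 (103257269/250000) (by norm_num) (by norm_num) (by decide +kernel) (by norm_num)
  have hu : Real.log ((103257269/250000) : ℝ) ≤ ((6043377/1000000) : ℝ) :=
    log_le_of_pow (103257269/250000) 279 32 (6043377/1000000) (by norm_num) (by norm_num) (by exact_mod_cast real_pow_aux 103257269 250000 32 279 (by norm_num) (by decide +kernel)) (by norm_num)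
  exact concave 85 (103257269/250000) L (by norm_num) (le_trans hc hL) (by norm_num) (by norm_num)
    (le_trans (mul_le_mul_of_nonneg_left hu (by norm_num)) (by norm_num))

lemma numeric_86 (L : ℝ) (hL : Real.log ((106799349783510324633088196370154963001649294985563231205816767298822135097700082617263814630462281610668318462376243299771362029792038518622755267843677086440779983634954128409675690 : ℕ) : ℝ) ≤ L) :
    (86 : ℝ) * Real.log L ≤ 1.385 * L := by
  have hc : ((419094113/1000000) : ℝ) ≤ Real.log ((106799349783510324633088196370154963001649294985563231205816767298822135097700082617263814630462281610668318462376243299771362029792038518622755267843677086440779983634954128409675690 : ℕ) : ℝ) :=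
    log_ge_of_pow 106799349783510324633088196370154963001649294985563231205816767298822135097700082617263814630462281610668318462376243299771362029792038518622755267843677086440779983634954128409675690 4837 8 (419094113/1000000) (by norm_num) (by norm_num) (by decide +kernel) (by norm_num)
  have hu : Real.log ((419094113/1000000) : ℝ) ≤ ((6043377/1000000) : ℝ) :=
    log_le_of_pow (419094113/1000000) 279 32 (6043377/1000000) (by norm_num) (by norm_num) (by exact_mod_cast real_pow_aux 419094113 1000000 32 279 (by norm_num) (by decide +kernel)) (by norm_num)
  exact concave 86 (419094113/1000000) L (by norm_num) (le_trans hc hL) (by norm_num) (by norm_num)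
    (le_trans (mul_le_mul_of_nonneg_left hu (by norm_num)) (by norm_num))

lemma numeric_87 (L : ℝ) (hL : Real.log ((47952908052796135760256600170199578387740533448517890811411728517171138658867337095151452769077564443190074989606933241597341551376625294861617115261811011811910212652094403655944384810 : ℕ) : ℝ) ≤ L) :
    (87 : ℝ) * Real.log L ≤ 1.385 * L := by
  have hc : ((425159151/1000000) : ℝ) ≤ Real.log ((47952908052796135760256600170199578387740533448517890811411728517171138658867337095151452769077564443190074989606933241597341551376625294861617115261811011811910212652094403655944384810 : ℕ) : ℝ) :=
    log_ge_of_pow 47952908052796135760256600170199578387740533448517890811411728517171138658867337095151452769077564443190074989606933241597341551376625294861617115261811011811910212652094403655944384810 4907 8 (425159151/1000000) (by norm_num) (by norm_num) (by decide +kernel) (by norm_num)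
  have hu : Real.log ((425159151/1000000) : ℝ) ≤ ((3032519/500000) : ℝ) :=
    log_le_of_pow (425159151/1000000) 280 32 (3032519/500000) (by norm_num) (by norm_num) (by exact_mod_cast real_pow_aux 425159151 1000000 32 280 (by norm_num) (by decide +kernel)) (by norm_num)
  exact concave 87 (425159151/1000000) L (by norm_num) (le_trans hc hL) (by norm_num) (by norm_num)
    (le_trans (mul_le_mul_of_nonneg_left hu (by norm_num)) (by norm_num))

lemma numeric_88 (L : ℝ) (hL : Real.log ((21914478980127834042437266277781207323197423785972676100815159932347210367102373052484213915468446950537864270250368491409985088979117759751759021674647632398042967182007142470766583858170 : ℕ) : ℝ) ≤ L) :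
    (88 : ℝ) * Real.log L ≤ 1.385 * L := by
  have hc : ((26956927/62500) : ℝ) ≤ Real.log ((21914478980127834042437266277781207323197423785972676100815159932347210367102373052484213915468446950537864270250368491409985088979117759751759021674647632398042967182007142470766583858170 : ℕ) : ℝ) :=
    log_ge_of_pow 21914478980127834042437266277781207323197423785972676100815159932347210367102373052484213915468446950537864270250368491409985088979117759751759021674647632398042967182007142470766583858170 4978 8 (26956927/62500) (by norm_num) (by norm_num) (by decide +kernel) (by norm_num)
  have hu : Real.log ((26956927/62500) : ℝ) ≤ ((6086699/1000000) : ℝ) :=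
    log_le_of_pow (26956927/62500) 281 32 (6086699/1000000) (by norm_num) (by norm_num) (by exact_mod_cast real_pow_aux 26956927 62500 32 281 (by norm_num) (by decide +kernel)) (by norm_num)
  exact concave 88 (26956927/62500) L (by norm_num) (le_trans hc hL) (by norm_num) (by norm_num)
    (le_trans (mul_le_mul_of_nonneg_left hu (by norm_num)) (by norm_num))

lemma numeric_89 (L : ℝ) (hL : Real.log ((10102574809838931493563579754057136575994012365333403682475788728812063979234193977195222615030954044197955428585419874540003126019373287245560908992012558535497807870905292679023395158616370 : ℕ) : ℝ) ≤ L) :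
    (89 : ℝ) * Real.log L ≤ 1.385 * L := by
  have hc : ((218731257/500000) : ℝ) ≤ Real.log ((10102574809838931493563579754057136575994012365333403682475788728812063979234193977195222615030954044197955428585419874540003126019373287245560908992012558535497807870905292679023395158616370 : ℕ) : ℝ) :=
    log_ge_of_pow 10102574809838931493563579754057136575994012365333403682475788728812063979234193977195222615030954044197955428585419874540003126019373287245560908992012558535497807870905292679023395158616370 5049 8 (218731257/500000) (by norm_num) (by norm_num) (by decide +kernel) (by norm_num)
  have hu : Real.log ((218731257/500000) : ℝ) ≤ ((6086699/1000000) : ℝ) :=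
    log_le_of_pow (218731257/500000) 281 32 (6086699/1000000) (by norm_num) (by norm_num) (by exact_mod_cast real_pow_aux 218731257 500000 32 281 (by norm_num) (by decide +kernel)) (by norm_num)
  exact concave 89 (218731257/500000) L (by norm_num) (le_trans hc hL) (by norm_num) (by norm_num)
    (le_trans (mul_le_mul_of_nonneg_left hu (by norm_num)) (by norm_num))

lemma numeric_90 (L : ℝ) (hL : Real.log ((4677492136955425281519937426128454234685227725149365904986290181439985622385431811441388070759331722463653363435049401912021447346969831994694700863301814601935485044229150510387831958439379310 : ℕ) : ℝ) ≤ L) :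
    (90 : ℝ) * Real.log L ≤ 1.385 * L := by
  have hc : ((88722839/200000) : ℝ) ≤ Real.log ((4677492136955425281519937426128454234685227725149365904986290181439985622385431811441388070759331722463653363435049401912021447346969831994694700863301814601935485044229150510387831958439379310 : ℕ) : ℝ) :=
    log_ge_of_pow 4677492136955425281519937426128454234685227725149365904986290181439985622385431811441388070759331722463653363435049401912021447346969831994694700863301814601935485044229150510387831958439379310 5120 8 (88722839/200000) (by norm_num) (by norm_num) (by decide +kernel) (by norm_num)
  have hu : Real.log ((88722839/200000) : ℝ) ≤ ((152709/25000) : ℝ) :=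
    log_le_of_pow (88722839/200000) 282 32 (152709/25000) (by norm_num) (by norm_num) (by exact_mod_cast real_pow_aux 88722839 200000 32 282 (by norm_num) (by decide +kernel)) (by norm_num)
  exact concave 90 (88722839/200000) L (by norm_num) (le_trans hc hL) (by norm_num) (by norm_num)
    (le_trans (mul_le_mul_of_nonneg_left hu (by norm_num)) (by norm_num))

lemma numeric_91 (L : ℝ) (hL : Real.log ((2184388827958183606469810778001988127598001347644753877628597514732473285653996655943128229044607914390526120724168070692914015911034911541522425303161947419103871515655013288351117524591190137770 : ℕ) : ℝ) ≤ L) :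
    (91 : ℝ) * Real.log L ≤ 1.385 * L := by
  have hc : ((112441469/250000) : ℝ) ≤ Real.log ((2184388827958183606469810778001988127598001347644753877628597514732473285653996655943128229044607914390526120724168070692914015911034911541522425303161947419103871515655013288351117524591190137770 : ℕ) : ℝ) :=
    log_ge_of_pow 2184388827958183606469810778001988127598001347644753877628597514732473285653996655943128229044607914390526120724168070692914015911034911541522425303161947419103871515655013288351117524591190137770 5191 8 (112441469/250000) (by norm_num) (by norm_num) (by decide +kernel) (by norm_num)
  have hu : Real.log ((112441469/250000) : ℝ) ≤ ((6130021/1000000) : ℝ) :=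
    log_le_of_pow (112441469/250000) 283 32 (6130021/1000000) (by norm_num) (by norm_num) (by exact_mod_cast real_pow_aux 112441469 250000 32 283 (by norm_num) (by decide +kernel)) (by norm_num)
  exact concave 91 (112441469/250000) L (by norm_num) (le_trans hc hL) (by norm_num) (by norm_num)
    (le_trans (mul_le_mul_of_nonneg_left hu (by norm_num)) (by norm_num))

lemma numeric_92 (L : ℝ) (hL : Real.log ((1046322248591969947499039362662952313119442645521837107384098209556854703828264398196758421712367190993062011826876505861905813621385722628389241720214572813750754455998751365120185294279180075991830 : ℕ) : ℝ) ≤ L) :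
    (92 : ℝ) * Real.log L ≤ 1.385 * L := by
  have hc : ((455917557/1000000) : ℝ) ≤ Real.log ((1046322248591969947499039362662952313119442645521837107384098209556854703828264398196758421712367190993062011826876505861905813621385722628389241720214572813750754455998751365120185294279180075991830 : ℕ) : ℝ) :=
    log_ge_of_pow 1046322248591969947499039362662952313119442645521837107384098209556854703828264398196758421712367190993062011826876505861905813621385722628389241720214572813750754455998751365120185294279180075991830 5262 8 (455917557/1000000) (by norm_num) (by norm_num) (by decide +kernel) (by norm_num)
  have hu : Real.log ((455917557/1000000) : ℝ) ≤ ((6130021/1000000) : ℝ) :=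
    log_le_of_pow (455917557/1000000) 283 32 (6130021/1000000) (by norm_num) (by norm_num) (by exact_mod_cast real_pow_aux 455917557 1000000 32 283 (by norm_num) (by decide +kernel)) (by norm_num)
  exact concave 92 (455917557/1000000) L (by norm_num) (le_trans hc hL) (by norm_num) (by norm_num)
    (le_trans (mul_le_mul_of_nonneg_left hu (by norm_num)) (by norm_num))

lemma numeric_93 (L : ℝ) (hL : Real.log ((509558935064289364432032169616857776489168568369134671296055828054188240764364761921821351373922822013621199759688858354748131233614846920025560717744496960296617420071391914813530238313960697008021210 : ℕ) : ℝ) ≤ L) :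
    (93 : ℝ) * Real.log L ≤ 1.385 * L := by
  have hc : ((462069239/1000000) : ℝ) ≤ Real.log ((509558935064289364432032169616857776489168568369134671296055828054188240764364761921821351373922822013621199759688858354748131233614846920025560717744496960296617420071391914813530238313960697008021210 : ℕ) : ℝ) :=
    log_ge_of_pow 509558935064289364432032169616857776489168568369134671296055828054188240764364761921821351373922822013621199759688858354748131233614846920025560717744496960296617420071391914813530238313960697008021210 5333 8 (462069239/1000000) (by norm_num) (by norm_num) (by decide +kernel) (by norm_num)
  have hu : Real.log ((462069239/1000000) : ℝ) ≤ ((3075841/500000) : ℝ) :=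
    log_le_of_pow (462069239/1000000) 284 32 (3075841/500000) (by norm_num) (by norm_num) (by exact_mod_cast real_pow_aux 462069239 1000000 32 284 (by norm_num) (by decide +kernel)) (by norm_num)
  exact concave 93 (462069239/1000000) L (by norm_num) (le_trans hc hL) (by norm_num) (by norm_num)
    (le_trans (mul_le_mul_of_nonneg_left hu (by norm_num)) (by norm_num))

lemma numeric_94 (L : ℝ) (hL : Real.log ((250193437116566077936127795281877168256181767069245123606363411574606426215303098103614283524596105608688009082007229452181332435704889837732550312412548007505639153255053430173443347012154702230938414110 : ℕ) : ℝ) ≤ L) :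
    (94 : ℝ) * Real.log L ≤ 1.385 * L := by
  have hc : ((468307563/1000000) : ℝ) ≤ Real.log ((250193437116566077936127795281877168256181767069245123606363411574606426215303098103614283524596105608688009082007229452181332435704889837732550312412548007505639153255053430173443347012154702230938414110 : ℕ) : ℝ) :=
    log_ge_of_pow 250193437116566077936127795281877168256181767069245123606363411574606426215303098103614283524596105608688009082007229452181332435704889837732550312412548007505639153255053430173443347012154702230938414110 5405 8 (468307563/1000000) (by norm_num) (by norm_num) (by decide +kernel) (by norm_num)
  have hu : Real.log ((468307563/1000000) : ℝ) ≤ ((3075841/500000) : ℝ) :=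
    log_le_of_pow (468307563/1000000) 284 32 (3075841/500000) (by norm_num) (by norm_num) (by exact_mod_cast real_pow_aux 468307563 1000000 32 284 (by norm_num) (by decide +kernel)) (by norm_num)
  exact concave 94 (468307563/1000000) L (by norm_num) (le_trans hc hL) (by norm_num) (by norm_num)
    (le_trans (mul_le_mul_of_nonneg_left hu (by norm_num)) (by norm_num))

lemma numeric_95 (L : ℝ) (hL : Real.log ((124846525121166472890127769845656706959834701767553316679575342375728606681436245953703527478773456698735316531921607496638484885416740029028542605893861455745313937474271661656548230159065196413238268640890 : ℕ) : ℝ) ≤ L) :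
    (95 : ℝ) * Real.log L ≤ 1.385 * L := by
  have hc : ((14829559/31250) : ℝ) ≤ Real.log ((124846525121166472890127769845656706959834701767553316679575342375728606681436245953703527478773456698735316531921607496638484885416740029028542605893861455745313937474271661656548230159065196413238268640890 : ℕ) : ℝ) :=
    log_ge_of_pow 124846525121166472890127769845656706959834701767553316679575342375728606681436245953703527478773456698735316531921607496638484885416740029028542605893861455745313937474271661656548230159065196413238268640890 5477 8 (14829559/31250) (by norm_num) (by norm_num) (by decide +kernel) (by norm_num)
  have hu : Real.log ((14829559/31250) : ℝ) ≤ ((6173343/1000000) : ℝ) :=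
    log_le_of_pow (14829559/31250) 285 32 (6173343/1000000) (by norm_num) (by norm_num) (by exact_mod_cast real_pow_aux 14829559 31250 32 285 (by norm_num) (by decide +kernel)) (by norm_num)
  exact concave 95 (14829559/31250) L (by norm_num) (le_trans hc hL) (by norm_num) (by norm_num)
    (le_trans (mul_le_mul_of_nonneg_left hu (by norm_num)) (by norm_num))

lemma numeric_96 (L : ℝ) (hL : Real.log ((62797802135946735863734268232365323600796854989079318289826397214991489160762431714712874321823048719463864215556568570809157897364620234601356930764612312239892910549558645813243759770009793795858849126367670 : ℕ) : ℝ) ≤ L) :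
    (96 : ℝ) * Real.log L ≤ 1.385 * L := by
  have hc : ((480697569/1000000) : ℝ) ≤ Real.log ((62797802135946735863734268232365323600796854989079318289826397214991489160762431714712874321823048719463864215556568570809157897364620234601356930764612312239892910549558645813243759770009793795858849126367670 : ℕ) : ℝ) :=
    log_ge_of_pow 62797802135946735863734268232365323600796854989079318289826397214991489160762431714712874321823048719463864215556568570809157897364620234601356930764612312239892910549558645813243759770009793795858849126367670 5548 8 (480697569/1000000) (by norm_num) (by norm_num) (by decide +kernel) (by norm_num)
  have hu : Real.log ((480697569/1000000) : ℝ) ≤ ((6195003/1000000) : ℝ) :=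
    log_le_of_pow (480697569/1000000) 286 32 (6195003/1000000) (by norm_num) (by norm_num) (by exact_mod_cast real_pow_aux 480697569 1000000 32 286 (by norm_num) (by decide +kernel)) (by norm_num)
  exact concave 96 (480697569/1000000) L (by norm_num) (le_trans hc hL) (by norm_num) (by norm_num)
    (le_trans (mul_le_mul_of_nonneg_left hu (by norm_num)) (by norm_num))

lemma numeric_97 (L : ℝ) (hL : Real.log ((31964081287196888554640742530273949712805599189441373009521636182430667982828077742788853029807931798207106885718293402541861369758591699412090677759187666930105491469725350718941073722934985042092154205321144030 : ℕ) : ℝ) ≤ L) :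
    (97 : ℝ) * Real.log L ≤ 1.385 * L := by
  have hc : ((243467947/500000) : ℝ) ≤ Real.log ((31964081287196888554640742530273949712805599189441373009521636182430667982828077742788853029807931798207106885718293402541861369758591699412090677759187666930105491469725350718941073722934985042092154205321144030 : ℕ) : ℝ) :=
    log_ge_of_pow 31964081287196888554640742530273949712805599189441373009521636182430667982828077742788853029807931798207106885718293402541861369758591699412090677759187666930105491469725350718941073722934985042092154205321144030 5620 8 (243467947/500000) (by norm_num) (by norm_num) (by decide +kernel) (by norm_num)
  have hu : Real.log ((243467947/500000) : ℝ) ≤ ((6195003/1000000) : ℝ) :=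
    log_le_of_pow (243467947/500000) 286 32 (6195003/1000000) (by norm_num) (by norm_num) (by exact_mod_cast real_pow_aux 243467947 500000 32 286 (by norm_num) (by decide +kernel)) (by norm_num)
  exact concave 97 (243467947/500000) L (by norm_num) (le_trans hc hL) (by norm_num) (by norm_num)
    (le_trans (mul_le_mul_of_nonneg_left hu (by norm_num)) (by norm_num))

lemma numeric_98 (L : ℝ) (hL : Real.log ((16653286350629578936967826858272727800371717177698955337960772451046378019053428503992992428529932466865902687459230862724309773644226275393699243112536774470584961055726907724568299409649127206930012340972316039630 : ℕ) : ℝ) ≤ L) :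
    (98 : ℝ) * Real.log L ≤ 1.385 * L := by
  have hc : ((246630431/500000) : ℝ) ≤ Real.log ((16653286350629578936967826858272727800371717177698955337960772451046378019053428503992992428529932466865902687459230862724309773644226275393699243112536774470584961055726907724568299409649127206930012340972316039630 : ℕ) : ℝ) :=
    log_ge_of_pow 16653286350629578936967826858272727800371717177698955337960772451046378019053428503992992428529932466865902687459230862724309773644226275393699243112536774470584961055726907724568299409649127206930012340972316039630 5693 8 (246630431/500000) (by norm_num) (by norm_num) (by decide +kernel) (by norm_num)
  have hu : Real.log ((246630431/500000) : ℝ) ≤ ((777083/125000) : ℝ) :=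
    log_le_of_pow (246630431/500000) 287 32 (777083/125000) (by norm_num) (by norm_num) (by exact_mod_cast real_pow_aux 246630431 500000 32 287 (by norm_num) (by decide +kernel)) (by norm_num)
  exact concave 98 (246630431/500000) L (by norm_num) (le_trans hc hL) (by norm_num) (by norm_num)
    (le_trans (mul_le_mul_of_nonneg_left hu (by norm_num)) (by norm_num))

lemma numeric_99 (L : ℝ) (hL : Real.log ((8709668761379269784034173446876636639594408083936553641753483991897255703964943107588335040121154680170867105541177741204814011615930342030904704147856733048115934632145172739949220591246493529224396454328521288726490 : ℕ) : ℝ) ≤ L) :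
    (99 : ℝ) * Real.log L ≤ 1.385 * L := by
  have hc : ((249749593/500000) : ℝ) ≤ Real.log ((8709668761379269784034173446876636639594408083936553641753483991897255703964943107588335040121154680170867105541177741204814011615930342030904704147856733048115934632145172739949220591246493529224396454328521288726490 : ℕ) : ℝ) :=
    log_ge_of_pow 8709668761379269784034173446876636639594408083936553641753483991897255703964943107588335040121154680170867105541177741204814011615930342030904704147856733048115934632145172739949220591246493529224396454328521288726490 5765 8 (249749593/500000) (by norm_num) (by norm_num) (by decide +kernel) (by norm_num)
  have hu : Real.log ((249749593/500000) : ℝ) ≤ ((777083/125000) : ℝ) :=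
    log_le_of_pow (249749593/500000) 287 32 (777083/125000) (by norm_num) (by norm_num) (by exact_mod_cast real_pow_aux 249749593 500000 32 287 (by norm_num) (by decide +kernel)) (by norm_num)
  exact concave 99 (249749593/500000) L (by norm_num) (le_trans hc hL) (by norm_num) (by norm_num)
    (le_trans (mul_le_mul_of_nonneg_left hu (by norm_num)) (by norm_num))

lemma numeric_100 (L : ℝ) (hL : Real.log ((4711930799906184953162487834760260422020574773409675520188634839616415335845034221205289256705544681972439104097777157991804380284218315038719444943990492579030720635990538452312528339864352999310398481791730017201031090 : ℕ) : ℝ) ≤ L) :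
    (100 : ℝ) * Real.log L ≤ 1.385 * L := by
  have hc : ((505737511/1000000) : ℝ) ≤ Real.log ((4711930799906184953162487834760260422020574773409675520188634839616415335845034221205289256705544681972439104097777157991804380284218315038719444943990492579030720635990538452312528339864352999310398481791730017201031090 : ℕ) : ℝ) :=
    log_ge_of_pow 4711930799906184953162487834760260422020574773409675520188634839616415335845034221205289256705544681972439104097777157991804380284218315038719444943990492579030720635990538452312528339864352999310398481791730017201031090 5837 8 (505737511/1000000) (by norm_num) (by norm_num) (by decide +kernel) (by norm_num)
  have hu : Real.log ((505737511/1000000) : ℝ) ≤ ((249533/40000) : ℝ) :=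
    log_le_of_pow (505737511/1000000) 288 32 (249533/40000) (by norm_num) (by norm_num) (by exact_mod_cast real_pow_aux 505737511 1000000 32 288 (by norm_num) (by decide +kernel)) (by norm_num)
  exact concave 100 (505737511/1000000) L (by norm_num) (le_trans hc hL) (by norm_num) (by norm_num)
    (le_trans (mul_le_mul_of_nonneg_left hu (by norm_num)) (by norm_num))

lemma numeric_101 (L : ℝ) (hL : Real.log ((2577426147548683169379880845613862450845254401055092509543183257270179188707233718999293223417932941038924189941484105421516996015467418326179536384362799440729804187886824533414953001905801090622787969540076319408964006230 : ℕ) : ℝ) ≤ L) :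
    (101 : ℝ) * Real.log L ≤ 1.385 * L := by
  have hc : ((512062479/1000000) : ℝ) ≤ Real.log ((2577426147548683169379880845613862450845254401055092509543183257270179188707233718999293223417932941038924189941484105421516996015467418326179536384362799440729804187886824533414953001905801090622787969540076319408964006230 : ℕ) : ℝ) :=
    log_ge_of_pow 2577426147548683169379880845613862450845254401055092509543183257270179188707233718999293223417932941038924189941484105421516996015467418326179536384362799440729804187886824533414953001905801090622787969540076319408964006230 5910 8 (512062479/1000000) (by norm_num) (by norm_num) (by decide +kernel) (by norm_num)
  have hu : Real.log ((512062479/1000000) : ℝ) ≤ ((3129993/500000) : ℝ) :=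
    log_le_of_pow (512062479/1000000) 289 32 (3129993/500000) (by norm_num) (by norm_num) (by exact_mod_cast real_pow_aux 512062479 1000000 32 289 (by norm_num) (by decide +kernel)) (by norm_num)
  exact concave 101 (512062479/1000000) L (by norm_num) (le_trans hc hL) (by norm_num) (by norm_num)
    (le_trans (mul_le_mul_of_nonneg_left hu (by norm_num)) (by norm_num))

lemma numeric_102 (L : ℝ) (hL : Real.log ((1435626364184616525344593631006921385120806701387686527815553074299489808109929181482606325443788648158680773797406646719784966780615352007682001766090079288486500932652961265112128822061531207476892899033822509910792951470110 : ℕ) : ℝ) ≤ L) :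
    (102 : ℝ) * Real.log L ≤ 1.385 * L := by
  have hc : ((518387447/1000000) : ℝ) ≤ Real.log ((1435626364184616525344593631006921385120806701387686527815553074299489808109929181482606325443788648158680773797406646719784966780615352007682001766090079288486500932652961265112128822061531207476892899033822509910792951470110 : ℕ) : ℝ) :=
    log_ge_of_pow 1435626364184616525344593631006921385120806701387686527815553074299489808109929181482606325443788648158680773797406646719784966780615352007682001766090079288486500932652961265112128822061531207476892899033822509910792951470110 5983 8 (518387447/1000000) (by norm_num) (by norm_num) (by decide +kernel) (by norm_num)
  have hu : Real.log ((518387447/1000000) : ℝ) ≤ ((3129993/500000) : ℝ) :=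
    log_le_of_pow (518387447/1000000) 289 32 (3129993/500000) (by norm_num) (by norm_num) (by exact_mod_cast real_pow_aux 518387447 1000000 32 289 (by norm_num) (by decide +kernel)) (by norm_num)
  exact concave 102 (518387447/1000000) L (by norm_num) (le_trans hc hL) (by norm_num) (by norm_num)
    (le_trans (mul_le_mul_of_nonneg_left hu (by norm_num)) (by norm_num))

lemma numeric_103 (L : ℝ) (hL : Real.log ((808257643035939103769006214256896739823014172881267515160156380830612761965890129174707361224853008913337275647939942103238936297486443180324966994308714639417900025083617192258128526820642069809490702156042073079776431677671930 : ℕ) : ℝ) ≤ L) :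
    (103 : ℝ) * Real.log L ≤ 1.385 * L := by
  have hc : ((104942483/200000) : ℝ) ≤ Real.log ((808257643035939103769006214256896739823014172881267515160156380830612761965890129174707361224853008913337275647939942103238936297486443180324966994308714639417900025083617192258128526820642069809490702156042073079776431677671930 : ℕ) : ℝ) :=
    log_ge_of_pow 808257643035939103769006214256896739823014172881267515160156380830612761965890129174707361224853008913337275647939942103238936297486443180324966994308714639417900025083617192258128526820642069809490702156042073079776431677671930 6056 8 (104942483/200000) (by norm_num) (by norm_num) (by decide +kernel) (by norm_num)
  have hu : Real.log ((104942483/200000) : ℝ) ≤ ((6281647/1000000) : ℝ) :=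
    log_le_of_pow (104942483/200000) 290 32 (6281647/1000000) (by norm_num) (by norm_num) (by exact_mod_cast real_pow_aux 104942483 200000 32 290 (by norm_num) (by decide +kernel)) (by norm_num)
  exact concave 103 (104942483/200000) L (by norm_num) (le_trans hc hL) (by norm_num) (by norm_num)
    (le_trans (mul_le_mul_of_nonneg_left hu (by norm_num)) (by norm_num))

lemma numeric_104 (L : ℝ) (hL : Real.log ((459898598887449350044564535912174244959295064369441216126128980692618661558591483500408488536941362071688909843677827056742954753269786169604906219761658629828785114272578182394875131760945337721600209526787939582392789624595328170 : ℕ) : ℝ) ≤ L) :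
    (104 : ℝ) * Real.log L ≤ 1.385 * L := by
  have hc : ((531037383/1000000) : ℝ) ≤ Real.log ((459898598887449350044564535912174244959295064369441216126128980692618661558591483500408488536941362071688909843677827056742954753269786169604906219761658629828785114272578182394875131760945337721600209526787939582392789624595328170 : ℕ) : ℝ) :=
    log_ge_of_pow 459898598887449350044564535912174244959295064369441216126128980692618661558591483500408488536941362071688909843677827056742954753269786169604906219761658629828785114272578182394875131760945337721600209526787939582392789624595328170 6129 8 (531037383/1000000) (by norm_num) (by norm_num) (by decide +kernel) (by norm_num)
  have hu : Real.log ((531037383/1000000) : ℝ) ≤ ((6281647/1000000) : ℝ) :=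
    log_le_of_pow (531037383/1000000) 290 32 (6281647/1000000) (by norm_num) (by norm_num) (by exact_mod_cast real_pow_aux 531037383 1000000 32 290 (by norm_num) (by decide +kernel)) (by norm_num)
  exact concave 104 (531037383/1000000) L (by norm_num) (le_trans hc hL) (by norm_num) (by norm_num)
    (le_trans (mul_le_mul_of_nonneg_left hu (by norm_num)) (by norm_num))

lemma numeric_105 (L : ℝ) (hL : Real.log ((262602099964733578875446350005851493871757481754950934408019647975485255749955737078733246954593517742934367520740039249400227164117047902844401451483907077632236300249642142147473700235499787839033719639795913501546282875643932385070 : ℕ) : ℝ) ≤ L) :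
    (105 : ℝ) * Real.log L ≤ 1.385 * L := by
  have hc : ((268724497/500000) : ℝ) ≤ Real.log ((262602099964733578875446350005851493871757481754950934408019647975485255749955737078733246954593517742934367520740039249400227164117047902844401451483907077632236300249642142147473700235499787839033719639795913501546282875643932385070 : ℕ) : ℝ) :=
    log_ge_of_pow 262602099964733578875446350005851493871757481754950934408019647975485255749955737078733246954593517742934367520740039249400227164117047902844401451483907077632236300249642142147473700235499787839033719639795913501546282875643932385070 6203 8 (268724497/500000) (by norm_num) (by norm_num) (by decide +kernel) (by norm_num)
  have hu : Real.log ((268724497/500000) : ℝ) ≤ ((1575827/250000) : ℝ) :=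
    log_le_of_pow (268724497/500000) 291 32 (1575827/250000) (by norm_num) (by norm_num) (by exact_mod_cast real_pow_aux 268724497 500000 32 291 (by norm_num) (by decide +kernel)) (by norm_num)
  exact concave 105 (268724497/500000) L (by norm_num) (le_trans hc hL) (by norm_num) (by norm_num)
    (le_trans (mul_le_mul_of_nonneg_left hu (by norm_num)) (by norm_num))

lemma numeric_106 (L : ℝ) (hL : Real.log ((151521411679651275011132543953376311964004066972606689153427336881854992567724460294429083492800459737673130059467002646903931073695536639941219637506214383793800345244043516019092325035883377583122456232162242090392205219246548986185390 : ℕ) : ℝ) ≤ L) :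
    (106 : ℝ) * Real.log L ≤ 1.385 * L := by
  have hc : ((271886981/500000) : ℝ) ≤ Real.log ((151521411679651275011132543953376311964004066972606689153427336881854992567724460294429083492800459737673130059467002646903931073695536639941219637506214383793800345244043516019092325035883377583122456232162242090392205219246548986185390 : ℕ) : ℝ) :=
    log_ge_of_pow 151521411679651275011132543953376311964004066972606689153427336881854992567724460294429083492800459737673130059467002646903931073695536639941219637506214383793800345244043516019092325035883377583122456232162242090392205219246548986185390 6276 8 (271886981/500000) (by norm_num) (by norm_num) (by decide +kernel) (by norm_num)
  have hu : Real.log ((271886981/500000) : ℝ) ≤ ((1575827/250000) : ℝ) :=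
    log_le_of_pow (271886981/500000) 291 32 (1575827/250000) (by norm_num) (by norm_num) (by exact_mod_cast real_pow_aux 271886981 500000 32 291 (by norm_num) (by decide +kernel)) (by norm_num)
  exact concave 106 (271886981/500000) L (by norm_num) (le_trans hc hL) (by norm_num) (by norm_num)
    (le_trans (mul_le_mul_of_nonneg_left hu (by norm_num)) (by norm_num))

lemma numeric_107 (L : ℝ) (hL : Real.log ((88943068655955298431534803300631895122870387312920126533061846749648880637254258192829872010273869866014127344907130553732607540259280007645495927216147843286960802658253543903207194796063542641292881808279236107060224463697724254890823930 : ℕ) : ℝ) ≤ L) :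
    (107 : ℝ) * Real.log L ≤ 1.385 * L := by
  have hc : ((275092787/500000) : ℝ) ≤ Real.log ((88943068655955298431534803300631895122870387312920126533061846749648880637254258192829872010273869866014127344907130553732607540259280007645495927216147843286960802658253543903207194796063542641292881808279236107060224463697724254890823930 : ℕ) : ℝ) :=
    log_ge_of_pow 88943068655955298431534803300631895122870387312920126533061846749648880637254258192829872010273869866014127344907130553732607540259280007645495927216147843286960802658253543903207194796063542641292881808279236107060224463697724254890823930 6350 8 (275092787/500000) (by norm_num) (by norm_num) (by decide +kernel) (by norm_num)
  have hu : Real.log ((275092787/500000) : ℝ) ≤ ((6324969/1000000) : ℝ) :=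
    log_le_of_pow (275092787/500000) 292 32 (6324969/1000000) (by norm_num) (by norm_num) (by exact_mod_cast real_pow_aux 275092787 500000 32 292 (by norm_num) (by decide +kernel)) (by norm_num)
  exact concave 107 (275092787/500000) L (by norm_num) (le_trans hc hL) (by norm_num) (by norm_num)
    (le_trans (mul_le_mul_of_nonneg_left hu (by norm_num)) (by norm_num))

lemma numeric_108 (L : ℝ) (hL : Real.log ((52743239712981491969900138357274713807862139676561635034105675122541786217891775108348114102092404830546377515529928418363436271373753044533779084839175671069167755976344351534601866514065680786286678912309587011486713106972750483150258590490 : ℕ) : ℝ) ≤ L) :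
    (108 : ℝ) * Real.log L ≤ 1.385 * L := by
  have hc : ((278255271/500000) : ℝ) ≤ Real.log ((52743239712981491969900138357274713807862139676561635034105675122541786217891775108348114102092404830546377515529928418363436271373753044533779084839175671069167755976344351534601866514065680786286678912309587011486713106972750483150258590490 : ℕ) : ℝ) :=
    log_ge_of_pow 52743239712981491969900138357274713807862139676561635034105675122541786217891775108348114102092404830546377515529928418363436271373753044533779084839175671069167755976344351534601866514065680786286678912309587011486713106972750483150258590490 6423 8 (278255271/500000) (by norm_num) (by norm_num) (by decide +kernel) (by norm_num)
  have hu : Real.log ((278255271/500000) : ℝ) ≤ ((6324969/1000000) : ℝ) :=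
    log_le_of_pow (278255271/500000) 292 32 (6324969/1000000) (by norm_num) (by norm_num) (by exact_mod_cast real_pow_aux 278255271 500000 32 292 (by norm_num) (by decide +kernel)) (by norm_num)
  exact concave 108 (278255271/500000) L (by norm_num) (le_trans hc hL) (by norm_num) (by norm_num)
    (le_trans (mul_le_mul_of_nonneg_left hu (by norm_num)) (by norm_num))

lemma numeric_109 (L : ℝ) (hL : Real.log ((31593200588075913689970182876007553570909421666260419385429299398402529944517173289900520347153350493497280131802427122599698326552878073675733671818666226970431485829830266569226518041925342790985720668473442619880541151076677539407004895703510 : ℕ) : ℝ) ≤ L) :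
    (109 : ℝ) * Real.log L ≤ 1.385 * L := by
  have hc : ((562922153/1000000) : ℝ) ≤ Real.log ((31593200588075913689970182876007553570909421666260419385429299398402529944517173289900520347153350493497280131802427122599698326552878073675733671818666226970431485829830266569226518041925342790985720668473442619880541151076677539407004895703510 : ℕ) : ℝ) :=
    log_ge_of_pow 31593200588075913689970182876007553570909421666260419385429299398402529944517173289900520347153350493497280131802427122599698326552878073675733671818666226970431485829830266569226518041925342790985720668473442619880541151076677539407004895703510 6497 8 (562922153/1000000) (by norm_num) (by norm_num) (by decide +kernel) (by norm_num)
  have hu : Real.log ((562922153/1000000) : ℝ) ≤ ((6346629/1000000) : ℝ) :=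
    log_le_of_pow (562922153/1000000) 293 32 (6346629/1000000) (by norm_num) (by norm_num) (by exact_mod_cast real_pow_aux 562922153 1000000 32 293 (by norm_num) (by decide +kernel)) (by norm_num)
  exact concave 109 (562922153/1000000) L (by norm_num) (le_trans hc hL) (by norm_num) (by norm_num)
    (le_trans (mul_le_mul_of_nonneg_left hu (by norm_num)) (by norm_num))

lemma numeric_110 (L : ℝ) (hL : Real.log ((18987513553433624127672079908480539696116562421422512050643008938439920496654821147230212728639163646591865359213258700682418694258279722279115936763018402409229322983727990208105137343197131017382418121752539014548205231797083201183609942317809510 : ℕ) : ℝ) ≤ L) :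
    (110 : ℝ) * Real.log L ≤ 1.385 * L := by
  have hc : ((113866753/200000) : ℝ) ≤ Real.log ((18987513553433624127672079908480539696116562421422512050643008938439920496654821147230212728639163646591865359213258700682418694258279722279115936763018402409229322983727990208105137343197131017382418121752539014548205231797083201183609942317809510 : ℕ) : ℝ) :=
    log_ge_of_pow 18987513553433624127672079908480539696116562421422512050643008938439920496654821147230212728639163646591865359213258700682418694258279722279115936763018402409229322983727990208105137343197131017382418121752539014548205231797083201183609942317809510 6571 8 (113866753/200000) (by norm_num) (by norm_num) (by decide +kernel) (by norm_num)
  have hu : Real.log ((113866753/200000) : ℝ) ≤ ((6346629/1000000) : ℝ) :=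
    log_le_of_pow (113866753/200000) 293 32 (6346629/1000000) (by norm_num) (by norm_num) (by exact_mod_cast real_pow_aux 113866753 200000 32 293 (by norm_num) (by decide +kernel)) (by norm_num)
  exact concave 110 (113866753/200000) L (by norm_num) (le_trans hc hL) (by norm_num) (by norm_num)
    (le_trans (mul_le_mul_of_nonneg_left hu (by norm_num)) (by norm_num))

lemma numeric_111 (L : ℝ) (hL : Real.log ((11525420726934209845496952504447687595542753389803464814740306425633031741469476436368739126283972333481262273042448031314228147414775791423423373615152170262402199051122890056319818367320658527551127799903791181830760575700829503118451234986910372570 : ℕ) : ℝ) ≤ L) :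
    (111 : ℝ) * Real.log L ≤ 1.385 * L := by
  have hc : ((17992043/31250) : ℝ) ≤ Real.log ((11525420726934209845496952504447687595542753389803464814740306425633031741469476436368739126283972333481262273042448031314228147414775791423423373615152170262402199051122890056319818367320658527551127799903791181830760575700829503118451234986910372570 : ℕ) : ℝ) :=
    log_ge_of_pow 11525420726934209845496952504447687595542753389803464814740306425633031741469476436368739126283972333481262273042448031314228147414775791423423373615152170262402199051122890056319818367320658527551127799903791181830760575700829503118451234986910372570 6645 8 (17992043/31250) (by norm_num) (by norm_num) (by decide +kernel) (by norm_num)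
  have hu : Real.log ((17992043/31250) : ℝ) ≤ ((636829/100000) : ℝ) :=
    log_le_of_pow (17992043/31250) 294 32 (636829/100000) (by norm_num) (by norm_num) (by exact_mod_cast real_pow_aux 17992043 31250 32 294 (by norm_num) (by decide +kernel)) (by norm_num)
  exact concave 111 (17992043/31250) L (by norm_num) (le_trans hc hL) (by norm_num) (by norm_num)
    (le_trans (mul_le_mul_of_nonneg_left hu (by norm_num)) (by norm_num))

lemma numeric_112 (L : ℝ) (hL : Real.log ((7065082905610670635289631885226432496067707827949523931435807838913048457520789055494037084412075040424013773375020643195621854365257560142558528026088280370852548018338331604524048659167563677388841341341023994462256232904608485411610607046976058385410 : ℕ) : ℝ) ≤ L) :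
    (112 : ℝ) * Real.log L ≤ 1.385 * L := by
  have hc : ((145539247/250000) : ℝ) ≤ Real.log ((7065082905610670635289631885226432496067707827949523931435807838913048457520789055494037084412075040424013773375020643195621854365257560142558528026088280370852548018338331604524048659167563677388841341341023994462256232904608485411610607046976058385410 : ℕ) : ℝ) :=
    log_ge_of_pow 7065082905610670635289631885226432496067707827949523931435807838913048457520789055494037084412075040424013773375020643195621854365257560142558528026088280370852548018338331604524048659167563677388841341341023994462256232904608485411610607046976058385410 6719 8 (145539247/250000) (by norm_num) (by norm_num) (by decide +kernel) (by norm_num)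
  have hu : Real.log ((145539247/250000) : ℝ) ≤ ((636829/100000) : ℝ) :=
    log_le_of_pow (145539247/250000) 294 32 (636829/100000) (by norm_num) (by norm_num) (by exact_mod_cast real_pow_aux 145539247 250000 32 294 (by norm_num) (by decide +kernel)) (by norm_num)
  exact concave 112 (145539247/250000) L (by norm_num) (le_trans hc hL) (by norm_num) (by norm_num)
    (le_trans (mul_le_mul_of_nonneg_left hu (by norm_num)) (by norm_num))

lemma numeric_113 (L : ℝ) (hL : Real.log ((4359156152761783781973702873184708850073775729844856265695893436609350898290326847239820881082250299941616498172387736851698684143363914607958611792096468988816022127314750599991338022706386788948915107607411804583212095702143435498963744547984228023797970 : ℕ) : ℝ) ≤ L) :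
    (113 : ℝ) * Real.log L ≤ 1.385 * L := by
  have hc : ((588568599/1000000) : ℝ) ≤ Real.log ((4359156152761783781973702873184708850073775729844856265695893436609350898290326847239820881082250299941616498172387736851698684143363914607958611792096468988816022127314750599991338022706386788948915107607411804583212095702143435498963744547984228023797970 : ℕ) : ℝ) :=
    log_ge_of_pow 4359156152761783781973702873184708850073775729844856265695893436609350898290326847239820881082250299941616498172387736851698684143363914607958611792096468988816022127314750599991338022706386788948915107607411804583212095702143435498963744547984228023797970 6793 8 (588568599/1000000) (by norm_num) (by norm_num) (by decide +kernel) (by norm_num)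
  have hu : Real.log ((588568599/1000000) : ℝ) ≤ ((6389951/1000000) : ℝ) :=
    log_le_of_pow (588568599/1000000) 295 32 (6389951/1000000) (by norm_num) (by norm_num) (by exact_mod_cast real_pow_aux 588568599 1000000 32 295 (by norm_num) (by decide +kernel)) (by norm_num)
  exact concave 113 (588568599/1000000) L (by norm_num) (le_trans hc hL) (by norm_num) (by norm_num)
    (le_trans (mul_le_mul_of_nonneg_left hu (by norm_num)) (by norm_num))

lemma numeric_114 (L : ℝ) (hL : Real.log ((2698317658559544161041722078501334778195667176773966028465758037261188206041712318441449125389912935663860612368708009111201485484742263142326380699307714304077117696807830621394638236055253422359378451608987907037008287239626786573858557875202237146730943430 : ℕ) : ℝ) ≤ L) :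
    (114 : ℝ) * Real.log L ≤ 1.385 * L := by
  have hc : ((59498021/100000) : ℝ) ≤ Real.log ((2698317658559544161041722078501334778195667176773966028465758037261188206041712318441449125389912935663860612368708009111201485484742263142326380699307714304077117696807830621394638236055253422359378451608987907037008287239626786573858557875202237146730943430 : ℕ) : ℝ) :=
    log_ge_of_pow 2698317658559544161041722078501334778195667176773966028465758037261188206041712318441449125389912935663860612368708009111201485484742263142326380699307714304077117696807830621394638236055253422359378451608987907037008287239626786573858557875202237146730943430 6867 8 (59498021/100000) (by norm_num) (by norm_num) (by decide +kernel) (by norm_num)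
  have hu : Real.log ((59498021/100000) : ℝ) ≤ ((6389951/1000000) : ℝ) :=
    log_le_of_pow (59498021/100000) 295 32 (6389951/1000000) (by norm_num) (by norm_num) (by exact_mod_cast real_pow_aux 59498021 100000 32 295 (by norm_num) (by decide +kernel)) (by norm_num)
  exact concave 114 (59498021/100000) L (by norm_num) (le_trans hc hL) (by norm_num) (by norm_num)
    (le_trans (mul_le_mul_of_nonneg_left hu (by norm_num)) (by norm_num))

lemma numeric_115 (L : ℝ) (hL : Real.log ((1702638442551072365617326631534342245041465988544372563961893321511809758012320472936554398121035062403896046404654753749168137340872368042807946221263167725872661266685741122100016726950864909508767802965271369340352229248204502328104750019252611639587225304330 : ℕ) : ℝ) ≤ L) :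
    (115 : ℝ) * Real.log L ≤ 1.385 * L := by
  have hc : ((120295693/200000) : ℝ) ≤ Real.log ((1702638442551072365617326631534342245041465988544372563961893321511809758012320472936554398121035062403896046404654753749168137340872368042807946221263167725872661266685741122100016726950864909508767802965271369340352229248204502328104750019252611639587225304330 : ℕ) : ℝ) :=
    log_ge_of_pow 1702638442551072365617326631534342245041465988544372563961893321511809758012320472936554398121035062403896046404654753749168137340872368042807946221263167725872661266685741122100016726950864909508767802965271369340352229248204502328104750019252611639587225304330 6942 8 (120295693/200000) (by norm_num) (by norm_num) (by decide +kernel) (by norm_num)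
  have hu : Real.log ((120295693/200000) : ℝ) ≤ ((1602903/250000) : ℝ) :=
    log_le_of_pow (120295693/200000) 296 32 (1602903/250000) (by norm_num) (by norm_num) (by exact_mod_cast real_pow_aux 120295693 200000 32 296 (by norm_num) (by decide +kernel)) (by norm_num)
  exact concave 115 (120295693/200000) L (by norm_num) (le_trans hc hL) (by norm_num) (by norm_num)
    (le_trans (mul_le_mul_of_nonneg_left hu (by norm_num)) (by norm_num))

lemma numeric_116 (L : ℝ) (hL : Real.log ((1091391241675237386360706370813513379071579698656942813499573619089070054885897423152331369195583475000897365745383697153216776035499187915439893527829690512284375871945560059266110721975504406995120161700738947747165778948099085992315144762340924060975411420075530 : ℕ) : ℝ) ≤ L) :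
    (116 : ℝ) * Real.log L ≤ 1.385 * L := by
  have hc : ((607890077/1000000) : ℝ) ≤ Real.log ((1091391241675237386360706370813513379071579698656942813499573619089070054885897423152331369195583475000897365745383697153216776035499187915439893527829690512284375871945560059266110721975504406995120161700738947747165778948099085992315144762340924060975411420075530 : ℕ) : ℝ) :=
    log_ge_of_pow 1091391241675237386360706370813513379071579698656942813499573619089070054885897423152331369195583475000897365745383697153216776035499187915439893527829690512284375871945560059266110721975504406995120161700738947747165778948099085992315144762340924060975411420075530 7016 8 (607890077/1000000) (by norm_num) (by norm_num) (by decide +kernel) (by norm_num)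
  have hu : Real.log ((607890077/1000000) : ℝ) ≤ ((1602903/250000) : ℝ) :=
    log_le_of_pow (607890077/1000000) 296 32 (1602903/250000) (by norm_num) (by norm_num) (by exact_mod_cast real_pow_aux 607890077 1000000 32 296 (by norm_num) (by decide +kernel)) (by norm_num)
  exact concave 116 (607890077/1000000) L (by norm_num) (le_trans hc hL) (by norm_num) (by norm_num)
    (le_trans (mul_le_mul_of_nonneg_left hu (by norm_num)) (by norm_num))

lemma numeric_117 (L : ℝ) (hL : Real.log ((701764568397177639429934196433089102743025746236414229080225837074272045291632043086949070392760174425577006174281717269518386990825977829627851538394490999398853685660995118108109194230249333697862263973575143401427595863627712293058638082185214171207189543108565790 : ℕ) : ℝ) ≤ L) :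
    (117 : ℝ) * Real.log L ≤ 1.385 * L := by
  have hc : ((614388331/1000000) : ℝ) ≤ Real.log ((701764568397177639429934196433089102743025746236414229080225837074272045291632043086949070392760174425577006174281717269518386990825977829627851538394490999398853685660995118108109194230249333697862263973575143401427595863627712293058638082185214171207189543108565790 : ℕ) : ℝ) :=
    log_ge_of_pow 701764568397177639429934196433089102743025746236414229080225837074272045291632043086949070392760174425577006174281717269518386990825977829627851538394490999398853685660995118108109194230249333697862263973575143401427595863627712293058638082185214171207189543108565790 7091 8 (614388331/1000000) (by norm_num) (by norm_num) (by decide +kernel) (by norm_num)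
  have hu : Real.log ((614388331/1000000) : ℝ) ≤ ((6433273/1000000) : ℝ) :=
    log_le_of_pow (614388331/1000000) 297 32 (6433273/1000000) (by norm_num) (by norm_num) (by exact_mod_cast real_pow_aux 614388331 1000000 32 297 (by norm_num) (by decide +kernel)) (by norm_num)
  exact concave 117 (614388331/1000000) L (by norm_num) (le_trans hc hL) (by norm_num) (by norm_num)
    (le_trans (mul_le_mul_of_nonneg_left hu (by norm_num)) (by norm_num))

lemma numeric_118 (L : ℝ) (hL : Real.log ((454041675752973932711167425092208649474737657814960006214906116587054013303685931877256048544115832853348322994760271073378396383064407655769219945341235676611058334622663841415946648666971318902516884790903117780723654523767129853608938839173833568771051634391242066130 : ℕ) : ℝ) ≤ L) :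
    (118 : ℝ) * Real.log L ≤ 1.385 * L := by
  have hc : ((310443293/500000) : ℝ) ≤ Real.log ((454041675752973932711167425092208649474737657814960006214906116587054013303685931877256048544115832853348322994760271073378396383064407655769219945341235676611058334622663841415946648666971318902516884790903117780723654523767129853608938839173833568771051634391242066130 : ℕ) : ℝ) :=
    log_ge_of_pow 454041675752973932711167425092208649474737657814960006214906116587054013303685931877256048544115832853348322994760271073378396383064407655769219945341235676611058334622663841415946648666971318902516884790903117780723654523767129853608938839173833568771051634391242066130 7166 8 (310443293/500000) (by norm_num) (by norm_num) (by decide +kernel) (by norm_num)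
  have hu : Real.log ((310443293/500000) : ℝ) ≤ ((6433273/1000000) : ℝ) :=
    log_le_of_pow (310443293/500000) 297 32 (6433273/1000000) (by norm_num) (by norm_num) (by exact_mod_cast real_pow_aux 310443293 500000 32 297 (by norm_num) (by decide +kernel)) (by norm_num)
  exact concave 118 (310443293/500000) L (by norm_num) (le_trans hc hL) (by norm_num) (by norm_num)
    (le_trans (mul_le_mul_of_nonneg_left hu (by norm_num)) (by norm_num))

lemma numeric_119 (L : ℝ) (hL : Real.log ((296489214266691978060392328585212248107003690553168884058333694131346270687306913515848199699307638853236454915578457010916092838141058199217300624307826896827021092508599488444613161579532271243343525768459735910812546404019935794406637061980513320407496717257481069182890 : ℕ) : ℝ) ≤ L) :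
    (119 : ℝ) * Real.log L ≤ 1.385 * L := by
  have hc : ((627384841/1000000) : ℝ) ≤ Real.log ((296489214266691978060392328585212248107003690553168884058333694131346270687306913515848199699307638853236454915578457010916092838141058199217300624307826896827021092508599488444613161579532271243343525768459735910812546404019935794406637061980513320407496717257481069182890 : ℕ) : ℝ) :=
    log_ge_of_pow 296489214266691978060392328585212248107003690553168884058333694131346270687306913515848199699307638853236454915578457010916092838141058199217300624307826896827021092508599488444613161579532271243343525768459735910812546404019935794406637061980513320407496717257481069182890 7241 8 (627384841/1000000) (by norm_num) (by norm_num) (by decide +kernel) (by norm_num)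
  have hu : Real.log ((627384841/1000000) : ℝ) ≤ ((3227467/500000) : ℝ) :=
    log_le_of_pow (627384841/1000000) 298 32 (3227467/500000) (by norm_num) (by norm_num) (by exact_mod_cast real_pow_aux 627384841 1000000 32 298 (by norm_num) (by decide +kernel)) (by norm_num)
  exact concave 119 (627384841/1000000) L (by norm_num) (le_trans hc hL) (by norm_num) (by norm_num)
    (le_trans (mul_le_mul_of_nonneg_left hu (by norm_num)) (by norm_num))

lemma numeric_120 (L : ℝ) (hL : Real.log ((195386392201750013541798544537654871502515432074538294594441904432557192382935256006943963601843734004282823789366203170193705180334957353284201111418857925009006899963167062885000073480911766749363383481414965965225468080249137688513973823845158278148540336672680024591524510 : ℕ) : ℝ) ≤ L) :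
    (120 : ℝ) * Real.log L ≤ 1.385 * L := by
  have hc : ((158449113/250000) : ℝ) ≤ Real.log ((195386392201750013541798544537654871502515432074538294594441904432557192382935256006943963601843734004282823789366203170193705180334957353284201111418857925009006899963167062885000073480911766749363383481414965965225468080249137688513973823845158278148540336672680024591524510 : ℕ) : ℝ) :=
    log_ge_of_pow 195386392201750013541798544537654871502515432074538294594441904432557192382935256006943963601843734004282823789366203170193705180334957353284201111418857925009006899963167062885000073480911766749363383481414965965225468080249137688513973823845158278148540336672680024591524510 7315 8 (158449113/250000) (by norm_num) (by norm_num) (by decide +kernel) (by norm_num)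
  have hu : Real.log ((158449113/250000) : ℝ) ≤ ((3227467/500000) : ℝ) :=
    log_le_of_pow (158449113/250000) 298 32 (3227467/500000) (by norm_num) (by norm_num) (by exact_mod_cast real_pow_aux 158449113 250000 32 298 (by norm_num) (by decide +kernel)) (by norm_num)
  exact concave 120 (158449113/250000) L (by norm_num) (le_trans hc hL) (by norm_num) (by norm_num)
    (le_trans (mul_le_mul_of_nonneg_left hu (by norm_num)) (by norm_num))

lemma numeric_121 (L : ℝ) (hL : Real.log ((129150405245356758951128837939389870063162700601269812726926098829920304165120204220589959940818708176830946524771060295498039124201406810520856934647865088430953560875653428566985048570882677821329196481215292503014034401044680012107736697561649621856185162540641496254997701110 : ℕ) : ℝ) ≤ L) :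
    (121 : ℝ) * Real.log L ≤ 1.385 * L := by
  have hc : ((640294707/1000000) : ℝ) ≤ Real.log ((129150405245356758951128837939389870063162700601269812726926098829920304165120204220589959940818708176830946524771060295498039124201406810520856934647865088430953560875653428566985048570882677821329196481215292503014034401044680012107736697561649621856185162540641496254997701110 : ℕ) : ℝ) :=
    log_ge_of_pow 129150405245356758951128837939389870063162700601269812726926098829920304165120204220589959940818708176830946524771060295498039124201406810520856934647865088430953560875653428566985048570882677821329196481215292503014034401044680012107736697561649621856185162540641496254997701110 7390 8 (640294707/1000000) (by norm_num) (by norm_num) (by decide +kernel) (by norm_num)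
  have hu : Real.log ((640294707/1000000) : ℝ) ≤ ((3238297/500000) : ℝ) :=
    log_le_of_pow (640294707/1000000) 299 32 (3238297/500000) (by norm_num) (by norm_num) (by exact_mod_cast real_pow_aux 640294707 1000000 32 299 (by norm_num) (by decide +kernel)) (by norm_num)
  exact concave 121 (640294707/1000000) L (by norm_num) (le_trans hc hL) (by norm_num) (by norm_num)
    (le_trans (mul_le_mul_of_nonneg_left hu (by norm_num)) (by norm_num))

lemma numeric_122 (L : ℝ) (hL : Real.log ((86918222730125098774109707933209382552508497504654583965221264512536364703125897440457043040170990603007227011170923578870180330587546783480536717018013204514031746469314757425580937688204042173754549231857891854528445151903069648148506797458990195509212614389851726979613452847030 : ℕ) : ℝ) ≤ L) :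
    (122 : ℝ) * Real.log L ≤ 1.385 * L := by
  have hc : ((323439803/500000) : ℝ) ≤ Real.log ((86918222730125098774109707933209382552508497504654583965221264512536364703125897440457043040170990603007227011170923578870180330587546783480536717018013204514031746469314757425580937688204042173754549231857891854528445151903069648148506797458990195509212614389851726979613452847030 : ℕ) : ℝ) :=
    log_ge_of_pow 86918222730125098774109707933209382552508497504654583965221264512536364703125897440457043040170990603007227011170923578870180330587546783480536717018013204514031746469314757425580937688204042173754549231857891854528445151903069648148506797458990195509212614389851726979613452847030 7466 8 (323439803/500000) (by norm_num) (by norm_num) (by decide +kernel) (by norm_num)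
  have hu : Real.log ((323439803/500000) : ℝ) ≤ ((3238297/500000) : ℝ) :=
    log_le_of_pow (323439803/500000) 299 32 (3238297/500000) (by norm_num) (by norm_num) (by exact_mod_cast real_pow_aux 323439803 500000 32 299 (by norm_num) (by decide +kernel)) (by norm_num)
  exact concave 122 (323439803/500000) L (by norm_num) (le_trans hc hL) (by norm_num) (by norm_num)
    (le_trans (mul_le_mul_of_nonneg_left hu (by norm_num)) (by norm_num))

lemma numeric_123 (L : ℝ) (hL : Real.log ((58843636788294691870072272270782751988048252810651153344454796074987118904016232567189418138195760638235892686562715262895112083807769172416323357421194939455999492359726090777118294814914136551631829829967792785515757367838378151796539101879736362359736939941929619165198307577439310 : ℕ) : ℝ) ≤ L) :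
    (123 : ℝ) * Real.log L ≤ 1.385 * L := by
  have hc : ((32668893/50000) : ℝ) ≤ Real.log ((58843636788294691870072272270782751988048252810651153344454796074987118904016232567189418138195760638235892686562715262895112083807769172416323357421194939455999492359726090777118294814914136551631829829967792785515757367838378151796539101879736362359736939941929619165198307577439310 : ℕ) : ℝ) :=
    log_ge_of_pow 58843636788294691870072272270782751988048252810651153344454796074987118904016232567189418138195760638235892686562715262895112083807769172416323357421194939455999492359726090777118294814914136551631829829967792785515757367838378151796539101879736362359736939941929619165198307577439310 7541 8 (32668893/50000) (by norm_num) (by norm_num) (by decide +kernel) (by norm_num)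
  have hu : Real.log ((32668893/50000) : ℝ) ≤ ((1299651/200000) : ℝ) :=
    log_le_of_pow (32668893/50000) 300 32 (1299651/200000) (by norm_num) (by norm_num) (by exact_mod_cast real_pow_aux 32668893 50000 32 300 (by norm_num) (by decide +kernel)) (by norm_num)
  exact concave 123 (32668893/50000) L (by norm_num) (le_trans hc hL) (by norm_num) (by norm_num)
    (le_trans (mul_le_mul_of_nonneg_left hu (by norm_num)) (by norm_num))

lemma numeric_124 (L : ℝ) (hL : Real.log ((40190203926405274547259361960944619607836956669674737734262625719216202211443086843390372588387704515915114704922334524557361553240706344760348853118676143648447653281692920000771795358586355264764539773868002472507262282233612277677036206583859935491700329980337929889830444075391048730 : ℕ) : ℝ) ≤ L) :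
    (124 : ℝ) * Real.log L ≤ 1.385 * L := by
  have hc : ((131975223/200000) : ℝ) ≤ Real.log ((40190203926405274547259361960944619607836956669674737734262625719216202211443086843390372588387704515915114704922334524557361553240706344760348853118676143648447653281692920000771795358586355264764539773868002472507262282233612277677036206583859935491700329980337929889830444075391048730 : ℕ) : ℝ) :=
    log_ge_of_pow 40190203926405274547259361960944619607836956669674737734262625719216202211443086843390372588387704515915114704922334524557361553240706344760348853118676143648447653281692920000771795358586355264764539773868002472507262282233612277677036206583859935491700329980337929889830444075391048730 7616 8 (131975223/200000) (by norm_num) (by norm_num) (by decide +kernel) (by norm_num)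
  have hu : Real.log ((131975223/200000) : ℝ) ≤ ((1299651/200000) : ℝ) :=
    log_le_of_pow (131975223/200000) 300 32 (1299651/200000) (by norm_num) (by norm_num) (by exact_mod_cast real_pow_aux 131975223 200000 32 300 (by norm_num) (by decide +kernel)) (by norm_num)
  exact concave 124 (131975223/200000) L (by norm_num) (le_trans hc hL) (by norm_num) (by norm_num)
    (le_trans (mul_le_mul_of_nonneg_left hu (by norm_num)) (by norm_num))

lemma numeric_125 (L : ℝ) (hL : Real.log ((27771430913146044712156219115012732149015337058745243774375474371978395728107173008782747458575903820497344261101333156469136833289328084229401057505005215261077328417649807720533310592783171487952296983742789708502518237023426083874832018749447215424764928016413509553872836856095214672430 : ℕ) : ℝ) ≤ L) :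
    (125 : ℝ) * Real.log L ≤ 1.385 * L := by
  have hc : ((666461013/1000000) : ℝ) ≤ Real.log ((27771430913146044712156219115012732149015337058745243774375474371978395728107173008782747458575903820497344261101333156469136833289328084229401057505005215261077328417649807720533310592783171487952296983742789708502518237023426083874832018749447215424764928016413509553872836856095214672430 : ℕ) : ℝ) :=
    log_ge_of_pow 27771430913146044712156219115012732149015337058745243774375474371978395728107173008782747458575903820497344261101333156469136833289328084229401057505005215261077328417649807720533310592783171487952296983742789708502518237023426083874832018749447215424764928016413509553872836856095214672430 7692 8 (666461013/1000000) (by norm_num) (by norm_num) (by decide +kernel) (by norm_num)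
  have hu : Real.log ((666461013/1000000) : ℝ) ≤ ((1629979/250000) : ℝ) :=
    log_le_of_pow (666461013/1000000) 301 32 (1629979/250000) (by norm_num) (by norm_num) (by exact_mod_cast real_pow_aux 666461013 1000000 32 301 (by norm_num) (by decide +kernel)) (by norm_num)
  exact concave 125 (666461013/1000000) L (by norm_num) (le_trans hc hL) (by norm_num) (by norm_num)
    (le_trans (mul_le_mul_of_nonneg_left hu (by norm_num)) (by norm_num))

lemma numeric_126 (L : ℝ) (hL : Real.log ((19467773070115377343221509599623925236459751278180415885837207534756855405403128279156705968461708578168638327032034542684864920135818987044810141311008655898015207220772515212093850725541003213054560185603695585660265284153421684796257245143362498012760214539505870197264858636122745485373430 : ℕ) : ℝ) ≤ L) :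
    (126 : ℝ) * Real.log L ≤ 1.385 * L := by
  have hc : ((168239817/250000) : ℝ) ≤ Real.log ((19467773070115377343221509599623925236459751278180415885837207534756855405403128279156705968461708578168638327032034542684864920135818987044810141311008655898015207220772515212093850725541003213054560185603695585660265284153421684796257245143362498012760214539505870197264858636122745485373430 : ℕ) : ℝ) :=
    log_ge_of_pow 19467773070115377343221509599623925236459751278180415885837207534756855405403128279156705968461708578168638327032034542684864920135818987044810141311008655898015207220772515212093850725541003213054560185603695585660265284153421684796257245143362498012760214539505870197264858636122745485373430 7767 8 (168239817/250000) (by norm_num) (by norm_num) (by decide +kernel) (by norm_num)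
  have hu : Real.log ((168239817/250000) : ℝ) ≤ ((1629979/250000) : ℝ) :=
    log_le_of_pow (168239817/250000) 301 32 (1629979/250000) (by norm_num) (by norm_num) (by exact_mod_cast real_pow_aux 168239817 250000 32 301 (by norm_num) (by decide +kernel)) (by norm_num)
  exact concave 126 (168239817/250000) L (by norm_num) (le_trans hc hL) (by norm_num) (by norm_num)
    (le_trans (mul_le_mul_of_nonneg_left hu (by norm_num)) (by norm_num))

lemma numeric_127 (L : ℝ) (hL : Real.log ((13802651106711802536344050306133362992649963656229914863058580142142610482430817949922104531639351381921564573865712490763569228376295661814770390189505137031692781919527713285374540164408571278055683171593020170233128086464775974520546386806644011091046992108509661969860784773011026549129761870 : ℕ) : ℝ) ≤ L) :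
    (127 : ℝ) * Real.log L ≤ 1.385 * L := by
  have hc : ((339772083/500000) : ℝ) ≤ Real.log ((13802651106711802536344050306133362992649963656229914863058580142142610482430817949922104531639351381921564573865712490763569228376295661814770390189505137031692781919527713285374540164408571278055683171593020170233128086464775974520546386806644011091046992108509661969860784773011026549129761870 : ℕ) : ℝ) :=
    log_ge_of_pow 13802651106711802536344050306133362992649963656229914863058580142142610482430817949922104531639351381921564573865712490763569228376295661814770390189505137031692781919527713285374540164408571278055683171593020170233128086464775974520546386806644011091046992108509661969860784773011026549129761870 7843 8 (339772083/500000) (by norm_num) (by norm_num) (by decide +kernel) (by norm_num)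
  have hu : Real.log ((339772083/500000) : ℝ) ≤ ((6541577/1000000) : ℝ) :=
    log_le_of_pow (339772083/500000) 302 32 (6541577/1000000) (by norm_num) (by norm_num) (by exact_mod_cast real_pow_aux 339772083 500000 32 302 (by norm_num) (by decide +kernel)) (by norm_num)
  exact concave 127 (339772083/500000) L (by norm_num) (le_trans hc hL) (by norm_num) (by norm_num)
    (le_trans (mul_le_mul_of_nonneg_left hu (by norm_num)) (by norm_num))

lemma numeric_128 (L : ℝ) (hL : Real.log ((9924106145725786023631372170109887991715323868829308786539119122200536936867758105993993158248693643601604928609447280859006275202556580844819910546254193525787110200140425852184294378209762748922036200375381502397619094168173925680272852113977043974462787326018446956329904251794928088824298784530 : ℕ) : ℝ) ≤ L) :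
    (128 : ℝ) * Real.log L ≤ 1.385 * L := by
  have hc : ((137225813/200000) : ℝ) ≤ Real.log ((9924106145725786023631372170109887991715323868829308786539119122200536936867758105993993158248693643601604928609447280859006275202556580844819910546254193525787110200140425852184294378209762748922036200375381502397619094168173925680272852113977043974462787326018446956329904251794928088824298784530 : ℕ) : ℝ) :=
    log_ge_of_pow 9924106145725786023631372170109887991715323868829308786539119122200536936867758105993993158248693643601604928609447280859006275202556580844819910546254193525787110200140425852184294378209762748922036200375381502397619094168173925680272852113977043974462787326018446956329904251794928088824298784530 7919 8 (137225813/200000) (by norm_num) (by norm_num) (by decide +kernel) (by norm_num)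
  have hu : Real.log ((137225813/200000) : ℝ) ≤ ((6541577/1000000) : ℝ) :=
    log_le_of_pow (137225813/200000) 302 32 (6541577/1000000) (by norm_num) (by norm_num) (by exact_mod_cast real_pow_aux 137225813 200000 32 302 (by norm_num) (by decide +kernel)) (by norm_num)
  exact concave 128 (137225813/200000) L (by norm_num) (le_trans hc hL) (by norm_num) (by norm_num)
    (le_trans (mul_le_mul_of_nonneg_left hu (by norm_num)) (by norm_num))

lemma numeric_129 (L : ℝ) (hL : Real.log ((7214825167942646439180007567669888569977040452638907487813939601839790353102860143057633026046800278898366783099068173184497562072258634274184074967126798693247229115502089594537982012958497518466320317672902352243069081460262443969558363486861310969434446386015410937251840391054912720575265216353310 : ℕ) : ℝ) ≤ L) :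
    (129 : ℝ) * Real.log L ≤ 1.385 * L := by
  have hc : ((692713963/1000000) : ℝ) ≤ Real.log ((7214825167942646439180007567669888569977040452638907487813939601839790353102860143057633026046800278898366783099068173184497562072258634274184074967126798693247229115502089594537982012958497518466320317672902352243069081460262443969558363486861310969434446386015410937251840391054912720575265216353310 : ℕ) : ℝ) :=
    log_ge_of_pow 7214825167942646439180007567669888569977040452638907487813939601839790353102860143057633026046800278898366783099068173184497562072258634274184074967126798693247229115502089594537982012958497518466320317672902352243069081460262443969558363486861310969434446386015410937251840391054912720575265216353310 7995 8 (692713963/1000000) (by norm_num) (by norm_num) (by decide +kernel) (by norm_num)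
  have hu : Real.log ((692713963/1000000) : ℝ) ≤ ((6541577/1000000) : ℝ) :=
    log_le_of_pow (692713963/1000000) 302 32 (6541577/1000000) (by norm_num) (by norm_num) (by exact_mod_cast real_pow_aux 692713963 1000000 32 302 (by norm_num) (by decide +kernel)) (by norm_num)
  exact concave 129 (692713963/1000000) L (by norm_num) (le_trans hc hL) (by norm_num) (by norm_num)
    (le_trans (mul_le_mul_of_nonneg_left hu (by norm_num)) (by norm_num))


lemma dispatch (k : ℕ) (hk4 : 4 ≤ k) (hk : k ≤ 129) (L : ℝ)
    (hL : Real.log ((Q k : ℕ) : ℝ) ≤ L) : (k : ℝ) * Real.log L ≤ 1.385 * L := by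
  interval_cases k
  · exact_mod_cast numeric_4 L (by rw [show Q 4 = 210 from by decide] at hL; exact_mod_cast hL)
  · exact_mod_cast numeric_5 L (by rw [show Q 5 = 2310 from by decide] at hL; exact_mod_cast hL)
  · exact_mod_cast numeric_6 L (by rw [show Q 6 = 30030 from by decide] at hL; exact_mod_cast hL)
  · exact_mod_cast numeric_7 L (by rw [show Q 7 = 510510 from by decide] at hL; exact_mod_cast hL)
  · exact_mod_cast numeric_8 L (by rw [show Q 8 = 9699690 from by decide] at hL; exact_mod_cast hL)
  · exact_mod_cast numeric_9 L (by rw [show Q 9 = 223092870 from by decide] at hL; exact_mod_cast hL)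
  · exact_mod_cast numeric_10 L (by rw [show Q 10 = 6469693230 from by decide] at hL; exact_mod_cast hL)
  · exact_mod_cast numeric_11 L (by rw [show Q 11 = 200560490130 from by decide] at hL; exact_mod_cast hL)
  · exact_mod_cast numeric_12 L (by rw [show Q 12 = 7420738134810 from by decide] at hL; exact_mod_cast hL)
  · exact_mod_cast numeric_13 L (by rw [show Q 13 = 304250263527210 from by decide] at hL; exact_mod_cast hL)
  · exact_mod_cast numeric_14 L (by rw [show Q 14 = 13082761331670030 from by decide] at hL; exact_mod_cast hL)
  · exact_mod_cast numeric_15 L (by rw [show Q 15 = 614889782588491410 from by decide] at hL; exact_mod_cast hL)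
  · exact_mod_cast numeric_16 L (by rw [show Q 16 = 32589158477190044730 from by decide] at hL; exact_mod_cast hL)
  · exact_mod_cast numeric_17 L (by rw [show Q 17 = 1922760350154212639070 from by decide] at hL; exact_mod_cast hL)
  · exact_mod_cast numeric_18 L (by rw [show Q 18 = 117288381359406970983270 from by decide] at hL; exact_mod_cast hL)
  · exact_mod_cast numeric_19 L (by rw [show Q 19 = 7858321551080267055879090 from by decide] at hL; exact_mod_cast hL)
  · exact_mod_cast numeric_20 L (by rw [show Q 20 = 557940830126698960967415390 from by decide] at hL; exact_mod_cast hL)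
  · exact_mod_cast numeric_21 L (by rw [show Q 21 = 40729680599249024150621323470 from by decide] at hL; exact_mod_cast hL)
  · exact_mod_cast numeric_22 L (by rw [show Q 22 = 3217644767340672907899084554130 from by decide] at hL; exact_mod_cast hL)
  · exact_mod_cast numeric_23 L (by rw [show Q 23 = 267064515689275851355624017992790 from by decide] at hL; exact_mod_cast hL)
  · exact_mod_cast numeric_24 L (by rw [show Q 24 = 23768741896345550770650537601358310 from by decide] at hL; exact_mod_cast hL)
  · exact_mod_cast numeric_25 L (by rw [show Q 25 = 2305567963945518424753102147331756070 from by decide] at hL; exact_mod_cast hL)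
  · exact_mod_cast numeric_26 L (by rw [show Q 26 = 232862364358497360900063316880507363070 from by decide] at hL; exact_mod_cast hL)
  · exact_mod_cast numeric_27 L (by rw [show Q 27 = 23984823528925228172706521638692258396210 from by decide] at hL; exact_mod_cast hL)
  · exact_mod_cast numeric_28 L (by rw [show Q 28 = 2566376117594999414479597815340071648394470 from by decide] at hL; exact_mod_cast hL)
  · exact_mod_cast numeric_29 L (by rw [show Q 29 = 279734996817854936178276161872067809674997230 from by decide] at hL; exact_mod_cast hL)
  · exact_mod_cast numeric_30 L (by rw [show Q 30 = 31610054640417607788145206291543662493274686990 from by decide] at hL; exact_mod_cast hL)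
  · exact_mod_cast numeric_31 L (by rw [show Q 31 = 4014476939333036189094441199026045136645885247730 from by decide] at hL; exact_mod_cast hL)
  · exact_mod_cast numeric_32 L (by rw [show Q 32 = 525896479052627740771371797072411912900610967452630 from by decide] at hL; exact_mod_cast hL)
  · exact_mod_cast numeric_33 L (by rw [show Q 33 = 72047817630210000485677936198920432067383702541010310 from by decide] at hL; exact_mod_cast hL)
  · exact_mod_cast numeric_34 L (by rw [show Q 34 = 10014646650599190067509233131649940057366334653200433090 from by decide] at hL; exact_mod_cast hL)
  · exact_mod_cast numeric_35 L (by rw [show Q 35 = 1492182350939279320058875736615841068547583863326864530410 from by decide] at hL; exact_mod_cast hL)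
  · exact_mod_cast numeric_36 L (by rw [show Q 36 = 225319534991831177328890236228992001350685163362356544091910 from by decide] at hL; exact_mod_cast hL)
  · exact_mod_cast numeric_37 L (by rw [show Q 37 = 35375166993717494840635767087951744212057570647889977422429870 from by decide] at hL; exact_mod_cast hL)
  · exact_mod_cast numeric_38 L (by rw [show Q 38 = 5766152219975951659023630035336134306565384015606066319856068810 from by decide] at hL; exact_mod_cast hL)
  · exact_mod_cast numeric_39 L (by rw [show Q 39 = 962947420735983927056946215901134429196419130606213075415963491270 from by decide] at hL; exact_mod_cast hL)
  · exact_mod_cast numeric_40 L (by rw [show Q 40 = 166589903787325219380851695350896256250980509594874862046961683989710 from by decide] at hL; exact_mod_cast hL)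
  · exact_mod_cast numeric_41 L (by rw [show Q 41 = 29819592777931214269172453467810429868925511217482600306406141434158090 from by decide] at hL; exact_mod_cast hL)
  · exact_mod_cast numeric_42 L (by rw [show Q 42 = 5397346292805549782720214077673687806275517530364350655459511599582614290 from by decide] at hL; exact_mod_cast hL)
  · exact_mod_cast numeric_43 L (by rw [show Q 43 = 1030893141925860008499560888835674370998623848299590975192766715520279329390 from by decide] at hL; exact_mod_cast hL)
  · exact_mod_cast numeric_44 L (by rw [show Q 44 = 198962376391690981640415251545285153602734402721821058212203976095413910572270 from by decide] at hL; exact_mod_cast hL)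
  · exact_mod_cast numeric_45 L (by rw [show Q 45 = 39195588149163123383161804554421175259738677336198748467804183290796540382737190 from by decide] at hL; exact_mod_cast hL)
  · exact_mod_cast numeric_46 L (by rw [show Q 46 = 7799922041683461553249199106329813876687996789903550945093032474868511536164700810 from by decide] at hL; exact_mod_cast hL)
  · exact_mod_cast numeric_47 L (by rw [show Q 47 = 1645783550795210387735581011435590727981167322669649249414629852197255934130751870910 from by decide] at hL; exact_mod_cast hL)
  · exact_mod_cast numeric_48 L (by rw [show Q 48 = 367009731827331916465034565550136732339800312955331782619462457039988073311157667212930 from by decide] at hL; exact_mod_cast hL)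
  · exact_mod_cast numeric_49 L (by rw [show Q 49 = 83311209124804345037562846379881038241134671040860314654617977748077292641632790457335110 from by decide] at hL; exact_mod_cast hL)
  · exact_mod_cast numeric_50 L (by rw [show Q 50 = 19078266889580195013601891820992757757219839668357012055907516904309700014933909014729740190 from by decide] at hL; exact_mod_cast hL)
  · exact_mod_cast numeric_51 L (by rw [show Q 51 = 4445236185272185438169240794291312557432222642727183809026451438704160103479600800432029464270 from by decide] at hL; exact_mod_cast hL)
  · exact_mod_cast numeric_52 L (by rw [show Q 52 = 1062411448280052319722448549835623701226301211611796930357321893850294264731624591303255041960530 from by decide] at hL; exact_mod_cast hL)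
  · exact_mod_cast numeric_53 L (by rw [show Q 53 = 256041159035492609053110100510385311995538591998443060216114576417920917800321526504084465112487730 from by decide] at hL; exact_mod_cast hL)
  · exact_mod_cast numeric_54 L (by rw [show Q 54 = 64266330917908644872330635228106713310880186591609208114244758680898150367880703152525200743234420230 from by decide] at hL; exact_mod_cast hL)
  · exact_mod_cast numeric_55 L (by rw [show Q 55 = 16516447045902521732188973253623425320896207954043566485360902980990824644545340710198976591011245999110 from by decide] at hL; exact_mod_cast hL)
  · exact_mod_cast numeric_56 L (by rw [show Q 56 = 4343825573072363215565699965702960859395702691913457985649917484000586881515424606782330843435957697765930 from by decide] at hL; exact_mod_cast hL)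
  · exact_mod_cast numeric_57 L (by rw [show Q 57 = 1168489079156465704987173290774096471177444024124720198139827803196157871127649219224446996884272620699035170 from by decide] at hL; exact_mod_cast hL)
  · exact_mod_cast numeric_58 L (by rw [show Q 58 = 316660540451402206051523961799780143689087330537799173695893334666158783075592938409825136155637880209438531070 from by decide] at hL; exact_mod_cast hL)
  · exact_mod_cast numeric_59 L (by rw [show Q 59 = 87714969705038411076272137418539099801877190558970371113762453702525982911939243939521562715111692818014473106390 from by decide] at hL; exact_mod_cast hL)
  · exact_mod_cast numeric_60 L (by rw [show Q 60 = 24647906487115793512432470614609487044327490547070674282967249490409801198254927547005559122946385681862066942895590 from by decide] at hL; exact_mod_cast hL)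
  · exact_mod_cast numeric_61 L (by rw [show Q 61 = 6975357535853769564018389183934484833544679824821000822079731605785973739106144495802573231793827147966964944839451970 from by decide] at hL; exact_mod_cast hL)
  · exact_mod_cast numeric_62 L (by rw [show Q 62 = 2043779758005154482257388030892804056228591188672553240869361360495290305558100337270153956915591354354320728837959427210 from by decide] at hL; exact_mod_cast hL)
  · exact_mod_cast numeric_63 L (by rw [show Q 63 = 627440385707582426053018125484090845262177494922473844946893937672054123806336803541937264773086545786776463753253544153470 from by decide] at hL; exact_mod_cast hL)
  · exact_mod_cast numeric_64 L (by rw [show Q 64 = 195133959955058134502488637025552252876537200920889365778484014616008832503770745901542489344429915739687480227261852231729170 from by decide] at hL; exact_mod_cast hL)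
  · exact_mod_cast numeric_65 L (by rw [show Q 65 = 61076929465933196099278943388997855150356143888238371488665496574810764573680243467182799164806563626522181311132959748531230210 from by decide] at hL; exact_mod_cast hL)
  · exact_mod_cast numeric_66 L (by rw [show Q 66 = 19361386640700823163471425054312320082662897612571563761906962414215012369856637179096947335243680669607531475629148240284399976570 from by decide] at hL; exact_mod_cast hL)
  · exact_mod_cast numeric_67 L (by rw [show Q 67 = 6408618978071972467109041692977377947361419109761187605191204559105169094422546906281089567965658301640092918433248067534136392244670 from by decide] at hL; exact_mod_cast hL)
  · exact_mod_cast numeric_68 L (by rw [show Q 68 = 2159704595610254721415747050533376368260798239989520222949435936418441984820398307416727184404426847652711313512004598759003964186453790 from by decide] at hL; exact_mod_cast hL)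
  · exact_mod_cast numeric_69 L (by rw [show Q 69 = 749417494676758388331264226535081599786496989276363517363454269937199368732678212673604332988336116135490825788665595769374375572699465130 from by decide] at hL; exact_mod_cast hL)
  · exact_mod_cast numeric_70 L (by rw [show Q 70 = 261546705642188677527611215060743478325487449257450867559845540208082579687704696223087912212929304531286298200244292923511657074872113330370 from by decide] at hL; exact_mod_cast hL)
  · exact_mod_cast numeric_71 L (by rw [show Q 71 = 92325987091692603167246758916442447848897069587880156248625475693453150629759757766750033011164044499544063264686235401999614947429856005620610 from by decide] at hL; exact_mod_cast hL)
  · exact_mod_cast numeric_72 L (by rw [show Q 72 = 33145029365917644537041586451002838777754047982048976093256545773949681076083753038263261851007891975336318712022358509317861766127318306017798990 from by decide] at hL; exact_mod_cast hL)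
  · exact_mod_cast numeric_73 L (by rw [show Q 73 = 12164225777291775545094262227518041831435735609411974226225152299039532954922737365042617099319896354948428967312205572919655268168725818308532229330 from by decide] at hL; exact_mod_cast hL)
  · exact_mod_cast numeric_74 L (by rw [show Q 74 = 4537256214929832278320159810864229603125529382310666386381981807541745792186181037160896178046321340395764004807452678699031415026934730229082521540090 from by decide] at hL; exact_mod_cast hL)
  · exact_mod_cast numeric_75 L (by rw [show Q 75 = 1719620105458406433483340568317543019584575635895742560438771105058321655238562613083979651479555788009994557822024565226932906295208262756822275663694110 from by decide] at hL; exact_mod_cast hL)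
  · exact_mod_cast numeric_76 L (by rw [show Q 76 = 658614500390569664024119437665618976500892468548069400648049333237337193956369480811164206516669866807827915645835408481915303111064764635862931579194844130 from by decide] at hL; exact_mod_cast hL)
  · exact_mod_cast numeric_77 L (by rw [show Q 77 = 256201040651931599305382461251925781858847170265198996852091190629324168449027728035542876334984578188245059186229973899465052910204193443350680384306794366570 from by decide] at hL; exact_mod_cast hL)
  · exact_mod_cast numeric_78 L (by rw [show Q 78 = 101711813138816844924236837117014535397962326595284001750280202679841694874264008030110521904988877540733288496933299638087626005351064797010220112569797363528290 from by decide] at hL; exact_mod_cast hL)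
  · exact_mod_cast numeric_79 L (by rw [show Q 79 = 40786437068665554814618971683922828694582892964708884701862361274616519644579867220074319283900539893834048687270253154873138028145776983601098265140488742774844290 from by decide] at hL; exact_mod_cast hL)
  · exact_mod_cast numeric_80 L (by rw [show Q 80 = 16681652761084211919179159418724436936084403222565933843061705761318156534633165693010396587115320816578125913093533540343113453511622786292849190442459895794911314610 from by decide] at hL; exact_mod_cast hL)
  · exact_mod_cast numeric_81 L (by rw [show Q 81 = 6989612506894284794136067796445539076219364950255126280242854713992307588011296425371356170001319422146234757586190553403764537021369947456703810795390696338067840821590 from by decide] at hL; exact_mod_cast hL)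
  · exact_mod_cast numeric_82 L (by rw [show Q 82 = 2942626865402493898331284542303571951088352644057408163982241834590761494552755795081340947570555476723564832943786222982984870085996747879272304344859483158326560985889390 from by decide] at hL; exact_mod_cast hL)
  · exact_mod_cast numeric_83 L (by rw [show Q 83 = 1268272178988474870180783637732839510919079989588742918676346230708618204152237747680057948402909410467856442998771862105666479007064598335966363172634437241238747784918327090 from by decide] at hL; exact_mod_cast hL)
  · exact_mod_cast numeric_84 L (by rw [show Q 84 = 549161853502009618788279315138319508227961635491925683786857917896831682397918944745465091658459774732581839818468216291753585410058971079473435253750711325456377790869635629970 from by decide] at hL; exact_mod_cast hL)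
  · exact_mod_cast numeric_85 L (by rw [show Q 85 = 241082053687382222648054619345722264112075157980955375182430625956709108572686416743259175238063841107603427680307546952079823995015888303888838076396562271875349850191770041556830 from by decide] at hL; exact_mod_cast hL)
  · exact_mod_cast numeric_86 L (by rw [show Q 86 = 106799349783510324633088196370154963001649294985563231205816767298822135097700082617263814630462281610668318462376243299771362029792038518622755267843677086440779983634954128409675690 from by decide] at hL; exact_mod_cast hL)
  · exact_mod_cast numeric_87 L (by rw [show Q 87 = 47952908052796135760256600170199578387740533448517890811411728517171138658867337095151452769077564443190074989606933241597341551376625294861617115261811011811910212652094403655944384810 from by decide] at hL; exact_mod_cast hL)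
  · exact_mod_cast numeric_88 L (by rw [show Q 88 = 21914478980127834042437266277781207323197423785972676100815159932347210367102373052484213915468446950537864270250368491409985088979117759751759021674647632398042967182007142470766583858170 from by decide] at hL; exact_mod_cast hL)
  · exact_mod_cast numeric_89 L (by rw [show Q 89 = 10102574809838931493563579754057136575994012365333403682475788728812063979234193977195222615030954044197955428585419874540003126019373287245560908992012558535497807870905292679023395158616370 from by decide] at hL; exact_mod_cast hL)
  · exact_mod_cast numeric_90 L (by rw [show Q 90 = 4677492136955425281519937426128454234685227725149365904986290181439985622385431811441388070759331722463653363435049401912021447346969831994694700863301814601935485044229150510387831958439379310 from by decide] at hL; exact_mod_cast hL)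
  · exact_mod_cast numeric_91 L (by rw [show Q 91 = 2184388827958183606469810778001988127598001347644753877628597514732473285653996655943128229044607914390526120724168070692914015911034911541522425303161947419103871515655013288351117524591190137770 from by decide] at hL; exact_mod_cast hL)
  · exact_mod_cast numeric_92 L (by rw [show Q 92 = 1046322248591969947499039362662952313119442645521837107384098209556854703828264398196758421712367190993062011826876505861905813621385722628389241720214572813750754455998751365120185294279180075991830 from by decide] at hL; exact_mod_cast hL)
  · exact_mod_cast numeric_93 L (by rw [show Q 93 = 509558935064289364432032169616857776489168568369134671296055828054188240764364761921821351373922822013621199759688858354748131233614846920025560717744496960296617420071391914813530238313960697008021210 from by decide] at hL; exact_mod_cast hL)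
  · exact_mod_cast numeric_94 L (by rw [show Q 94 = 250193437116566077936127795281877168256181767069245123606363411574606426215303098103614283524596105608688009082007229452181332435704889837732550312412548007505639153255053430173443347012154702230938414110 from by decide] at hL; exact_mod_cast hL)
  · exact_mod_cast numeric_95 L (by rw [show Q 95 = 124846525121166472890127769845656706959834701767553316679575342375728606681436245953703527478773456698735316531921607496638484885416740029028542605893861455745313937474271661656548230159065196413238268640890 from by decide] at hL; exact_mod_cast hL)
  · exact_mod_cast numeric_96 L (by rw [show Q 96 = 62797802135946735863734268232365323600796854989079318289826397214991489160762431714712874321823048719463864215556568570809157897364620234601356930764612312239892910549558645813243759770009793795858849126367670 from by decide] at hL; exact_mod_cast hL)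
  · exact_mod_cast numeric_97 L (by rw [show Q 97 = 31964081287196888554640742530273949712805599189441373009521636182430667982828077742788853029807931798207106885718293402541861369758591699412090677759187666930105491469725350718941073722934985042092154205321144030 from by decide] at hL; exact_mod_cast hL)
  · exact_mod_cast numeric_98 L (by rw [show Q 98 = 16653286350629578936967826858272727800371717177698955337960772451046378019053428503992992428529932466865902687459230862724309773644226275393699243112536774470584961055726907724568299409649127206930012340972316039630 from by decide] at hL; exact_mod_cast hL)
  · exact_mod_cast numeric_99 L (by rw [show Q 99 = 8709668761379269784034173446876636639594408083936553641753483991897255703964943107588335040121154680170867105541177741204814011615930342030904704147856733048115934632145172739949220591246493529224396454328521288726490 from by decide] at hL; exact_mod_cast hL)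
  · exact_mod_cast numeric_100 L (by rw [show Q 100 = 4711930799906184953162487834760260422020574773409675520188634839616415335845034221205289256705544681972439104097777157991804380284218315038719444943990492579030720635990538452312528339864352999310398481791730017201031090 from by decide] at hL; exact_mod_cast hL)
  · exact_mod_cast numeric_101 L (by rw [show Q 101 = 2577426147548683169379880845613862450845254401055092509543183257270179188707233718999293223417932941038924189941484105421516996015467418326179536384362799440729804187886824533414953001905801090622787969540076319408964006230 from by decide] at hL; exact_mod_cast hL)
  · exact_mod_cast numeric_102 L (by rw [show Q 102 = 1435626364184616525344593631006921385120806701387686527815553074299489808109929181482606325443788648158680773797406646719784966780615352007682001766090079288486500932652961265112128822061531207476892899033822509910792951470110 from by decide] at hL; exact_mod_cast hL)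
  · exact_mod_cast numeric_103 L (by rw [show Q 103 = 808257643035939103769006214256896739823014172881267515160156380830612761965890129174707361224853008913337275647939942103238936297486443180324966994308714639417900025083617192258128526820642069809490702156042073079776431677671930 from by decide] at hL; exact_mod_cast hL)
  · exact_mod_cast numeric_104 L (by rw [show Q 104 = 459898598887449350044564535912174244959295064369441216126128980692618661558591483500408488536941362071688909843677827056742954753269786169604906219761658629828785114272578182394875131760945337721600209526787939582392789624595328170 from by decide] at hL; exact_mod_cast hL)
  · exact_mod_cast numeric_105 L (by rw [show Q 105 = 262602099964733578875446350005851493871757481754950934408019647975485255749955737078733246954593517742934367520740039249400227164117047902844401451483907077632236300249642142147473700235499787839033719639795913501546282875643932385070 from by decide] at hL; exact_mod_cast hL)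
  · exact_mod_cast numeric_106 L (by rw [show Q 106 = 151521411679651275011132543953376311964004066972606689153427336881854992567724460294429083492800459737673130059467002646903931073695536639941219637506214383793800345244043516019092325035883377583122456232162242090392205219246548986185390 from by decide] at hL; exact_mod_cast hL)
  · exact_mod_cast numeric_107 L (by rw [show Q 107 = 88943068655955298431534803300631895122870387312920126533061846749648880637254258192829872010273869866014127344907130553732607540259280007645495927216147843286960802658253543903207194796063542641292881808279236107060224463697724254890823930 from by decide] at hL; exact_mod_cast hL)
  · exact_mod_cast numeric_108 L (by rw [show Q 108 = 52743239712981491969900138357274713807862139676561635034105675122541786217891775108348114102092404830546377515529928418363436271373753044533779084839175671069167755976344351534601866514065680786286678912309587011486713106972750483150258590490 from by decide] at hL; exact_mod_cast hL)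
  · exact_mod_cast numeric_109 L (by rw [show Q 109 = 31593200588075913689970182876007553570909421666260419385429299398402529944517173289900520347153350493497280131802427122599698326552878073675733671818666226970431485829830266569226518041925342790985720668473442619880541151076677539407004895703510 from by decide] at hL; exact_mod_cast hL)
  · exact_mod_cast numeric_110 L (by rw [show Q 110 = 18987513553433624127672079908480539696116562421422512050643008938439920496654821147230212728639163646591865359213258700682418694258279722279115936763018402409229322983727990208105137343197131017382418121752539014548205231797083201183609942317809510 from by decide] at hL; exact_mod_cast hL)
  · exact_mod_cast numeric_111 L (by rw [show Q 111 = 11525420726934209845496952504447687595542753389803464814740306425633031741469476436368739126283972333481262273042448031314228147414775791423423373615152170262402199051122890056319818367320658527551127799903791181830760575700829503118451234986910372570 from by decide] at hL; exact_mod_cast hL)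
  · exact_mod_cast numeric_112 L (by rw [show Q 112 = 7065082905610670635289631885226432496067707827949523931435807838913048457520789055494037084412075040424013773375020643195621854365257560142558528026088280370852548018338331604524048659167563677388841341341023994462256232904608485411610607046976058385410 from by decide] at hL; exact_mod_cast hL)
  · exact_mod_cast numeric_113 L (by rw [show Q 113 = 4359156152761783781973702873184708850073775729844856265695893436609350898290326847239820881082250299941616498172387736851698684143363914607958611792096468988816022127314750599991338022706386788948915107607411804583212095702143435498963744547984228023797970 from by decide] at hL; exact_mod_cast hL)
  · exact_mod_cast numeric_114 L (by rw [show Q 114 = 2698317658559544161041722078501334778195667176773966028465758037261188206041712318441449125389912935663860612368708009111201485484742263142326380699307714304077117696807830621394638236055253422359378451608987907037008287239626786573858557875202237146730943430 from by decide] at hL; exact_mod_cast hL)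
  · exact_mod_cast numeric_115 L (by rw [show Q 115 = 1702638442551072365617326631534342245041465988544372563961893321511809758012320472936554398121035062403896046404654753749168137340872368042807946221263167725872661266685741122100016726950864909508767802965271369340352229248204502328104750019252611639587225304330 from by decide] at hL; exact_mod_cast hL)
  · exact_mod_cast numeric_116 L (by rw [show Q 116 = 1091391241675237386360706370813513379071579698656942813499573619089070054885897423152331369195583475000897365745383697153216776035499187915439893527829690512284375871945560059266110721975504406995120161700738947747165778948099085992315144762340924060975411420075530 from by decide] at hL; exact_mod_cast hL)
  · exact_mod_cast numeric_117 L (by rw [show Q 117 = 701764568397177639429934196433089102743025746236414229080225837074272045291632043086949070392760174425577006174281717269518386990825977829627851538394490999398853685660995118108109194230249333697862263973575143401427595863627712293058638082185214171207189543108565790 from by decide] at hL; exact_mod_cast hL)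
  · exact_mod_cast numeric_118 L (by rw [show Q 118 = 454041675752973932711167425092208649474737657814960006214906116587054013303685931877256048544115832853348322994760271073378396383064407655769219945341235676611058334622663841415946648666971318902516884790903117780723654523767129853608938839173833568771051634391242066130 from by decide] at hL; exact_mod_cast hL)
  · exact_mod_cast numeric_119 L (by rw [show Q 119 = 296489214266691978060392328585212248107003690553168884058333694131346270687306913515848199699307638853236454915578457010916092838141058199217300624307826896827021092508599488444613161579532271243343525768459735910812546404019935794406637061980513320407496717257481069182890 from by decide] at hL; exact_mod_cast hL)
  · exact_mod_cast numeric_120 L (by rw [show Q 120 = 195386392201750013541798544537654871502515432074538294594441904432557192382935256006943963601843734004282823789366203170193705180334957353284201111418857925009006899963167062885000073480911766749363383481414965965225468080249137688513973823845158278148540336672680024591524510 from by decide] at hL; exact_mod_cast hL)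
  · exact_mod_cast numeric_121 L (by rw [show Q 121 = 129150405245356758951128837939389870063162700601269812726926098829920304165120204220589959940818708176830946524771060295498039124201406810520856934647865088430953560875653428566985048570882677821329196481215292503014034401044680012107736697561649621856185162540641496254997701110 from by decide] at hL; exact_mod_cast hL)
  · exact_mod_cast numeric_122 L (by rw [show Q 122 = 86918222730125098774109707933209382552508497504654583965221264512536364703125897440457043040170990603007227011170923578870180330587546783480536717018013204514031746469314757425580937688204042173754549231857891854528445151903069648148506797458990195509212614389851726979613452847030 from by decide] at hL; exact_mod_cast hL)
  · exact_mod_cast numeric_123 L (by rw [show Q 123 = 58843636788294691870072272270782751988048252810651153344454796074987118904016232567189418138195760638235892686562715262895112083807769172416323357421194939455999492359726090777118294814914136551631829829967792785515757367838378151796539101879736362359736939941929619165198307577439310 from by decide] at hL; exact_mod_cast hL)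
  · exact_mod_cast numeric_124 L (by rw [show Q 124 = 40190203926405274547259361960944619607836956669674737734262625719216202211443086843390372588387704515915114704922334524557361553240706344760348853118676143648447653281692920000771795358586355264764539773868002472507262282233612277677036206583859935491700329980337929889830444075391048730 from by decide] at hL; exact_mod_cast hL)
  · exact_mod_cast numeric_125 L (by rw [show Q 125 = 27771430913146044712156219115012732149015337058745243774375474371978395728107173008782747458575903820497344261101333156469136833289328084229401057505005215261077328417649807720533310592783171487952296983742789708502518237023426083874832018749447215424764928016413509553872836856095214672430 from by decide] at hL; exact_mod_cast hL)
  · exact_mod_cast numeric_126 L (by rw [show Q 126 = 19467773070115377343221509599623925236459751278180415885837207534756855405403128279156705968461708578168638327032034542684864920135818987044810141311008655898015207220772515212093850725541003213054560185603695585660265284153421684796257245143362498012760214539505870197264858636122745485373430 from by decide] at hL; exact_mod_cast hL)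
  · exact_mod_cast numeric_127 L (by rw [show Q 127 = 13802651106711802536344050306133362992649963656229914863058580142142610482430817949922104531639351381921564573865712490763569228376295661814770390189505137031692781919527713285374540164408571278055683171593020170233128086464775974520546386806644011091046992108509661969860784773011026549129761870 from by decide] at hL; exact_mod_cast hL)
  · exact_mod_cast numeric_128 L (by rw [show Q 128 = 9924106145725786023631372170109887991715323868829308786539119122200536936867758105993993158248693643601604928609447280859006275202556580844819910546254193525787110200140425852184294378209762748922036200375381502397619094168173925680272852113977043974462787326018446956329904251794928088824298784530 from by decide] at hL; exact_mod_cast hL)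
  · exact_mod_cast numeric_129 L (by rw [show Q 129 = 7214825167942646439180007567669888569977040452638907487813939601839790353102860143057633026046800278898366783099068173184497562072258634274184074967126798693247229115502089594537982012958497518466320317672902352243069081460262443969558363486861310969434446386015410937251840391054912720575265216353310 from by decide] at hL; exact_mod_cast hL)


lemma cert261 : (5.55 : ℝ) ≤ Real.log ((261 : ℕ) : ℝ) :=
  log_ge_of_pow 261 802 100 (5.55) (by norm_num) (by norm_num) (by decide +kernel) (by norm_num)

lemma cert555 : Real.log (5.55 : ℝ) ≤ 1.72 :=
  log_le_of_pow (5.55) 317 128 (1.72) (by norm_num) (by norm_num) (by rw [show (5.55:ℝ) = ((111:ℕ):ℝ)/((20:ℕ):ℝ) by norm_num]; exact real_pow_aux 111 20 128 317 (by norm_num) (by decide +kernel)) (by norm_num)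

lemma cert699u : Real.log (699 : ℝ) ≤ 6.56 :=
  log_le_of_pow (699) 605 64 (6.56) (by norm_num) (by norm_num) (by exact_mod_cast (by decide +kernel : (699:ℕ)^64 ≤ 2^605)) (by norm_num)

lemma hg_low (m : ℕ) (hm : 261 ≤ m) : (5.55 : ℝ) ≤ Real.log ((m : ℕ) : ℝ) :=
  le_trans cert261 (Real.log_le_log (by norm_num) (by exact_mod_cast hm))

lemma Q130_eq : Q 130 = 5288466848101959839918945547102028321793170651784319188567617728148566328824396484861245008092304604432502852011616970944236712998965578922976926950903943442150218941663031672796340815498578681035812792854237424194169636710372371429686280435869340940595449200949296217005599006643251024181669403586976230 := by decide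

lemma certQ130 : (699 : ℝ) ≤ Real.log ((Q 130 : ℕ) : ℝ) := by
  rw [Q130_eq]
  exact log_ge_of_pow 5288466848101959839918945547102028321793170651784319188567617728148566328824396484861245008092304604432502852011616970944236712998965578922976926950903943442150218941663031672796340815498578681035812792854237424194169636710372371429686280435869340940595449200949296217005599006643251024181669403586976230 64572 64 (699) (by norm_num) (by norm_num) (by decide +kernel) (by norm_num)

lemma sigma_tail (k : ℕ) (hk : 130 ≤ k) : σ (k+1) = 2*k+1 := by
  unfold σ
  rw [if_neg (by omega)]
  omega


noncomputable def T (j : ℕ) : ℝ :=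
  699 + ∑ i ∈ Finset.range j, Real.log ((2*(130+i)+1 : ℕ) : ℝ)

lemma T_succ (j : ℕ) : T (j+1) = T j + Real.log ((2*(130+j)+1 : ℕ) : ℝ) := by
  unfold T
  rw [Finset.sum_range_succ]
  ring

lemma tail_inv (j : ℕ) :
    5.37 * ((130+j : ℕ) : ℝ) ≤ T j ∧
    T j ≤ ((130+j : ℕ) : ℝ) * Real.log ((2*(130+j)+1 : ℕ) : ℝ) ∧
    ((130+j : ℕ) : ℝ) * Real.log (T j) ≤ 1.385 * T j ∧
    T j ≤ Real.log ((Q (130+j) : ℕ) : ℝ) := by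
  induction j with
  | zero =>
    have hT0 : T 0 = 699 := by simp [T]
    have hg261 : (5.55 : ℝ) ≤ Real.log ((261 : ℕ) : ℝ) := hg_low 261 le_rfl
    refine ⟨by rw [hT0]; norm_num, ?_, ?_, ?_⟩
    · rw [hT0]
      have h : ((2*(130+0)+1 : ℕ) : ℝ) = ((261 : ℕ) : ℝ) := by norm_num
      rw [h]
      push_cast
      nlinarith
    · rw [hT0]
      have := cert699u
      push_cast
      nlinarith
    · rw [hT0]
      simpa using certQ130
  | succ j ih =>
    obtain ⟨hA, hU, hJ, hLQ⟩ := ih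
    set k : ℕ := 130 + j with hkdef
    have hkr : (130 : ℝ) ≤ (k : ℝ) := by exact_mod_cast Nat.le_add_right 130 j
    set g : ℝ := Real.log ((2*k+1 : ℕ) : ℝ) with hgdef
    have hg : (5.55 : ℝ) ≤ g := hg_low (2*k+1) (by omega)
    have hg0 : (0:ℝ) < g := by linarith
    have hT0 : (0:ℝ) < T j := by nlinarith
    have hTsucc : T (j+1) = T j + g := T_succ j
    have hcast : ((130 + (j+1) : ℕ) : ℝ) = (k : ℝ) + 1 := by push_cast [hkdef]; ring
    have hknz : ((k:ℝ)) ≠ 0 := by positivity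
    have hA' : 5.37 * ((130+(j+1) : ℕ) : ℝ) ≤ T (j+1) := by
      rw [hcast, hTsucc]; linarith
    have hgmono : g ≤ Real.log ((2*(130+(j+1))+1 : ℕ) : ℝ) := by
      apply Real.log_le_log (by positivity)
      exact_mod_cast (by omega : (2*k+1 : ℕ) ≤ (2*(130+(j+1))+1 : ℕ))
    have hU' : T (j+1) ≤ ((130+(j+1) : ℕ) : ℝ) * Real.log ((2*(130+(j+1))+1 : ℕ) : ℝ) := by
      rw [hcast, hTsucc]
      have h1 : T j + g ≤ ((k:ℝ)+1) * g := by linarith [hU]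
      have h2 : ((k:ℝ)+1) * g ≤ ((k:ℝ)+1) * Real.log ((2*(130+(j+1))+1 : ℕ) : ℝ) :=
        mul_le_mul_of_nonneg_left hgmono (by linarith)
      linarith
    -- J step
    have hb1 : Real.log (T j) ≤ Real.log (k:ℝ) + Real.log g := by
      calc Real.log (T j) ≤ Real.log ((k:ℝ) * g) := Real.log_le_log hT0 hU
        _ = Real.log (k:ℝ) + Real.log g := Real.log_mul hknz hg0.ne'
    have hb3 : Real.log (k:ℝ) ≤ g - 0.6931471803 := by
      have h1 : Real.log (2*(k:ℝ)) ≤ g := by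
        apply Real.log_le_log (by positivity)
        push_cast
        linarith
      have h2 : Real.log (2*(k:ℝ)) = Real.log 2 + Real.log (k:ℝ) := Real.log_mul (by norm_num) hknz
      have h3 := Real.log_two_gt_d9
      rw [h2] at h1
      linarith
    have hb4 : Real.log g ≤ 1.72 + (g*(20/111) - 1) := by
      have h1 : Real.log (g*(20/111)) ≤ g*(20/111) - 1 := Real.log_le_sub_one_of_pos (by positivity)
      have h2 : Real.log (g*(20/111)) = Real.log g + Real.log (20/111) :=
        Real.log_mul hg0.ne' (by norm_num)
      have h3 : Real.log (20/111 : ℝ) = - Real.log 5.55 := by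
        rw [show (20/111 : ℝ) = (5.55)⁻¹ by norm_num, Real.log_inv]
      linarith [cert555]
    have hb2 : ((k:ℝ)+1) * (g / T j) ≤ 0.1877 * g := by
      rw [show ((k:ℝ)+1) * (g / T j) = (((k:ℝ)+1) * g) / T j by ring]
      rw [div_le_iff₀ hT0]
      nlinarith [mul_le_mul_of_nonneg_left hA hg0.le, mul_le_mul_of_nonneg_left hkr hg0.le]
    have he1 : Real.log (T j) ≤ g - 0.6931471803 + (1.72 + (g*(20/111) - 1)) := by linarith
    have hsum : Real.log (T j) + ((k:ℝ)+1) * (g / T j) ≤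
        (g - 0.6931471803 + (1.72 + (g*(20/111) - 1))) + 0.1877 * g := add_le_add he1 hb2
    have hC : Real.log (T j) + ((k:ℝ)+1) * (g / T j) ≤ 1.385 * g :=
      le_trans hsum (by linarith)
    have hlog' : Real.log (T j + g) ≤ Real.log (T j) + g / T j := by
      have h1 : Real.log ((T j + g)/ T j) ≤ (T j + g)/ T j - 1 :=
        Real.log_le_sub_one_of_pos (by positivity)
      have h2 : Real.log ((T j + g)/ T j) = Real.log (T j + g) - Real.log (T j) :=
        Real.log_div (by positivity) hT0.ne'
      have h3 : (T j + g)/ T j - 1 = g / T j := by field_simp; ring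
      linarith
    have hJ' : ((130+(j+1) : ℕ) : ℝ) * Real.log (T (j+1)) ≤ 1.385 * T (j+1) := by
      rw [hcast, hTsucc]
      calc ((k:ℝ)+1) * Real.log (T j + g) ≤ ((k:ℝ)+1) * (Real.log (T j) + g / T j) :=
            mul_le_mul_of_nonneg_left hlog' (by linarith)
        _ = (k:ℝ) * Real.log (T j) + (Real.log (T j) + ((k:ℝ)+1) * (g / T j)) := by ring
        _ ≤ 1.385 * T j + 1.385 * g := add_le_add hJ hC
        _ = 1.385 * (T j + g) := by ring
    have hLQ' : T (j+1) ≤ Real.log ((Q (130+(j+1)) : ℕ) : ℝ) := by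
      have hQs : Real.log ((Q (k+1) : ℕ) : ℝ) = Real.log ((Q k : ℕ) : ℝ) + g := by
        have hcastQ : ((Q (k+1) : ℕ) : ℝ) = ((Q k : ℕ) : ℝ) * ((2*k+1 : ℕ) : ℝ) := by
          rw [Q_succ k, sigma_tail k (by omega)]
          push_cast
          ring
        rw [hcastQ, Real.log_mul (by exact_mod_cast (Q_pos k).ne') (by positivity)]
      have : (130+(j+1) : ℕ) = k + 1 := by omega
      rw [this, hQs, hTsucc]
      linarith
    exact ⟨hA', hU', hJ', hLQ'⟩

lemma tail_numeric (k : ℕ) (hk : 130 ≤ k) (L : ℝ) (hL : Real.log ((Q k : ℕ) : ℝ) ≤ L) :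
    (k:ℝ) * Real.log L ≤ 1.385 * L := by
  obtain ⟨j, rfl⟩ : ∃ j, k = 130 + j := ⟨k - 130, by omega⟩
  obtain ⟨hA, hU, hJ, hLQ⟩ := tail_inv j
  have hkr : (130 : ℝ) ≤ ((130+j : ℕ) : ℝ) := by exact_mod_cast Nat.le_add_right 130 j
  exact concave _ (T j) L (by nlinarith) (le_trans hLQ hL) (by positivity)
    (by nlinarith) hJ



end Robin

open Robin in
/-- Robin's bound: for all `n ≥ 3`, `ω(n) ≤ 1.385 · log n / log log n`. -/
theorem stmt8 (n : ℕ) (hn : 3 ≤ n) :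
    (n.primeFactors.card : ℝ) ≤ 1.385 * Real.log n / Real.log (Real.log n) := by
  have hn0 : 0 < n := by omega
  have hL1 : 1 < Real.log n := by
    have h3 : (3:ℝ) ≤ (n:ℝ) := by exact_mod_cast hn
    have he : Real.exp 1 < 3 := lt_trans Real.exp_one_lt_d9 (by norm_num)
    have := Real.log_lt_log (Real.exp_pos 1) (lt_of_lt_of_le he h3)
    rwa [Real.log_exp] at this
  have hL0 : 0 < Real.log n := by linarith
  have hlogpos : 0 < Real.log (Real.log n) := Real.log_pos hL1
  rw [le_div_iff₀ hlogpos]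
  -- goal : ↑card * Real.log (Real.log ↑n) ≤ 1.385 * Real.log ↑n
  have hQL : Real.log ((Q (n.primeFactors.card) : ℕ) : ℝ) ≤ Real.log (n : ℝ) := by
    have hprod : (∏ p ∈ n.primeFactors, p) ∣ n := Nat.prod_primeFactors_dvd n
    have hle : (∏ p ∈ n.primeFactors, p) ≤ n := Nat.le_of_dvd hn0 hprod
    have hpos : 0 < (∏ p ∈ n.primeFactors, p) :=
      Finset.prod_pos fun p hp => (Nat.prime_of_mem_primeFactors hp).pos
    have h1 : Real.log ((∏ p ∈ n.primeFactors, p : ℕ) : ℝ) ≤ Real.log (n : ℝ) :=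
      Real.log_le_log (by exact_mod_cast hpos) (by exact_mod_cast hle)
    have h2 : Real.log ((∏ p ∈ n.primeFactors, p : ℕ) : ℝ) = ∑ p ∈ n.primeFactors, Real.log (p:ℝ) := by
      rw [Nat.cast_prod]
      exact Real.log_prod fun p hp => by
        exact_mod_cast (Nat.prime_of_mem_primeFactors hp).pos.ne'
    have h3 := master (n.primeFactors.card) n.primeFactors rfl
      (fun p hp => Nat.prime_of_mem_primeFactors hp)
    rw [h2] at h1
    linarith
  rcases le_or_gt (n.primeFactors.card) 3 with h3c | h3c
  · have hc3 : ((n.primeFactors.card : ℕ):ℝ) ≤ 3 := by exact_mod_cast h3c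
    have h4 : Real.log (Real.log n) ≤ 0.37 * Real.log n := by
      have h1 := Real.log_le_sub_one_of_pos (show 0 < Real.log n / Real.exp 1 by positivity)
      have h2 : Real.log (Real.log n / Real.exp 1) = Real.log (Real.log n) - 1 := by
        rw [Real.log_div hL0.ne' (Real.exp_pos 1).ne', Real.log_exp]
      have h5 : Real.log n / Real.exp 1 ≤ 0.37 * Real.log n := by
        rw [div_le_iff₀ (Real.exp_pos 1)]
        nlinarith [Real.exp_one_gt_d9, hL0]
      linarith
    have h6 : (n.primeFactors.card : ℝ) * Real.log (Real.log n) ≤ 3 * Real.log (Real.log n) :=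
      mul_le_mul_of_nonneg_right hc3 hlogpos.le
    linarith
  · rcases le_or_gt (n.primeFactors.card) 129 with h129 | h129
    · exact dispatch _ (by omega) h129 _ hQL
    · exact tail_numeric _ (by omega) _ hQL
end

section
/- Let q ≥ 2 be an integer and let j = ω(q^5 − 1). For i ≥ 1 let s_i denote the i-th smallest prime not congruent to 1 modulo 10, and let r_i denote the i-th smallest prime congruent to 1 modulo 10. Then q ≥ min over 0 ≤ m ≤ j of max{ s_1⋯s_m + 1 , (s_1⋯s_m · r_1⋯r_{j−m} + 1)^{1/5} }, where empty products equal 1 and the 1/5-th power is a real power. -/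
/-!
Let `n = q^5 - 1` and split its prime factors into the set `S` of those `≢ 1 (mod 10)` and the
set `R` of those `≡ 1 (mod 10)`. A prime `p ∣ q^5 - 1` with `p ∤ q - 1` has `q` of order `5`
modulo `p`, so `5 ∣ p - 1` and (`p` being odd) `p ≡ 1 (mod 10)`; hence `∏ S ∣ q - 1`, while
`∏ S · ∏ R ∣ q^5 - 1`. Since the `i`-th smallest element of a set of primes `≢ 1 (mod 10)` is at
least `s_i`, and likewise for `R` and `r_i`, the term `m = #S` of the minimum is at most `q`.
-/

open Finset

theorem Nat.prod_range_nth_le_prod {p : ℕ → Prop} [DecidablePred p] {s : Finset ℕ}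
    (hs : ∀ x ∈ s, p x) : ∏ i ∈ range #s, Nat.nth p i ≤ ∏ x ∈ s, x := by
  induction s using Finset.induction_on_max with
  | empty => simp
  | insert a s hlt ih =>
    have has : a ∉ s := fun h => (hlt a h).false
    have hcount : #(insert a s) ≤ Nat.count p (a + 1) := by
      rw [Nat.count_eq_card_filter_range]
      refine card_le_card fun x hx => mem_filter.2 ⟨mem_range.2 ?_, hs x hx⟩
      rcases mem_insert.1 hx with rfl | hx
      exacts [Nat.lt_succ_self x, (hlt x hx).trans (Nat.lt_succ_self a)]
    have hnth : Nat.nth p #s ≤ a := by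
      refine Nat.le_of_lt_succ (Nat.nth_lt_of_lt_count ?_)
      rw [card_insert_of_notMem has] at hcount
      exact hcount
    rw [card_insert_of_notMem has, prod_range_succ, prod_insert has, mul_comm a]
    exact Nat.mul_le_mul (ih fun x hx => hs x (mem_insert_of_mem hx)) hnth

theorem Nat.Prime.dvd_sub_one_or_dvd_sub_one_of_dvd_pow_sub_one {p ℓ q : ℕ} (hp : p.Prime)
    (hℓ : ℓ.Prime) (h : p ∣ q ^ ℓ - 1) : p ∣ q - 1 ∨ ℓ ∣ p - 1 := by
  have : Fact p.Prime := ⟨hp⟩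
  rcases Nat.eq_zero_or_pos q with rfl | hq
  · simp
  have hpow : (q : ZMod p) ^ ℓ = 1 := by
    rw [← sub_eq_zero, ← Nat.cast_pow, ← Nat.cast_one, ← Nat.cast_sub (Nat.one_le_pow _ _ hq)]
    exact (ZMod.natCast_eq_zero_iff _ _).2 h
  rcases hℓ.eq_one_or_self_of_dvd _ (orderOf_dvd_of_pow_eq_one hpow) with hord | hord
  · left
    rw [← ZMod.natCast_eq_zero_iff, Nat.cast_sub hq, orderOf_eq_one_iff.1 hord, Nat.cast_one,
      sub_self]
  · right
    have hq0 : (q : ZMod p) ≠ 0 := by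
      rintro h0
      rw [h0, zero_pow hℓ.ne_zero] at hpow
      exact zero_ne_one hpow
    exact hord ▸ ZMod.orderOf_dvd_card_sub_one hq0

theorem Nat.Prime.mod_ten_eq_one_of_five_dvd_sub_one {p : ℕ} (hp : p.Prime) (h : 5 ∣ p - 1) :
    p % 10 = 1 := by
  rcases hp.eq_two_or_odd with rfl | hodd
  · norm_num at h
  · omega

theorem prod_primeFactors_pow_five_sub_one_filter_dvd (q : ℕ) :
    ∏ p ∈ (q ^ 5 - 1).primeFactors with p % 10 ≠ 1, p ∣ q - 1 := by
  refine prod_primes_dvd _ (fun p hp => (Nat.prime_of_mem_primeFactors (mem_filter.1 hp).1).prime)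
    fun p hp => ?_
  obtain ⟨hpn, hp10⟩ := mem_filter.1 hp
  have hp := Nat.prime_of_mem_primeFactors hpn
  exact (hp.dvd_sub_one_or_dvd_sub_one_of_dvd_pow_sub_one Nat.prime_five
    (Nat.dvd_of_mem_primeFactors hpn)).resolve_right
    fun h => hp10 (hp.mod_ten_eq_one_of_five_dvd_sub_one h)

/-- The hybrid lower bound for `q` in terms of `j = ω(q^5 - 1)`: with `s_i` the
`i`-th smallest prime not congruent to `1 (mod 10)` and `r_i` the `i`-th smallest
prime congruent to `1 (mod 10)`,
`q ≥ min_{0 ≤ m ≤ j} max{ s_1⋯s_m + 1, (s_1⋯s_m · r_1⋯r_{j-m} + 1)^(1/5) }`. -/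
theorem stmt12 (q : ℕ) (hq : 2 ≤ q) :
    (q : ℝ) ≥ (Finset.range ((q ^ 5 - 1).primeFactors.card + 1)).inf'
      (by simp)
      (fun m => max
        (((∏ i ∈ Finset.range m, Nat.nth (fun p => p.Prime ∧ p % 10 ≠ 1) i : ℕ) : ℝ) + 1)
        ((((∏ i ∈ Finset.range m, Nat.nth (fun p => p.Prime ∧ p % 10 ≠ 1) i) *
            (∏ i ∈ Finset.range ((q ^ 5 - 1).primeFactors.card - m),
              Nat.nth (fun p => p.Prime ∧ p % 10 = 1) i) : ℕ) + 1 : ℝ) ^ ((1 : ℝ) / 5))) := by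
  set n := q ^ 5 - 1
  have hn : 0 < n := by have := Nat.pow_le_pow_left hq 5; omega
  set S := {p ∈ n.primeFactors | p % 10 ≠ 1}
  set R := {p ∈ n.primeFactors | p % 10 = 1}
  have hcard : #R + #S = #n.primeFactors := card_filter_add_card_filter_not _
  have hS := Nat.prod_range_nth_le_prod (p := fun p => p.Prime ∧ p % 10 ≠ 1) (s := S)
    fun p hp => ⟨Nat.prime_of_mem_primeFactors (mem_filter.1 hp).1, (mem_filter.1 hp).2⟩
  have hR := Nat.prod_range_nth_le_prod (p := fun p => p.Prime ∧ p % 10 = 1) (s := R)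
    fun p hp => ⟨Nat.prime_of_mem_primeFactors (mem_filter.1 hp).1, (mem_filter.1 hp).2⟩
  have hSq : ∏ p ∈ S, p ≤ q - 1 :=
    Nat.le_of_dvd (by omega) (prod_primeFactors_pow_five_sub_one_filter_dvd q)
  have hRS : (∏ p ∈ R, p) * ∏ p ∈ S, p ≤ n :=
    (prod_filter_mul_prod_filter_not _ _ _).trans_le
      (Nat.le_of_dvd hn (Nat.prod_primeFactors_dvd n))
  rw [ge_iff_le]
  refine (inf'_le _ (mem_range.2 (by omega : #S < #n.primeFactors + 1))).trans (max_le ?_ ?_)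
  · have : ∏ i ∈ range #S, Nat.nth (fun p => p.Prime ∧ p % 10 ≠ 1) i + 1 ≤ q := by omega
    exact_mod_cast this
  · rw [show #n.primeFactors - #S = #R by omega, one_div,
      Real.rpow_inv_le_iff_of_pos (by positivity) (by positivity) (by norm_num)]
    have : (∏ i ∈ range #S, Nat.nth (fun p => p.Prime ∧ p % 10 ≠ 1) i) *
        (∏ i ∈ range #R, Nat.nth (fun p => p.Prime ∧ p % 10 = 1) i) + 1 ≤ q ^ 5 := by
      have := Nat.mul_le_mul hS hR
      rw [mul_comm (∏ p ∈ S, p)] at this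
      omega
    exact_mod_cast this
end
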